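/- arXiv:2109.13467 — 6 statements merged into one kernel-verified Lean document; each statement's English description precedes it below -/
import Mathlib

section
/- Suppose the corrected scheme (conditions (i)–(v)) holds for all k ∈ ℕ with (x₀, v₀) ∈ X × X, the semi-implicit multiplier choice λ̄_{k+1} = λ_k + (α_k/θ_k)(Av_{k+1} + Bw_k − b), parameter recursions θ₀ = 1, θ_{k+1} = θ_k/(1+α_k), γ₀ > 0, γ_{k+1} = (γ_k + α_kμ_f)/(1+α_k), β₀ > 0, β_{k+1} = (β_k + α_kμ_g)/(1+α_k), the initial setting γ₀ = μ_f whenever μ_f > 0 and β₀ = μ_g whenever μ_g > 0, and step sizes determined by (L_f β_k θ_k + γ_k ‖B‖²) α_k² = γ_k β_k θ_k. Let (x*, y*, λ*) be a saddle point, E₀ the initial Lyapunov value and R₀ = √(2E₀) + ‖λ₀ − λ*‖ + ‖Ax₀ + By₀ − b‖. Then x_k ∈ X, y_k ∈ Y for all k ≥ 1, E_k ≤ θ_k E₀, ‖Ax_k + By_k − b‖ ≤ θ_k R₀ and |f(x_k) + g(y_k) − f(x*) − g(y*)| ≤ θ_k(E₀ + ‖λ*‖R₀). Moreover, if γ₀β₀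 ≤ L_fβ₀ + γ₀‖B‖², then there is an absolute constant C > 0 (independent of A, B, L_f, μ_f, μ_g, γ₀, β₀) such that for all k ≥ 1: θ_k ≤ C ( min{ ‖B‖/(√β₀ k), ‖B‖²/(μ_g k²) } + min{ L_f/(γ₀ k²), exp(−(k/4)√(μ_f/L_f)) } ), with terms having zero denominator interpreted as +∞. -/
open Real
open scoped RealInnerProductSpace ENNReal

set_option maxHeartbeats 12000000

section AuxCSILV

variable {E₁ E₂ E₃ : Type*} [NormedAddCommGroup E₁] [InnerProductSpace ℝ E₁]
  [NormedAddCommGroup E₂] [InnerProductSpace ℝ E₂]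
  [NormedAddCommGroup E₃] [InnerProductSpace ℝ E₃]

private lemma csilv_three_point (p q r : E₁) :
    ⟪p - q, p - r⟫ = (‖p - q‖^2 + ‖p - r‖^2 - ‖q - r‖^2) / 2 := by
  have h := norm_sub_sq_real (p - q) (p - r)
  have h2 : p - q - (p - r) = r - q := by abel
  rw [h2, norm_sub_rev] at h
  linarith

private lemma csilv_three_point' (p q r : E₁) :
    ⟪p - q, q - r⟫ = (‖p - r‖^2 - ‖p - q‖^2 - ‖q - r‖^2) / 2 := by
  have h := norm_add_sq_real (p - q) (q - r)
  have h2 : p - q + (q - r) = p - r := by abel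
  rw [h2] at h
  linarith

private lemma csilv_three_point'' (p q r : E₁) :
    ⟪p - q, r - q⟫ = (‖p - q‖^2 + ‖r - q‖^2 - ‖p - r‖^2) / 2 := by
  have h := norm_sub_sq_real (p - q) (r - q)
  have h2 : p - q - (r - q) = p - r := by abel
  rw [h2] at h
  linarith

private lemma csilv_telescope (f : ℕ → ℝ) (c : ℝ) (j0 : ℕ) :
    ∀ k, j0 ≤ k → (∀ j, j0 ≤ j → j < k → f j + c ≤ f (j+1)) →
    f j0 + ((k - j0 : ℕ) : ℝ) * c ≤ f k := by
  intro k
  induction k with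
  | zero => intro h _; interval_cases j0; simp
  | succ k ih =>
    intro hle hstep
    rcases Nat.lt_or_ge j0 (k+1) with h | h
    · have hk : j0 ≤ k := Nat.lt_succ_iff.mp h
      have h1 := ih hk (fun j hj hjk => hstep j hj (Nat.lt_succ_of_lt hjk))
      have h2 := hstep k hk (Nat.lt_succ_self k)
      have h3 : ((k + 1 - j0 : ℕ) : ℝ) = ((k - j0 : ℕ) : ℝ) + 1 := by
        rw [Nat.succ_sub hk]; push_cast; ring
      rw [h3]; linarith
    · have : j0 = k+1 := le_antisymm hle h
      subst this; simp

private lemma csilv_geo (θ : ℕ → ℝ) (ρ : ℝ) (hρ : 0 ≤ ρ) :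
    ∀ t, (∀ j, j < t → θ (j+1) ≤ ρ * θ j) → (∀ j, 0 ≤ θ j) → θ t ≤ ρ^t * θ 0 := by
  intro t
  induction t with
  | zero => intro _ _; simp
  | succ t ih =>
    intro h hpos
    have h1 := h t (Nat.lt_succ_self t)
    have h2 := ih (fun j hj => h j (Nat.lt_succ_of_lt hj)) hpos
    calc θ (t+1) ≤ ρ * θ t := h1
      _ ≤ ρ * (ρ^t * θ 0) := mul_le_mul_of_nonneg_left h2 hρ
      _ = ρ^(t+1) * θ 0 := by ring

private lemma csilv_exp_le (a : ℝ) (h0 : 0 ≤ a) (h1 : a ≤ 1) :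
    Real.exp (a/2) ≤ 1 + a := by
  have h2 : 1 - a/2 ≤ Real.exp (-(a/2)) := by
    have := Real.add_one_le_exp (-(a/2)); linarith
  have h4 : Real.exp (a/2) * Real.exp (-(a/2)) = 1 := by
    rw [← Real.exp_add]; simp
  have h5 : Real.exp (a/2) * (1 - a/2) ≤ 1 := by
    have h6 := mul_le_mul_of_nonneg_left h2 (Real.exp_pos (a/2)).le
    rw [h4] at h6; exact h6
  nlinarith [h5, Real.exp_pos (a/2)]

private lemma csilv_le_of_sq {a b : ℝ} (ha : 0 ≤ a) (hb : 0 ≤ b) (h : a^2 ≤ b^2) :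
    a ≤ b := by nlinarith

private lemma csilv_alpha_lb {a c : ℝ} (ha : 0 < a) (h : c ≤ a^2) :
    Real.sqrt c ≤ a := by
  have h2 := Real.sqrt_le_sqrt h
  rwa [Real.sqrt_sq ha.le] at h2

private lemma csilv_inv_bound {t c : ℝ} (ht : 0 < t) (hc : 0 < c) (h : c ≤ t⁻¹) :
    t ≤ c⁻¹ := by
  rw [← inv_inv t]
  exact inv_anti₀ hc h

private lemma csilv_sq_inv_bound {t c : ℝ} (ht : 0 < t) (hc : 0 < c)
    (h : c ≤ (Real.sqrt t)⁻¹) : t ≤ (c^2)⁻¹ := by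
  have hs := Real.sqrt_pos.2 ht
  have h2 : Real.sqrt t ≤ c⁻¹ := by
    rw [← inv_inv (Real.sqrt t)]; exact inv_anti₀ hc h
  have h3 := Real.sq_sqrt ht.le
  have h4 : (Real.sqrt t)^2 ≤ (c⁻¹)^2 := by nlinarith [hs.le]
  rw [h3, inv_pow] at h4
  exact h4

private lemma csilv_psi_step (θj θj1 αj δ : ℝ) (hθj : 0 < θj)
    (hrec : θj1 = θj / (1 + αj)) (hα0 : 0 < αj) (hα1 : αj ≤ 1) (hδ : 0 ≤ δ)
    (hlow : δ * Real.sqrt θj ≤ αj) :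
    (Real.sqrt θj)⁻¹ + δ/3 ≤ (Real.sqrt θj1)⁻¹ := by
  have h1a : (0:ℝ) < 1 + αj := by linarith
  have hs : 0 < Real.sqrt θj := Real.sqrt_pos.2 hθj
  have h1 : Real.sqrt θj1 = Real.sqrt θj / Real.sqrt (1+αj) := by
    rw [hrec, Real.sqrt_div hθj.le]
  have hs1 : 0 < Real.sqrt (1+αj) := Real.sqrt_pos.2 h1a
  have hsq : (Real.sqrt (1+αj))^2 = 1 + αj := Real.sq_sqrt h1a.le
  have ht : 1 + αj/3 ≤ Real.sqrt (1+αj) := by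
    nlinarith [hs1.le, hsq, sq_nonneg (Real.sqrt (1+αj) - (1 + αj/3))]
  have h2 : (Real.sqrt θj1)⁻¹ = Real.sqrt (1+αj) * (Real.sqrt θj)⁻¹ := by
    rw [h1]; field_simp
  rw [h2]
  have hinv : 0 < (Real.sqrt θj)⁻¹ := inv_pos.2 hs
  have key : (1 + αj/3) * (Real.sqrt θj)⁻¹ ≤ Real.sqrt (1+αj) * (Real.sqrt θj)⁻¹ :=
    mul_le_mul_of_nonneg_right ht hinv.le
  have hss : Real.sqrt θj * (Real.sqrt θj)⁻¹ = 1 := mul_inv_cancel₀ (ne_of_gt hs)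
  nlinarith [key, hinv, hss, mul_le_mul_of_nonneg_right hlow hinv.le]

private lemma csilv_phi_step (θj θj1 αj δ : ℝ) (hθj : 0 < θj)
    (hrec : θj1 = θj / (1 + αj)) (hα0 : 0 < αj) (hδ : 0 ≤ δ)
    (hlow : δ * θj ≤ αj) :
    θj⁻¹ + δ ≤ θj1⁻¹ := by
  have h1a : (0:ℝ) < 1 + αj := by linarith
  have h1 : θj1⁻¹ = (1 + αj) * θj⁻¹ := by
    rw [hrec]; field_simp
  rw [h1]
  have hinv : 0 < θj⁻¹ := inv_pos.2 hθj
  have hss : θj * θj⁻¹ = 1 := mul_inv_cancel₀ (ne_of_gt hθj)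
  nlinarith [mul_le_mul_of_nonneg_right hlow hinv.le, hss, hinv]

private lemma csilv_exp_step (θj θj1 αj δ : ℝ) (hθ : 0 < θj)
    (hrec : θj1 = θj / (1+αj)) (hδ0 : 0 ≤ δ) (hδα : δ ≤ αj) (hα1 : αj ≤ 1)
    (hα0 : 0 < αj) : θj1 ≤ Real.exp (-(δ/2)) * θj := by
  have h1 : Real.exp (δ/2) ≤ 1 + αj :=
    le_trans (Real.exp_le_exp.2 (by linarith)) (csilv_exp_le αj hα0.le hα1)
  have h2 : θj / (1+αj) ≤ θj / Real.exp (δ/2) :=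
    div_le_div_of_nonneg_left hθ.le (Real.exp_pos _) h1
  rw [hrec]
  calc θj/(1+αj) ≤ θj / Real.exp (δ/2) := h2
    _ = Real.exp (-(δ/2)) * θj := by rw [Real.exp_neg, div_eq_mul_inv, mul_comm]

private lemma csilv_inv_bound' {t c : ℝ} (ht : 0 < t) (hc : 0 < c) (h : c ≤ t⁻¹) :
    t * c ≤ 1 := by
  have h2 : t ≤ c⁻¹ := csilv_inv_bound ht hc h
  have h3 := mul_le_mul_of_nonneg_right h2 hc.le
  rwa [inv_mul_cancel₀ (ne_of_gt hc)] at h3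

private lemma csilv_sq_inv_bound' {t c : ℝ} (ht : 0 < t) (hc : 0 < c)
    (h : c ≤ (Real.sqrt t)⁻¹) : t * c^2 ≤ 1 := by
  have h2 := csilv_sq_inv_bound ht hc h
  have hc2 : 0 < c^2 := by positivity
  have h3 := mul_le_mul_of_nonneg_right h2 hc2.le
  rwa [inv_mul_cancel₀ (ne_of_gt hc2)] at h3


private lemma csilv_convex_comb_mem {H : Type*} [NormedAddCommGroup H]
    [InnerProductSpace ℝ H] {Z : Set H} (hZ : Convex ℝ Z) {p q : H}
    (hp : p ∈ Z) (hq : q ∈ Z) {c : ℝ} (hc : 0 < c) :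
    (1 + c)⁻¹ • (p + c • q) ∈ Z := by
  have h1 : (0:ℝ) < 1 + c := by linarith
  have h2 := hZ hp hq (a := (1+c)⁻¹) (b := (1+c)⁻¹ * c)
    (by positivity) (by positivity) (by field_simp)
  have e : (1 + c)⁻¹ • (p + c • q) = (1+c)⁻¹ • p + ((1+c)⁻¹ * c) • q := by
    rw [smul_add, smul_smul]
  rw [e]; exact h2

private lemma csilv_one_step
    (A : E₁ →L[ℝ] E₃) (B : E₂ →L[ℝ] E₃) (b : E₃)
    (f₁ f₂ : E₁ → ℝ) (g : E₂ → ℝ)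
    (μf μg Lf a th ga be th' ga' be' : ℝ)
    (x x' v v' u xs Aadj gradu s : E₁) (y y' w w' ys : E₂) (lam lam' lbar ls : E₃)
    (hμf : 0 ≤ μf) (hμg : 0 ≤ μg) (hLf : 0 < Lf)
    (ha : 0 < a) (hth : 0 < th) (hga : 0 < ga) (hbe : 0 < be)
    (hth' : (1 + a) * th' = th)
    (hga' : (1 + a) * ga' = ga + a * μf)
    (hbe' : (1 + a) * be' = be + a * μg)
    (hstep1 : Lf * a^2 ≤ ga) (hstep2 : a^2 * ‖B‖^2 ≤ be * th)
    (hu : (1 + a) • u = x + a • v)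
    (hx' : (1 + a) • x' = x + a • v')
    (hy' : (1 + a) • y' = y + a • w')
    (hsm : f₁ x' - f₁ u - ⟪gradu, x' - u⟫ ≤ Lf / 2 * ‖x' - u‖^2)
    (hcx : 0 ≤ f₁ x - f₁ u - ⟪gradu, x - u⟫)
    (hcxs : μf / 2 * ‖xs - u‖^2 ≤ f₁ xs - f₁ u - ⟪gradu, xs - u⟫)
    (hveq : (ga / a) • (v' - v) = μf • (u - v') - gradu - Aadj - s)
    (hAadj : ⟪Aadj, v' - xs⟫ = ⟪lbar, A (v' - xs)⟫)
    (hf₂sub : f₂ xs ≥ f₂ v' + ⟪s, xs - v'⟫)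
    (hf₂cx : (1 + a) * f₂ x' ≤ f₂ x + a * f₂ v')
    (hgy : g y + ⟪lbar, B y⟫ ≥ g y' + ⟪lbar, B y'⟫
        + ⟪μg • (y' - w') - (be / a) • (w' - w), y - y'⟫ + μg / 2 * ‖y - y'‖^2)
    (hgys : g ys + ⟪lbar, B ys⟫ ≥ g y' + ⟪lbar, B y'⟫
        + ⟪μg • (y' - w') - (be / a) • (w' - w), ys - y'⟫ + μg / 2 * ‖ys - y'‖^2)
    (hlam : th • (lam' - lam) = a • (A v' + B w' - b))
    (hlbareq : th • lbar = th • lam + a • (A v' + B w - b))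
    (hfeas : A xs + B ys = b) :
    (1 + a) * (f₁ x' + f₂ x' + g y' + ⟪ls, A x' + B y' - b⟫ - f₁ xs - f₂ xs - g ys
      + ga' / 2 * ‖v' - xs‖^2 + be' / 2 * ‖w' - ys‖^2 + th' / 2 * ‖lam' - ls‖^2)
    ≤ f₁ x + f₂ x + g y + ⟪ls, A x + B y - b⟫ - f₁ xs - f₂ xs - g ys
      + ga / 2 * ‖v - xs‖^2 + be / 2 * ‖w - ys‖^2 + th / 2 * ‖lam - ls‖^2 := by
  have hane : a ≠ 0 := ne_of_gt ha
  have h1a : (0:ℝ) < 1 + a := by linarith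
  -- ===== X part =====
  have h1' : (1+a) * f₁ x' ≤ (1+a) * f₁ u + (1+a) * ⟪gradu, x' - u⟫
      + (1+a) * (Lf / 2 * ‖x' - u‖^2) := by nlinarith only [hsm, h1a]
  have hvec0 : (1+a) • (x' - u) = a • (v' - v) := by
    rw [smul_sub, hx', hu, smul_sub]; abel
  have hvec1 : (1+a) • (x' - u) = (x - u) + a • ((xs - u) + (v' - xs)) := by
    linear_combination (norm := module) hx'
  have h2' : (1+a) * ⟪gradu, x' - u⟫
      = ⟪gradu, x - u⟫ + a * ⟪gradu, xs - u⟫ + a * ⟪gradu, v' - xs⟫ := by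
    have h := congrArg (fun z => ⟪gradu, z⟫) hvec1
    simp only [inner_add_right, real_inner_smul_right] at h
    linarith [h]
  have h3 : f₁ u + ⟪gradu, x - u⟫ ≤ f₁ x := by linarith
  have h4' : a * f₁ u + a * ⟪gradu, xs - u⟫ ≤ a * f₁ xs - a * (μf / 2 * ‖xs - u‖^2) := by
    nlinarith only [hcxs, ha]
  have hnxu : (1+a)^2 * ‖x' - u‖^2 = a^2 * ‖v' - v‖^2 := by
    have h := congrArg norm hvec0
    rw [norm_smul, norm_smul, Real.norm_eq_abs, Real.norm_eq_abs,
      abs_of_pos h1a, abs_of_pos ha] at h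
    linear_combination ((1+a) * ‖x' - u‖ + a * ‖v' - v‖) * h
  have h6' : (1+a) * (Lf / 2 * ‖x' - u‖^2) ≤ Lf * a^2 / 2 * ‖v' - v‖^2 := by
    have hnxu2 := congrArg (fun t => Lf/2 * t) hnxu
    linarith only [hnxu2, mul_nonneg (mul_nonneg hLf.le (mul_nonneg ha.le h1a.le))
      (sq_nonneg ‖x' - u‖)]
  have hstep1' : Lf * a^2 / 2 * ‖v' - v‖^2 ≤ ga / 2 * ‖v' - v‖^2 := by
    nlinarith only [hstep1, sq_nonneg ‖v' - v‖]
  have h7' : ga * ⟪v' - v, v' - xs⟫ = a * μf * ⟪u - v', v' - xs⟫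
      - a * ⟪gradu, v' - xs⟫ - a * ⟪lbar, A (v' - xs)⟫ - a * ⟪s, v' - xs⟫ := by
    have hveq' : ga • (v' - v) = a • (μf • (u - v') - gradu - Aadj - s) := by
      rw [← hveq, smul_smul]
      congr 1
      field_simp
    have h := congrArg (fun z => ⟪z, v' - xs⟫) hveq'
    simp only [inner_sub_left, real_inner_smul_left] at h
    rw [hAadj] at h
    have e1 : ⟪v' - v, v' - xs⟫ = ⟪v', v' - xs⟫ - ⟪v, v' - xs⟫ := inner_sub_left v' v _
    have e2 : ⟪u - v', v' - xs⟫ = ⟪u, v' - xs⟫ - ⟪v', v' - xs⟫ := inner_sub_left u v' _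
    linear_combination h + ga * e1 - (a*μf) * e2
  have hJ1 : a * μf * ⟪u - v', v' - xs⟫
      = a * μf * ((‖xs - u‖^2 - ‖u - v'‖^2 - ‖v' - xs‖^2) / 2) := by
    have h := csilv_three_point' u v' xs
    rw [norm_sub_rev u xs] at h
    linear_combination (a * μf) * h
  have hJ2 : ga * ⟪v' - v, v' - xs⟫
      = ga * ((‖v' - v‖^2 + ‖v' - xs‖^2 - ‖v - xs‖^2) / 2) := by
    linear_combination ga * csilv_three_point v' v xs
  have h8' : a * f₂ v' ≤ a * f₂ xs + a * ⟪s, v' - xs⟫ := by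
    have h2 : ⟪s, xs - v'⟫ = -⟪s, v' - xs⟫ := by
      rw [← inner_neg_right]; congr 1; abel
    rw [h2] at hf₂sub
    nlinarith only [hf₂sub, ha]
  have hd1 : (0:ℝ) ≤ a * μf * (‖u - v'‖^2 / 2) := by positivity
  have hX : (1+a) * f₁ x' + (1+a) * f₂ x' + (ga + a*μf)/2 * ‖v' - xs‖^2
      + a * ⟪lbar, A (v' - xs)⟫
      ≤ f₁ x + f₂ x + a * f₁ xs + a * f₂ xs + ga/2 * ‖v - xs‖^2 := by
    linarith only [h1', h2', h3, h4', h6', hstep1', h7', hJ1, hJ2, h8', hf₂cx, hd1]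
  -- ===== Y part =====
  have hKvec : (y - y') + a • (ys - y') = a • (ys - w') := by
    linear_combination (norm := module) -hy'
  have hK0 : ⟪μg • (y' - w') - (be / a) • (w' - w), y - y'⟫
      + a * ⟪μg • (y' - w') - (be / a) • (w' - w), ys - y'⟫
      = a * ⟪μg • (y' - w') - (be / a) • (w' - w), ys - w'⟫ := by
    have h := congrArg (fun z => ⟪μg • (y' - w') - (be / a) • (w' - w), z⟫) hKvec
    simpa only [inner_add_right, real_inner_smul_right] using h
  have hqexp : a * ⟪μg • (y' - w') - (be / a) • (w' - w), ys - w'⟫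
      = a * μg * ⟪y' - w', ys - w'⟫ - be * ⟪w' - w, ys - w'⟫ := by
    have e : ⟪μg • (y' - w') - (be / a) • (w' - w), ys - w'⟫
        = μg * ⟪y' - w', ys - w'⟫ - be / a * ⟪w' - w, ys - w'⟫ := by
      simp [inner_sub_left, real_inner_smul_left]
    rw [e]
    field_simp
  have hP1 : a * μg * ⟪y' - w', ys - w'⟫
      = a * μg * ((‖y' - w'‖^2 + ‖w' - ys‖^2 - ‖ys - y'‖^2)/2) := by
    have h := csilv_three_point'' y' w' ys
    rw [norm_sub_rev ys w', norm_sub_rev y' ys] at h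
    linear_combination (a*μg) * h
  have hP2 : be * ⟪w' - w, ys - w'⟫
      = -(be * ((‖w' - w‖^2 + ‖w' - ys‖^2 - ‖w - ys‖^2)/2)) := by
    have h2 : ⟪w' - w, ys - w'⟫ = -⟪w' - w, w' - ys⟫ := by
      rw [← inner_neg_right]; congr 1; abel
    rw [h2, csilv_three_point w' w ys]; ring
  have hvecy : (1+a) • y' = y + a • ys + a • (w' - ys) := by
    linear_combination (norm := module) hy'
  have hB : (1+a) * ⟪lbar, B y'⟫
      = ⟪lbar, B y⟫ + a * ⟪lbar, B ys⟫ + a * ⟪lbar, B (w' - ys)⟫ := by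
    have h := congrArg (fun z => ⟪lbar, B z⟫) hvecy
    simpa only [map_add, map_smul, inner_add_right, real_inner_smul_right] using h
  have hgys' : a * (g ys + ⟪lbar, B ys⟫) ≥ a * (g y' + ⟪lbar, B y'⟫
      + ⟪μg • (y' - w') - (be / a) • (w' - w), ys - y'⟫ + μg / 2 * ‖ys - y'‖^2) :=
    mul_le_mul_of_nonneg_left hgys ha.le
  have hdy1 : (0:ℝ) ≤ μg/2 * ‖y - y'‖^2 := by positivity
  have hdy2 : (0:ℝ) ≤ a * μg * (‖y' - w'‖^2 / 2) := by positivity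
  have hY : (1+a) * g y' + (be + a*μg)/2 * ‖w' - ys‖^2 + a * ⟪lbar, B (w' - ys)⟫
      + be/2 * ‖w' - w‖^2
      ≤ g y + a * g ys + be/2 * ‖w - ys‖^2 := by
    linarith only [hgy, hgys', hK0, hqexp, hP1, hP2, hB, hdy1, hdy2]
  -- ===== Lambda part =====
  have hquad : th/2 * ‖lam' - ls‖^2
      = th/2 * ‖lam - ls‖^2 + th * ⟪lam' - lam, lam' - ls⟫ - th/2 * ‖lam' - lam‖^2 := by
    linear_combination (-th) * csilv_three_point lam' lam ls
  have hd : th • (lam' - lbar) = a • (B (w' - w)) := by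
    have h : th • (lam' - lbar) = th • (lam' - lam) - (th • lbar - th • lam) := by
      rw [smul_sub, smul_sub]; abel
    rw [h, hlam, hlbareq]
    rw [map_sub, smul_sub]
    module
  have hcross : th * ⟪lam' - lam, lam' - ls⟫ - th * ⟪lbar - ls, lam' - lam⟫
      = a * ⟪lam' - lam, B (w' - w)⟫ := by
    have h := congrArg (fun z => ⟪lam' - lam, z⟫) hd
    simp only [real_inner_smul_right] at h
    have e : lam' - lbar = (lam' - ls) - (lbar - ls) := by abel
    rw [e, inner_sub_right] at h
    have ecomm : ⟪lbar - ls, lam' - lam⟫ = ⟪lam' - lam, lbar - ls⟫ := real_inner_comm _ _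
    linear_combination h - th * ecomm
  have hcs : ⟪lam' - lam, B (w' - w)⟫ ≤ ‖lam' - lam‖ * (‖B‖ * ‖w' - w‖) :=
    le_trans (real_inner_le_norm _ _)
      (mul_le_mul_of_nonneg_left (B.le_opNorm _) (norm_nonneg _))
  have hyoung : a * ⟪lam' - lam, B (w' - w)⟫
      ≤ th/2 * ‖lam' - lam‖^2 + be/2 * ‖w' - w‖^2 := by
    have h1 : a * ⟪lam' - lam, B (w' - w)⟫ ≤ a * (‖lam' - lam‖ * (‖B‖ * ‖w' - w‖)) :=
      mul_le_mul_of_nonneg_left hcs ha.le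
    have s1 : a * ‖B‖ * (‖lam' - lam‖ * ‖w' - w‖)
        ≤ th/2 * ‖lam' - lam‖^2 + be/2 * ‖w' - w‖^2 := by
      nlinarith only [sq_nonneg (th * ‖lam' - lam‖ - a * ‖B‖ * ‖w' - w‖),
        mul_nonneg (sub_nonneg.2 hstep2) (sq_nonneg ‖w' - w‖), hth,
        sq_nonneg ‖lam' - lam‖, sq_nonneg ‖w' - w‖]
    nlinarith only [h1, s1]
  have hLam : th/2 * ‖lam' - ls‖^2 - th * ⟪lbar - ls, lam' - lam⟫
      ≤ th/2 * ‖lam - ls‖^2 + be/2 * ‖w' - w‖^2 := by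
    linarith only [hquad, hcross, hyoung]
  -- ===== assembly =====
  have hLs : (1+a) * ⟪ls, A x' + B y' - b⟫
      = ⟪ls, A x + B y - b⟫ + th * ⟪ls, lam' - lam⟫ := by
    have h1 : (1+a) • (A x' + B y' - b) = (A x + B y - b) + a • (A v' + B w' - b) := by
      have hAx : (1+a) • A x' = A x + a • A v' := by
        rw [← map_smul, hx', map_add, map_smul]
      have hBy : (1+a) • B y' = B y + a • B w' := by
        rw [← map_smul, hy', map_add, map_smul]
      rw [smul_sub, smul_add, hAx, hBy]
      module
    rw [← hlam] at h1
    have h2 := congrArg (fun z => ⟪ls, z⟫) h1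
    simpa only [inner_add_right, real_inner_smul_right] using h2
  have hLin : a * ⟪lbar, A (v' - xs)⟫ + a * ⟪lbar, B (w' - ys)⟫
      = th * ⟪ls, lam' - lam⟫ + th * ⟪lbar - ls, lam' - lam⟫ := by
    have hr : A (v' - xs) + B (w' - ys) = A v' + B w' - b := by
      rw [map_sub, map_sub, ← hfeas]; abel
    have h : a • (A (v' - xs) + B (w' - ys)) = th • (lam' - lam) := by
      rw [hr, ← hlam]
    have h2 := congrArg (fun z => ⟪lbar, z⟫) h
    simp only [inner_add_right, real_inner_smul_right] at h2
    have e : ⟪lbar, lam' - lam⟫ = ⟪ls, lam' - lam⟫ + ⟪lbar - ls, lam' - lam⟫ := by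
      rw [← inner_add_left]; congr 1; abel
    linear_combination h2 + th * e
  have hga'' : (1+a) * ga' * ‖v' - xs‖^2 = (ga + a*μf) * ‖v' - xs‖^2 := by
    linear_combination ‖v' - xs‖^2 * hga'
  have hbe'' : (1+a) * be' * ‖w' - ys‖^2 = (be + a*μg) * ‖w' - ys‖^2 := by
    linear_combination ‖w' - ys‖^2 * hbe'
  have hth'' : (1+a) * th' * ‖lam' - ls‖^2 = th * ‖lam' - ls‖^2 := by
    linear_combination ‖lam' - ls‖^2 * hth'
  linarith only [hX, hY, hLam, hLs, hLin, hga'', hbe'', hth'']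

end AuxCSILV

/-- Theorem 4.1: convergence of the corrected scheme with the semi-implicit
multiplier choice `λ̄ₖ₊₁ = λₖ + (αₖ/θₖ)(A vₖ₊₁ + B wₖ − b)` and step sizes
`(L_f βₖ θₖ + γₖ‖B‖²) αₖ² = γₖ βₖ θₖ`, with the nonergodic mixed-type rate
(zero denominators are interpreted as `+∞` via `ℝ≥0∞` division). -/
theorem corrected_semi_implicit_lv_convergence :
    ∃ C : ℝ, 0 < C ∧
    ∀ (m n r : ℕ)
      (X : Set (EuclideanSpace ℝ (Fin m))) (Y : Set (EuclideanSpace ℝ (Fin n)))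
      (hXconv : Convex ℝ X) (hXclosed : IsClosed X)
      (hYconv : Convex ℝ Y) (hYclosed : IsClosed Y)
      (A : EuclideanSpace ℝ (Fin m) →L[ℝ] EuclideanSpace ℝ (Fin r))
      (B : EuclideanSpace ℝ (Fin n) →L[ℝ] EuclideanSpace ℝ (Fin r))
      (b : EuclideanSpace ℝ (Fin r))
      (f₁ f₂ : EuclideanSpace ℝ (Fin m) → ℝ) (g : EuclideanSpace ℝ (Fin n) → ℝ)
      (hf₁conv : ConvexOn ℝ Set.univ f₁) (hf₂conv : ConvexOn ℝ Set.univ f₂)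
      (hgconv : ConvexOn ℝ Set.univ g)
      (μf μg Lf : ℝ) (hμf : 0 ≤ μf) (hμg : 0 ≤ μg) (hLf : 0 < Lf) (hμfLf : μf ≤ Lf)
      (f₁' : EuclideanSpace ℝ (Fin m) → EuclideanSpace ℝ (Fin m))
      (hf₁' : ∀ z, HasGradientAt f₁ (f₁' z) z)
      (hf₁bounds : ∀ x₁ ∈ X, ∀ x₂ ∈ X,
        μf / 2 * ‖x₁ - x₂‖ ^ 2 ≤ f₁ x₁ - f₁ x₂ - ⟪f₁' x₂, x₁ - x₂⟫ ∧
        f₁ x₁ - f₁ x₂ - ⟪f₁' x₂, x₁ - x₂⟫ ≤ Lf / 2 * ‖x₁ - x₂‖ ^ 2)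
      (α θ γ β : ℕ → ℝ) (hα : ∀ k, 0 < α k)
      (hθ0 : θ 0 = 1) (hγ0pos : 0 < γ 0) (hβ0pos : 0 < β 0)
      (hθrec : ∀ k, θ (k + 1) = θ k / (1 + α k))
      (hγrec : ∀ k, γ (k + 1) = (γ k + α k * μf) / (1 + α k))
      (hβrec : ∀ k, β (k + 1) = (β k + α k * μg) / (1 + α k))
      (hγinit : 0 < μf → γ 0 = μf) (hβinit : 0 < μg → β 0 = μg)
      (x v u : ℕ → EuclideanSpace ℝ (Fin m)) (y w : ℕ → EuclideanSpace ℝ (Fin n))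
      (l lbar : ℕ → EuclideanSpace ℝ (Fin r))
      (hx0 : x 0 ∈ X) (hv0 : v 0 ∈ X) (hy0 : y 0 ∈ Y)
      (hu : ∀ k, u k = (1 + α k)⁻¹ • (x k + α k • v k))
      (hi : ∀ k, v (k + 1) ∈ X ∧ ∃ s : EuclideanSpace ℝ (Fin m),
        (γ k / α k) • (v (k + 1) - v k)
            = μf • (u k - v (k + 1)) - f₁' (u k) - A.adjoint (lbar k) - s ∧
        ∀ z ∈ X, f₂ z ≥ f₂ (v (k + 1)) + ⟪s, z - v (k + 1)⟫)
      (hii : ∀ k, x (k + 1) - x k = α k • (v (k + 1) - x (k + 1)))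
      (hiii : ∀ k, θ k • (l (k + 1) - l k) = α k • (A (v (k + 1)) + B (w (k + 1)) - b))
      (hiv : ∀ k, y (k + 1) ∈ Y ∧ ∀ z ∈ Y,
        g z + ⟪lbar k, B z⟫ ≥
          g (y (k + 1)) + ⟪lbar k, B (y (k + 1))⟫
            + ⟪μg • (y (k + 1) - w (k + 1)) - (β k / α k) • (w (k + 1) - w k),
                z - y (k + 1)⟫
            + μg / 2 * ‖z - y (k + 1)‖ ^ 2)
      (hv : ∀ k, y (k + 1) - y k = α k • (w (k + 1) - y (k + 1)))
      (hlbar : ∀ k, lbar k = l k + (α k / θ k) • (A (v (k + 1)) + B (w k) - b))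
      (hstep : ∀ k, (Lf * β k * θ k + γ k * ‖B‖ ^ 2) * α k ^ 2 = γ k * β k * θ k)
      (xs : EuclideanSpace ℝ (Fin m)) (ys : EuclideanSpace ℝ (Fin n))
      (ls : EuclideanSpace ℝ (Fin r))
      (hxs : xs ∈ X) (hys : ys ∈ Y) (hfeas : A xs + B ys = b)
      (hsaddle : ∀ x' ∈ X, ∀ y' ∈ Y,
        f₁ x' + f₂ x' + g y' + ⟪ls, A x' + B y' - b⟫ ≥ f₁ xs + f₂ xs + g ys)
      (E : ℕ → ℝ)
      (hE : ∀ k, E k = f₁ (x k) + f₂ (x k) + g (y k) + ⟪ls, A (x k) + B (y k) - b⟫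
        - f₁ xs - f₂ xs - g ys
        + γ k / 2 * ‖v k - xs‖ ^ 2 + β k / 2 * ‖w k - ys‖ ^ 2 + θ k / 2 * ‖l k - ls‖ ^ 2)
      (R0 : ℝ)
      (hR0 : R0 = Real.sqrt (2 * E 0) + ‖l 0 - ls‖ + ‖A (x 0) + B (y 0) - b‖),
      (∀ k : ℕ, 1 ≤ k → x k ∈ X ∧ y k ∈ Y) ∧
      (∀ k : ℕ,
        E k ≤ θ k * E 0 ∧
        ‖A (x k) + B (y k) - b‖ ≤ θ k * R0 ∧
        |f₁ (x k) + f₂ (x k) + g (y k) - (f₁ xs + f₂ xs + g ys)|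
          ≤ θ k * (E 0 + ‖ls‖ * R0)) ∧
      (γ 0 * β 0 ≤ Lf * β 0 + γ 0 * ‖B‖ ^ 2 →
        ∀ k : ℕ, 1 ≤ k →
          ENNReal.ofReal (θ k) ≤ ENNReal.ofReal C * (min (ENNReal.ofReal (‖B‖ / (Real.sqrt (β 0) * (k : ℝ))))
                 (ENNReal.ofReal (‖B‖ ^ 2) / ENNReal.ofReal (μg * (k : ℝ) ^ 2))
             + min (ENNReal.ofReal (Lf / (γ 0 * (k : ℝ) ^ 2)))
                   (ENNReal.ofReal (Real.exp (-((k : ℝ) / 4) * Real.sqrt (μf / Lf)))))) := by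
  classical
  refine ⟨288, by norm_num, ?_⟩
  intro m n r X Y hXconv _hXclosed hYconv _hYclosed A B b f₁ f₂ g _hf₁conv hf₂conv _hgconv
    μf μg Lf hμf hμg hLf hμfLf f₁' _hf₁' hf₁bounds α θ γ β hα hθ0 hγ0pos hβ0pos hθrec hγrec
    hβrec hγinit hβinit x v u y w l lbar hx0 hv0 hy0 hu hi hii hiii hiv hv hlbar hstep
    xs ys ls hxs hys hfeas hsaddle E hE R0 hR0
  have h1a : ∀ k, (0:ℝ) < 1 + α k := fun k => by linarith [hα k]
  have hθpos : ∀ k, 0 < θ k := by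
    intro k; induction k with
    | zero => rw [hθ0]; norm_num
    | succ k ih => rw [hθrec k]; exact div_pos ih (h1a k)
  have hγpos : ∀ k, 0 < γ k := by
    intro k; induction k with
    | zero => exact hγ0pos
    | succ k ih =>
      rw [hγrec k]
      exact div_pos (by nlinarith only [ih, mul_nonneg (hα k).le hμf]) (h1a k)
  have hβpos : ∀ k, 0 < β k := by
    intro k; induction k with
    | zero => exact hβ0pos
    | succ k ih =>
      rw [hβrec k]
      exact div_pos (by nlinarith only [ih, mul_nonneg (hα k).le hμg]) (h1a k)
  have hxrec : ∀ k, (1 + α k) • x (k+1) = x k + α k • v (k+1) := fun k => by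
    linear_combination (norm := module) hii k
  have hyrec : ∀ k, (1 + α k) • y (k+1) = y k + α k • w (k+1) := fun k => by
    linear_combination (norm := module) hv k
  have hxe : ∀ k, x (k+1) = (1 + α k)⁻¹ • (x k + α k • v (k+1)) := fun k => by
    rw [← hxrec k, inv_smul_smul₀ (ne_of_gt (h1a k))]
  have hye : ∀ k, y (k+1) = (1 + α k)⁻¹ • (y k + α k • w (k+1)) := fun k => by
    rw [← hyrec k, inv_smul_smul₀ (ne_of_gt (h1a k))]
  have hmem : ∀ k, x k ∈ X ∧ v k ∈ X ∧ y k ∈ Y := by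
    intro k; induction k with
    | zero => exact ⟨hx0, hv0, hy0⟩
    | succ k ih =>
      have hvX : v (k+1) ∈ X := (hi k).1
      have hyY : y (k+1) ∈ Y := (hiv k).1
      have hxX : x (k+1) ∈ X := by
        rw [hxe k]; exact csilv_convex_comb_mem hXconv ih.1 hvX (hα k)
      exact ⟨hxX, hvX, hyY⟩
  have humem : ∀ k, u k ∈ X := fun k => by
    rw [hu k]; exact csilv_convex_comb_mem hXconv (hmem k).1 (hmem k).2.1 (hα k)
  -- one-step contraction
  have hkey : ∀ k, (1 + α k) * E (k+1) ≤ E k := by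
    intro k
    obtain ⟨hvX, s, hs1, hs2⟩ := hi k
    obtain ⟨hyY, hgineq⟩ := hiv k
    have h1ak := h1a k
    have hθk := hθpos k; have hγk := hγpos k; have hβk := hβpos k
    have hth' : (1 + α k) * θ (k+1) = θ k := by
      rw [hθrec k]; field_simp
    have hga' : (1 + α k) * γ (k+1) = γ k + α k * μf := by
      rw [hγrec k]; field_simp
    have hbe' : (1 + α k) * β (k+1) = β k + α k * μg := by
      rw [hβrec k]; field_simp
    have hstep1 : Lf * (α k)^2 ≤ γ k := by
      nlinarith only [hstep k, mul_pos hβk hθk,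
        mul_nonneg (mul_nonneg hγk.le (sq_nonneg ‖B‖)) (sq_nonneg (α k))]
    have hstep2 : (α k)^2 * ‖B‖^2 ≤ β k * θ k := by
      nlinarith only [hstep k, hγk,
        mul_nonneg (mul_nonneg (mul_nonneg hLf.le hβk.le) hθk.le) (sq_nonneg (α k))]
    have hu' : (1 + α k) • u k = x k + α k • v k := by
      rw [hu k, smul_inv_smul₀ (ne_of_gt h1ak)]
    have hsm := (hf₁bounds (x (k+1)) (hmem (k+1)).1 (u k) (humem k)).2
    have hcx : 0 ≤ f₁ (x k) - f₁ (u k) - ⟪f₁' (u k), x k - u k⟫ := by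
      have h := (hf₁bounds (x k) (hmem k).1 (u k) (humem k)).1
      have : (0:ℝ) ≤ μf / 2 * ‖x k - u k‖^2 := by positivity
      linarith
    have hcxs := (hf₁bounds xs hxs (u k) (humem k)).1
    have hAadj : ⟪A.adjoint (lbar k), v (k+1) - xs⟫ = ⟪lbar k, A (v (k+1) - xs)⟫ :=
      ContinuousLinearMap.adjoint_inner_left A _ _
    have hf₂sub : f₂ xs ≥ f₂ (v (k+1)) + ⟪s, xs - v (k+1)⟫ := hs2 xs hxs
    have hf₂cx : (1 + α k) * f₂ (x (k+1)) ≤ f₂ (x k) + α k * f₂ (v (k+1)) := by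
      have hab : (1 + α k)⁻¹ + (1 + α k)⁻¹ * α k = 1 := by field_simp
      have hc1 : (0:ℝ) ≤ (1 + α k)⁻¹ := (inv_pos.2 h1ak).le
      have hc2 : (0:ℝ) ≤ (1 + α k)⁻¹ * α k := mul_nonneg hc1 (hα k).le
      have hcc := hf₂conv.2 (Set.mem_univ (x k)) (Set.mem_univ (v (k+1))) hc1 hc2 hab
      simp only [smul_eq_mul] at hcc
      have heq : (1 + α k)⁻¹ • x k + ((1 + α k)⁻¹ * α k) • v (k+1) = x (k+1) := by
        rw [hxe k, smul_add, smul_smul]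
      rw [heq] at hcc
      have h2 := mul_le_mul_of_nonneg_left hcc h1ak.le
      have h3 : (1 + α k) * ((1 + α k)⁻¹ * f₂ (x k) + (1 + α k)⁻¹ * α k * f₂ (v (k+1)))
          = f₂ (x k) + α k * f₂ (v (k+1)) := by
        field_simp
      linarith [h2, h3.le, h3.ge]
    have hlbareq : θ k • lbar k = θ k • l k + α k • (A (v (k+1)) + B (w k) - b) := by
      have h := congrArg (fun z => θ k • z) (hlbar k)
      simp only [smul_add, smul_smul] at h
      have e : θ k * (α k / θ k) = α k := by field_simp
      rw [e] at h
      exact h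
    have hfinal := csilv_one_step A B b f₁ f₂ g μf μg Lf (α k) (θ k) (γ k) (β k)
      (θ (k+1)) (γ (k+1)) (β (k+1)) (x k) (x (k+1)) (v k) (v (k+1)) (u k) xs
      (A.adjoint (lbar k)) (f₁' (u k)) s (y k) (y (k+1)) (w k) (w (k+1)) ys
      (l k) (l (k+1)) (lbar k) ls hμf hμg hLf (hα k) hθk hγk hβk hth' hga' hbe'
      hstep1 hstep2 hu' (hxrec k) (hyrec k) hsm hcx hcxs hs1 hAadj hf₂sub hf₂cx
      (hgineq (y k) (hmem k).2.2) (hgineq ys hys) (hiii k) hlbareq hfeas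
    rw [hE k, hE (k+1)]
    exact hfinal
  have hEθ : ∀ k, E k ≤ θ k * E 0 := by
    intro k; induction k with
    | zero => rw [hθ0, one_mul]
    | succ k ih =>
      have h := hkey k
      have h2 : E (k+1) ≤ (θ k * E 0) / (1 + α k) := by
        rw [le_div_iff₀ (h1a k)]
        nlinarith only [h, ih]
      calc E (k+1) ≤ (θ k * E 0) / (1 + α k) := h2
        _ = θ (k+1) * E 0 := by rw [hθrec k]; ring
  have hgapnn : ∀ k, 0 ≤ f₁ (x k) + f₂ (x k) + g (y k)
      + ⟪ls, A (x k) + B (y k) - b⟫ - f₁ xs - f₂ xs - g ys := by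
    intro k
    have := hsaddle (x k) (hmem k).1 (y k) (hmem k).2.2
    linarith
  have hquads : ∀ k, 0 ≤ γ k / 2 * ‖v k - xs‖^2 + β k / 2 * ‖w k - ys‖^2 := by
    intro k
    have h1 := (hγpos k).le
    have h2 := (hβpos k).le
    positivity
  have hθq : ∀ k, 0 ≤ θ k / 2 * ‖l k - ls‖^2 := by
    intro k
    have h1 := (hθpos k).le
    positivity
  have hEcomp : ∀ k, θ k / 2 * ‖l k - ls‖^2 ≤ E k := by
    intro k; rw [hE k]; linarith [hgapnn k, hquads k]
  have hE0nn : 0 ≤ E 0 := le_trans (hθq 0) (hEcomp 0)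
  have hlls : ∀ k, ‖l k - ls‖ ≤ Real.sqrt (2 * E 0) := by
    intro k
    have h1 : θ k / 2 * ‖l k - ls‖^2 ≤ θ k * E 0 := le_trans (hEcomp k) (hEθ k)
    have h2 : ‖l k - ls‖^2 ≤ 2 * E 0 := by nlinarith only [h1, hθpos k]
    have h3 : ‖l k - ls‖ = Real.sqrt (‖l k - ls‖^2) := (Real.sqrt_sq (norm_nonneg _)).symm
    rw [h3]; exact Real.sqrt_le_sqrt h2
  have hresid : ∀ k, A (x k) + B (y k) - b
      = θ k • (A (x 0) + B (y 0) - b - l 0 + l k) := by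
    intro k; induction k with
    | zero => rw [hθ0, one_smul]; abel
    | succ k ih =>
      have hAx : (1 + α k) • A (x (k+1)) = A (x k) + α k • A (v (k+1)) := by
        rw [← map_smul, hxrec k, map_add, map_smul]
      have hBy : (1 + α k) • B (y (k+1)) = B (y k) + α k • B (w (k+1)) := by
        rw [← map_smul, hyrec k, map_add, map_smul]
      have hrrec : (1 + α k) • (A (x (k+1)) + B (y (k+1)) - b)
          = (A (x k) + B (y k) - b) + α k • (A (v (k+1)) + B (w (k+1)) - b) := by
        rw [smul_sub, smul_add, hAx, hBy]; module
      rw [← hiii k, ih] at hrrec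
      have hcomb : (1 + α k) • (A (x (k+1)) + B (y (k+1)) - b)
          = θ k • (A (x 0) + B (y 0) - b - l 0 + l (k+1)) := by
        rw [hrrec]; module
      have h2 : A (x (k+1)) + B (y (k+1)) - b
          = ((1 + α k)⁻¹ * θ k) • (A (x 0) + B (y 0) - b - l 0 + l (k+1)) := by
        rw [← smul_smul, ← hcomb, inv_smul_smul₀ (ne_of_gt (h1a k))]
      rw [h2, hθrec k, div_eq_inv_mul]
  have hresbound : ∀ k, ‖A (x k) + B (y k) - b‖ ≤ θ k * R0 := by
    intro k
    rw [hresid k, norm_smul, Real.norm_eq_abs, abs_of_pos (hθpos k)]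
    have hb1 : ‖A (x 0) + B (y 0) - b - l 0 + l k‖ ≤ R0 := by
      have e : A (x 0) + B (y 0) - b - l 0 + l k
          = ((A (x 0) + B (y 0) - b) + (ls - l 0)) + (l k - ls) := by abel
      rw [e, hR0]
      have t1 := norm_add_le ((A (x 0) + B (y 0) - b) + (ls - l 0)) (l k - ls)
      have t2 := norm_add_le (A (x 0) + B (y 0) - b) (ls - l 0)
      have t3 : ‖ls - l 0‖ = ‖l 0 - ls‖ := norm_sub_rev _ _
      have t4 := hlls k
      linarith
    exact mul_le_mul_of_nonneg_left hb1 (hθpos k).le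
  have hobj : ∀ k, |f₁ (x k) + f₂ (x k) + g (y k) - (f₁ xs + f₂ xs + g ys)|
      ≤ θ k * (E 0 + ‖ls‖ * R0) := by
    intro k
    have hip : |⟪ls, A (x k) + B (y k) - b⟫| ≤ ‖ls‖ * (θ k * R0) :=
      le_trans (abs_real_inner_le_norm _ _)
        (mul_le_mul_of_nonneg_left (hresbound k) (norm_nonneg ls))
    have hipa := abs_le.mp hip
    have h1 : E k ≤ θ k * E 0 := hEθ k
    rw [hE k] at h1
    have hθE0 : 0 ≤ θ k * E 0 := mul_nonneg (hθpos k).le hE0nn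
    have hsad := hsaddle (x k) (hmem k).1 (y k) (hmem k).2.2
    rw [abs_le]
    constructor
    · linarith only [hipa.1, hipa.2, hsad, hθE0]
    · linarith only [hipa.1, hipa.2, h1, hquads k, hθq k]
  refine ⟨fun k _ => ⟨(hmem k).1, (hmem k).2.2⟩, fun k => ⟨hEθ k, hresbound k, hobj k⟩, ?_⟩
  -- ===================== Part 3 : the rate bound =====================
  intro hinit k hk1
  have hθdec : ∀ j, θ (j+1) ≤ θ j := by
    intro j; rw [hθrec j]
    exact div_le_self (hθpos j).le (by linarith [hα j])
  have hθmono : ∀ i j, i ≤ j → θ j ≤ θ i := by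
    intro i j hij
    induction j, hij using Nat.le_induction with
    | base => exact le_refl _
    | succ j _ ih => exact le_trans (hθdec j) ih
  have hθle1 : ∀ j, θ j ≤ 1 := fun j => by
    have := hθmono 0 j (Nat.zero_le j); rwa [hθ0] at this
  have hsqθle1 : ∀ j, Real.sqrt (θ j) ≤ 1 := by
    intro j
    rw [← Real.sqrt_one]
    exact Real.sqrt_le_sqrt (hθle1 j)
  have hψmono : ∀ i j, i ≤ j → (Real.sqrt (θ i))⁻¹ ≤ (Real.sqrt (θ j))⁻¹ := by
    intro i j hij
    induction j, hij using Nat.le_induction with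
    | base => exact le_refl _
    | succ j _ ih =>
      exact le_trans ih
        (inv_anti₀ (Real.sqrt_pos.2 (hθpos (j+1))) (Real.sqrt_le_sqrt (hθdec j)))
  have hψge1 : ∀ j, 1 ≤ (Real.sqrt (θ j))⁻¹ := by
    intro j
    have h := inv_anti₀ (Real.sqrt_pos.2 (hθpos j)) (hsqθle1 j)
    simpa using h
  have hφge1 : ∀ j, 1 ≤ (θ j)⁻¹ := by
    intro j
    have h := inv_anti₀ (hθpos j) (hθle1 j)
    simpa using h
  have hθlesq : ∀ j, θ j ≤ Real.sqrt (θ j) := by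
    intro j
    nlinarith [Real.sq_sqrt (hθpos j).le, Real.sqrt_nonneg (θ j), hsqθle1 j]
  have hμfγ0 : μf ≤ γ 0 := by
    rcases hμf.lt_or_eq with h | h
    · exact le_of_eq (hγinit h).symm
    · rw [← h]; exact hγ0pos.le
  have hμgβ0 : μg ≤ β 0 := by
    rcases hμg.lt_or_eq with h | h
    · exact le_of_eq (hβinit h).symm
    · rw [← h]; exact hβ0pos.le
  have hγle0 : ∀ j, γ j ≤ γ 0 := by
    intro j; induction j with
    | zero => exact le_refl _
    | succ j ih =>
      rw [hγrec j, div_le_iff₀ (h1a j)]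
      nlinarith [mul_le_mul_of_nonneg_left hμfγ0 (hα j).le]
  have hβgeμ : ∀ j, μg ≤ β j := by
    intro j; induction j with
    | zero => exact hμgβ0
    | succ j ih =>
      rw [hβrec j, le_div_iff₀ (h1a j)]
      nlinarith [mul_le_mul_of_nonneg_left ih (hα j).le, hα j, hμg]
  -- α ≤ 1
  have hαle1 : ∀ j, α j ≤ 1 := by
    intro j
    have hkey : γ j * (β j * θ j) ≤ Lf * (β j * θ j) + γ j * ‖B‖^2 := by
      rcases hμf.lt_or_eq with hf | hf
      · have h1 : γ j ≤ Lf := le_trans (hγle0 j) (le_trans (le_of_eq (hγinit hf)) hμfLf)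
        nlinarith [mul_pos (hβpos j) (hθpos j), mul_nonneg (hγpos j).le (sq_nonneg ‖B‖)]
      · have hγt : ∀ i, γ i = γ 0 * θ i := by
          intro i; induction i with
          | zero => rw [hθ0, mul_one]
          | succ i ih => rw [hγrec i, ih, hθrec i, ← hf]; ring
        rcases hμg.lt_or_eq with hg | hg
        · have hβ0g := hβinit hg
          have hβc : ∀ i, β i = μg := by
            intro i; induction i with
            | zero => exact hβ0g
            | succ i ih => rw [hβrec i, ih, div_eq_iff (ne_of_gt (h1a i))]; ring
          rw [hγt j, hβc j]
          rw [hβ0g] at hinit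
          have e1 := mul_le_mul_of_nonneg_right hinit (hθpos j).le
          have e2 : 0 ≤ γ 0 * μg * θ j :=
            mul_nonneg (mul_nonneg hγ0pos.le hμg) (hθpos j).le
          nlinarith [e1, mul_le_mul_of_nonneg_left (hθle1 j) e2]
        · have hβt : ∀ i, β i = β 0 * θ i := by
            intro i; induction i with
            | zero => rw [hθ0, mul_one]
            | succ i ih => rw [hβrec i, ih, hθrec i, ← hg]; ring
          rw [hγt j, hβt j]
          have e1 := mul_le_mul_of_nonneg_right hinit (sq_nonneg (θ j))
          have e2 : 0 ≤ γ 0 * β 0 * θ j ^2 :=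
            mul_nonneg (mul_nonneg hγ0pos.le hβ0pos.le) (sq_nonneg _)
          have e3 : 0 ≤ γ 0 * ‖B‖^2 * θ j :=
            mul_nonneg (mul_nonneg hγ0pos.le (sq_nonneg _)) (hθpos j).le
          nlinarith [e1, mul_le_mul_of_nonneg_left (hθle1 j) e2,
            mul_le_mul_of_nonneg_left (hθle1 j) e3]
    have hD : 0 < Lf * β j * θ j + γ j * ‖B‖^2 := by
      have hp1 := mul_pos (mul_pos hLf (hβpos j)) (hθpos j)
      have hp2 := mul_nonneg (hγpos j).le (sq_nonneg ‖B‖)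
      linarith
    have hα2 : (α j)^2 ≤ 1 := by nlinarith [hstep j, hkey, hD]
    nlinarith [hα j, hα2]
  -- step-size dichotomy
  have hsplitF : ∀ j, γ j * ‖B‖^2 ≤ Lf * (β j * θ j) → γ j ≤ 2*Lf*(α j)^2 := by
    intro j hc
    nlinarith [hstep j, mul_pos (hβpos j) (hθpos j), sq_nonneg (α j),
      mul_le_mul_of_nonneg_right hc (sq_nonneg (α j))]
  have hsplitB : ∀ j, Lf * (β j * θ j) < γ j * ‖B‖^2 → β j * θ j ≤ 2*‖B‖^2*(α j)^2 := by
    intro j hc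
    nlinarith [hstep j, hγpos j, sq_nonneg (α j),
      mul_le_mul_of_nonneg_right hc.le (sq_nonneg (α j))]
  -- index threshold
  set t : ℕ := k - k / 4 with htdef
  have hknn : (0:ℝ) ≤ (k:ℝ) := Nat.cast_nonneg k
  have hk1c : (1:ℝ) ≤ (k:ℝ) := by exact_mod_cast hk1
  have hk2pos : (0:ℝ) < (k:ℝ)^2 := by nlinarith [hk1c]
  have hk4pos : (0:ℝ) < (k:ℝ)/4 := by linarith [hk1c]
  have htk : t ≤ k := Nat.sub_le _ _
  have ht1 : 1 ≤ t := by rw [htdef]; omega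
  have hq4 : ((k/4 : ℕ) : ℝ) ≤ (k:ℝ)/4 := by
    have h2 : (((k/4)*4 : ℕ) : ℝ) ≤ (k:ℝ) := by exact_mod_cast Nat.div_mul_le_self k 4
    push_cast at h2
    linarith
  have htcast : (t:ℝ) = (k:ℝ) - ((k/4 : ℕ) : ℝ) := by
    rw [htdef]; exact_mod_cast Nat.cast_sub (Nat.div_le_self k 4)
  have htreal : 3/4*(k:ℝ) ≤ (t:ℝ) := by rw [htcast]; linarith
  have hkmj : ∀ j', j' < t → (k:ℝ)/4 ≤ ((k - j' : ℕ) : ℝ) := by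
    intro j' hj'
    have h5n : k < 4*(k/4) + 4 := by omega
    have hjn : k/4 + 1 ≤ k - j' := by omega
    have h2 : (((k/4) + 1 : ℕ) : ℝ) ≤ ((k - j' : ℕ) : ℝ) := by exact_mod_cast hjn
    have h3 : (k:ℝ) < 4*((k/4 : ℕ) : ℝ) + 4 := by exact_mod_cast h5n
    push_cast at h2
    linarith
  -- main dichotomy
  by_cases hC : ∀ j, j < t → γ j * ‖B‖^2 ≤ Lf * (β j * θ j)
  · -- ================= f-dominant branch =================
    -- in this branch we bound θ k by 288 * min₂ (the f-part)
    have hmain : ENNReal.ofReal (θ k) ≤ ENNReal.ofReal 288 *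
        min (ENNReal.ofReal (Lf / (γ 0 * (k : ℝ) ^ 2)))
            (ENNReal.ofReal (Real.exp (-((k : ℝ) / 4) * Real.sqrt (μf / Lf)))) := by
      -- generic ψ-based bound with δ s.t. δ^2 * θ j ≤ γ j/(2 Lf)-type input
      rcases hμf.lt_or_eq with hf | hf
      · -- μf > 0
        have hγ0f : γ 0 = μf := hγinit hf
        have hγc : ∀ i, γ i = μf := by
          intro i; induction i with
          | zero => exact hγ0f
          | succ i ih => rw [hγrec i, ih, div_eq_iff (ne_of_gt (h1a i))]; ring
        have hq : (0:ℝ) < μf/(2*Lf) := div_pos hf (by linarith [hLf])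
        have hδpos : 0 < Real.sqrt (μf/(2*Lf)) := Real.sqrt_pos.2 hq
        set δ := Real.sqrt (μf/(2*Lf)) with hδdef
        have hδsq : δ^2 = μf/(2*Lf) := Real.sq_sqrt hq.le
        have hαδ : ∀ j, j < t → δ ≤ α j := by
          intro j hj
          have h1 := hsplitF j (hC j hj)
          rw [hγc j] at h1
          have h2 : μf/(2*Lf) ≤ (α j)^2 := by
            rw [div_le_iff₀ (by linarith [hLf] : (0:ℝ) < 2*Lf)]; nlinarith [h1]
          rw [hδdef]
          exact csilv_alpha_lb (hα j) h2
        -- exponential bound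
        have hgeo := csilv_geo θ (Real.exp (-(δ/2))) (Real.exp_pos _).le t
          (fun j hj => csilv_exp_step (θ j) (θ (j+1)) (α j) δ (hθpos j) (hθrec j)
            hδpos.le (hαδ j hj) (hαle1 j) (hα j))
          (fun j => (hθpos j).le)
        rw [hθ0, mul_one, ← Real.exp_nat_mul] at hgeo
        have hexpfin : θ k ≤ Real.exp (-((k:ℝ)/4) * Real.sqrt (μf/Lf)) := by
          refine le_trans (hθmono t k htk) (le_trans hgeo (Real.exp_le_exp.2 ?_))
          have hrel : Real.sqrt (μf/Lf) = δ * Real.sqrt 2 := by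
            rw [hδdef, ← Real.sqrt_mul hq.le]
            congr 1
            rw [div_mul_eq_mul_div, mul_comm μf 2,
              mul_div_mul_left _ _ (by norm_num : (2:ℝ) ≠ 0)]
          have hs2 : Real.sqrt 2 ≤ 1.5 := by
            nlinarith [Real.sq_sqrt (by norm_num : (0:ℝ) ≤ 2), Real.sqrt_nonneg 2]
          rw [hrel]
          have hlin : (k:ℝ)/4 * Real.sqrt 2 ≤ (t:ℝ)/2 := by
            nlinarith [htreal, hs2, hknn, Real.sqrt_nonneg 2]
          nlinarith [mul_le_mul_of_nonneg_right hlin hδpos.le]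
        -- ψ bound
        have hψt := csilv_telescope (fun j => (Real.sqrt (θ j))⁻¹) (δ/3) 0 t (Nat.zero_le t)
          (fun j _ hj => csilv_psi_step (θ j) (θ (j+1)) (α j) δ (hθpos j) (hθrec j)
            (hα j) (hαle1 j) hδpos.le
            (le_trans (by nlinarith [hsqθle1 j, hδpos.le, Real.sqrt_nonneg (θ j)]) (hαδ j hj)))
        beta_reduce at hψt
        rw [hθ0, Real.sqrt_one, inv_one, Nat.sub_zero] at hψt
        have hψk : (t:ℝ)*(δ/3) ≤ (Real.sqrt (θ k))⁻¹ := by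
          have h2 := hψmono t k htk
          linarith
        have hcpos : 0 < (t:ℝ)*(δ/3) := by
          have h1t : (1:ℝ) ≤ (t:ℝ) := by exact_mod_cast ht1
          exact mul_pos (lt_of_lt_of_le one_pos h1t) (by linarith [hδpos])
        have hθsq := csilv_sq_inv_bound' (hθpos k) hcpos hψk
        have hb1 : θ k ≤ 288 * (Lf/(γ 0 * (k:ℝ)^2)) := by
          rw [hγ0f]
          have hden : 0 < μf * (k:ℝ)^2 := mul_pos hf hk2pos
          rw [← mul_div_assoc, le_div_iff₀ hden]
          have ht2 : (3/4*(k:ℝ))^2 ≤ (t:ℝ)^2 :=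
            pow_le_pow_left₀ (by nlinarith [hknn]) htreal 2
          have p0 := mul_le_mul_of_nonneg_left
            (mul_le_mul_of_nonneg_right ht2 (sq_nonneg δ))
            (by nlinarith [hLf] : (0:ℝ) ≤ 32*Lf/9)
          have e2 : 32*Lf*δ^2*(k:ℝ)^2 = 16*μf*(k:ℝ)^2 := by
            rw [hδsq]; field_simp; ring
          have h1 : μf*(k:ℝ)^2 ≤ 32*Lf*((t:ℝ)*(δ/3))^2 := by linarith only [p0, e2]
          have p1 := mul_le_mul_of_nonneg_left h1 (hθpos k).le
          have p2 := mul_le_mul_of_nonneg_left hθsq (by nlinarith [hLf] : (0:ℝ) ≤ 32*Lf)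
          linarith only [p1, p2, hLf]
        rcases min_cases (ENNReal.ofReal (Lf / (γ 0 * (k : ℝ) ^ 2)))
          (ENNReal.ofReal (Real.exp (-((k : ℝ) / 4) * Real.sqrt (μf / Lf)))) with
          ⟨hm, _⟩ | ⟨hm, _⟩ <;> rw [hm]
        · rw [← ENNReal.ofReal_mul (by norm_num : (0:ℝ) ≤ 288)]
          exact ENNReal.ofReal_le_ofReal hb1
        · rw [← ENNReal.ofReal_mul (by norm_num : (0:ℝ) ≤ 288)]
          refine ENNReal.ofReal_le_ofReal (le_trans hexpfin ?_)
          nlinarith [Real.exp_pos (-((k:ℝ)/4) * Real.sqrt (μf/Lf))]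
      · -- μf = 0
        have hγt : ∀ i, γ i = γ 0 * θ i := by
          intro i; induction i with
          | zero => rw [hθ0, mul_one]
          | succ i ih => rw [hγrec i, ih, hθrec i, ← hf]; ring
        have hq : (0:ℝ) < γ 0/(2*Lf) := div_pos hγ0pos (by linarith [hLf])
        have hδpos : 0 < Real.sqrt (γ 0/(2*Lf)) := Real.sqrt_pos.2 hq
        set δ := Real.sqrt (γ 0/(2*Lf)) with hδdef
        have hδsq : δ^2 = γ 0/(2*Lf) := Real.sq_sqrt hq.le
        have hαδ : ∀ j, j < t → δ * Real.sqrt (θ j) ≤ α j := by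
          intro j hj
          have h1 := hsplitF j (hC j hj)
          rw [hγt j] at h1
          have h2 : δ^2 * θ j ≤ (α j)^2 := by
            rw [hδsq, div_mul_eq_mul_div, div_le_iff₀ (by linarith [hLf] : (0:ℝ) < 2*Lf)]
            nlinarith [h1]
          have h3 := csilv_alpha_lb (hα j) h2
          rwa [Real.sqrt_mul (sq_nonneg δ), Real.sqrt_sq hδpos.le] at h3
        have hψt := csilv_telescope (fun j => (Real.sqrt (θ j))⁻¹) (δ/3) 0 t (Nat.zero_le t)
          (fun j _ hj => csilv_psi_step (θ j) (θ (j+1)) (α j) δ (hθpos j) (hθrec j)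
            (hα j) (hαle1 j) hδpos.le (hαδ j hj))
        beta_reduce at hψt
        rw [hθ0, Real.sqrt_one, inv_one, Nat.sub_zero] at hψt
        have hψk : (t:ℝ)*(δ/3) ≤ (Real.sqrt (θ k))⁻¹ := by
          have h2 := hψmono t k htk
          linarith
        have hcpos : 0 < (t:ℝ)*(δ/3) := by
          have h1t : (1:ℝ) ≤ (t:ℝ) := by exact_mod_cast ht1
          exact mul_pos (lt_of_lt_of_le one_pos h1t) (by linarith [hδpos])
        have hθsq := csilv_sq_inv_bound' (hθpos k) hcpos hψk
        have hb1 : θ k ≤ 288 * (Lf/(γ 0 * (k:ℝ)^2)) := by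
          have hden : 0 < γ 0 * (k:ℝ)^2 := mul_pos hγ0pos hk2pos
          rw [← mul_div_assoc, le_div_iff₀ hden]
          have ht2 : (3/4*(k:ℝ))^2 ≤ (t:ℝ)^2 :=
            pow_le_pow_left₀ (by nlinarith [hknn]) htreal 2
          have p0 := mul_le_mul_of_nonneg_left
            (mul_le_mul_of_nonneg_right ht2 (sq_nonneg δ))
            (by nlinarith [hLf] : (0:ℝ) ≤ 32*Lf/9)
          have e2 : 32*Lf*δ^2*(k:ℝ)^2 = 16*(γ 0)*(k:ℝ)^2 := by
            rw [hδsq]; field_simp; ring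
          have h1 : γ 0*(k:ℝ)^2 ≤ 32*Lf*((t:ℝ)*(δ/3))^2 := by linarith only [p0, e2]
          have p1 := mul_le_mul_of_nonneg_left h1 (hθpos k).le
          have p2 := mul_le_mul_of_nonneg_left hθsq (by nlinarith [hLf] : (0:ℝ) ≤ 32*Lf)
          linarith only [p1, p2, hLf]
        have hexpfin : θ k ≤ Real.exp (-((k:ℝ)/4) * Real.sqrt (μf/Lf)) := by
          rw [← hf, zero_div, Real.sqrt_zero, mul_zero, Real.exp_zero]
          exact hθle1 k
        rcases min_cases (ENNReal.ofReal (Lf / (γ 0 * (k : ℝ) ^ 2)))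
          (ENNReal.ofReal (Real.exp (-((k : ℝ) / 4) * Real.sqrt (μf / Lf)))) with
          ⟨hm, _⟩ | ⟨hm, _⟩ <;> rw [hm]
        · rw [← ENNReal.ofReal_mul (by norm_num : (0:ℝ) ≤ 288)]
          exact ENNReal.ofReal_le_ofReal hb1
        · rw [← ENNReal.ofReal_mul (by norm_num : (0:ℝ) ≤ 288)]
          refine ENNReal.ofReal_le_ofReal (le_trans hexpfin ?_)
          nlinarith [Real.exp_pos (-((k:ℝ)/4) * Real.sqrt (μf/Lf))]
    exact le_trans hmain (mul_le_mul_right le_add_self _)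
  · -- ================= B-dominant branch =================
    push_neg at hC
    obtain ⟨j', hj't, hnc⟩ := hC
    -- condition is downward closed
    have hncstep : ∀ i, Lf * (β i * θ i) < γ i * ‖B‖^2 →
        Lf * (β (i+1) * θ (i+1)) < γ (i+1) * ‖B‖^2 := by
      intro i h
      have e1 : (1 + α i) * γ (i+1) = γ i + α i * μf := by
        rw [hγrec i]; field_simp [(h1a i).ne']
      have e2 : (1 + α i) * β (i+1) = β i + α i * μg := by
        rw [hβrec i]; field_simp [(h1a i).ne']
      have e3 : (1 + α i) * θ (i+1) = θ i := by
        rw [hθrec i]; field_simp [(h1a i).ne']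
      have q1 : α i * μg ≤ α i * β i := mul_le_mul_of_nonneg_left (hβgeμ i) (hα i).le
      have h4 : Lf * ((β i + α i*μg) * θ i) < (γ i + α i * μf)*((1+α i)*‖B‖^2) := by
        have p1 := mul_le_mul_of_nonneg_left
          (mul_le_mul_of_nonneg_right q1 (hθpos i).le) hLf.le
        have p2 := mul_lt_mul_of_pos_left h (h1a i)
        have p3 : 0 ≤ α i * μf * ((1+α i)*‖B‖^2) := by
          have := mul_nonneg (mul_nonneg (hα i).le hμf)
            (mul_nonneg (h1a i).le (sq_nonneg ‖B‖))
          linarith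
        nlinarith [p1, p2, p3]
      by_contra hcon
      push_neg at hcon
      have h5 := mul_le_mul_of_nonneg_right hcon (sq_nonneg (1+α i))
      have e4 : ((1+α i)*β (i+1))*((1+α i)*θ (i+1)) = (β i + α i*μg)*θ i := by
        rw [e2, e3]
      have e5 : ((1+α i)*γ (i+1))*((1+α i)*‖B‖^2) = (γ i + α i*μf)*((1+α i)*‖B‖^2) := by
        rw [e1]
      nlinarith [h5, h4, e4, e5, congrArg (fun z => Lf * z) e4]
    have hncall : ∀ i, j' ≤ i → Lf * (β i * θ i) < γ i * ‖B‖^2 := by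
      intro i hi
      induction i, hi using Nat.le_induction with
      | base => exact hnc
      | succ i _ ih => exact hncstep i ih
    have hB2pos : 0 < ‖B‖^2 := by
      nlinarith [hnc, mul_pos (mul_pos hLf (hβpos j')) (hθpos j'), hγpos j',
        mul_nonneg (hγpos j').le (sq_nonneg ‖B‖)]
    have hBpos : 0 < ‖B‖ := by nlinarith [hB2pos, norm_nonneg B]
    have hmain : ENNReal.ofReal (θ k) ≤ ENNReal.ofReal 288 *
        min (ENNReal.ofReal (‖B‖ / (Real.sqrt (β 0) * (k : ℝ))))
            (ENNReal.ofReal (‖B‖ ^ 2) / ENNReal.ofReal (μg * (k : ℝ) ^ 2)) := by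
      rcases hμg.lt_or_eq with hg | hg
      · -- μg > 0
        have hβ0g := hβinit hg
        have hβc : ∀ i, β i = μg := by
          intro i; induction i with
          | zero => exact hβ0g
          | succ i ih => rw [hβrec i, ih, div_eq_iff (ne_of_gt (h1a i))]; ring
        have hq : (0:ℝ) < μg/(2*‖B‖^2) := div_pos hg (by nlinarith [hB2pos])
        have hδpos : 0 < Real.sqrt (μg/(2*‖B‖^2)) := Real.sqrt_pos.2 hq
        set δB := Real.sqrt (μg/(2*‖B‖^2)) with hδdef
        have hδsq : δB^2 = μg/(2*‖B‖^2) := Real.sq_sqrt hq.le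
        have hαδ : ∀ i, j' ≤ i → δB * Real.sqrt (θ i) ≤ α i := by
          intro i hi
          have h1 := hsplitB i (hncall i hi)
          rw [hβc i] at h1
          have h2 : δB^2 * θ i ≤ (α i)^2 := by
            rw [hδsq, div_mul_eq_mul_div, div_le_iff₀ (by nlinarith [hB2pos] : (0:ℝ) < 2*‖B‖^2)]
            nlinarith [h1]
          have h3 := csilv_alpha_lb (hα i) h2
          rwa [Real.sqrt_mul (sq_nonneg δB), Real.sqrt_sq hδpos.le] at h3
        -- ψ telescope from j' to k
        have hψt := csilv_telescope (fun j => (Real.sqrt (θ j))⁻¹) (δB/3) j' k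
          (le_trans hj't.le htk)
          (fun j hj _ => csilv_psi_step (θ j) (θ (j+1)) (α j) δB (hθpos j) (hθrec j)
            (hα j) (hαle1 j) hδpos.le (hαδ j hj))
        beta_reduce at hψt
        have hψk : ((k:ℝ)/4)*(δB/3) ≤ (Real.sqrt (θ k))⁻¹ := by
          have h2 := hψge1 j'
          have h3 := hkmj j' hj't
          have h4 : 0 ≤ δB/3 := by linarith [hδpos]
          linarith only [hψt, h2, mul_le_mul_of_nonneg_right h3 h4]
        have hcpos : 0 < ((k:ℝ)/4)*(δB/3) := mul_pos hk4pos (by linarith [hδpos])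
        have hθsq := csilv_sq_inv_bound' (hθpos k) hcpos hψk
        -- φ telescope from j' to k
        have hαδφ : ∀ i, j' ≤ i → δB * θ i ≤ α i := by
          intro i hi
          refine le_trans ?_ (hαδ i hi)
          exact mul_le_mul_of_nonneg_left (hθlesq i) hδpos.le
        have hφt := csilv_telescope (fun j => (θ j)⁻¹) δB j' k (le_trans hj't.le htk)
          (fun j hj _ => csilv_phi_step (θ j) (θ (j+1)) (α j) δB (hθpos j) (hθrec j)
            (hα j) hδpos.le (hαδφ j hj))
        beta_reduce at hφt
        have hφk : ((k:ℝ)/4)*δB ≤ (θ k)⁻¹ := by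
          have h2 := hφge1 j'
          have h3 := hkmj j' hj't
          linarith only [hφt, h2, mul_le_mul_of_nonneg_right h3 hδpos.le]
        have hc1pos : 0 < ((k:ℝ)/4)*δB := mul_pos hk4pos hδpos
        have hθlin := csilv_inv_bound' (hθpos k) hc1pos hφk
        -- bound 1 : θ k ≤ 288 ‖B‖²/(μg k²)
        have hbound1 : θ k ≤ 288 * (‖B‖^2/(μg*(k:ℝ)^2)) := by
          have hden : 0 < μg * (k:ℝ)^2 := mul_pos hg hk2pos
          rw [← mul_div_assoc, le_div_iff₀ hden]
          have e : 2*‖B‖^2*δB^2 = μg := by rw [hδsq]; field_simp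
          have e2 : 288*‖B‖^2*(((k:ℝ)/4)*(δB/3))^2 = μg*(k:ℝ)^2 := by
            linear_combination ((k:ℝ)^2) * e
          have p1 := mul_le_mul_of_nonneg_left hθsq
            (by positivity : (0:ℝ) ≤ 288*‖B‖^2)
          have p2 := congrArg (fun z => θ k * z) e2
          linarith only [p1, p2]
        -- bound 2 : θ k ≤ 288 ‖B‖/(√β0 k)
        have hbound2 : θ k ≤ 288 * (‖B‖/(Real.sqrt (β 0)*(k:ℝ))) := by
          rw [hβ0g]
          have hsμg : 0 < Real.sqrt μg := Real.sqrt_pos.2 hg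
          have hden : 0 < Real.sqrt μg * (k:ℝ) := mul_pos hsμg (by linarith [hk1c])
          rw [← mul_div_assoc, le_div_iff₀ hden]
          have hsq2 : (Real.sqrt 2 * ‖B‖ * δB)^2 = μg := by
            rw [mul_pow, mul_pow, Real.sq_sqrt (by norm_num : (0:ℝ) ≤ 2), hδsq]
            field_simp [hB2pos.ne']
          have e : Real.sqrt μg = Real.sqrt 2 * ‖B‖ * δB := by
            rw [← hsq2, Real.sqrt_sq
              (mul_nonneg (mul_nonneg (Real.sqrt_nonneg 2) (norm_nonneg B)) hδpos.le)]
          have hs2 : Real.sqrt 2 ≤ 1.5 := by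
            nlinarith [Real.sq_sqrt (by norm_num : (0:ℝ) ≤ 2), Real.sqrt_nonneg 2]
          have p1 := mul_le_mul_of_nonneg_left hθlin
            (by positivity : (0:ℝ) ≤ 4*Real.sqrt 2*‖B‖)
          have p2 := congrArg (fun z => θ k * (k:ℝ) * z) e
          have p3 := mul_le_mul_of_nonneg_right hs2 (norm_nonneg B)
          have hθknn : 0 ≤ θ k * (k:ℝ) := mul_nonneg (hθpos k).le hknn
          linarith only [p1, p2, p3, norm_nonneg B]
        have hdiv : ENNReal.ofReal (‖B‖ ^ 2) / ENNReal.ofReal (μg * (k : ℝ) ^ 2)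
            = ENNReal.ofReal (‖B‖^2/(μg*(k:ℝ)^2)) := by
          rw [ENNReal.ofReal_div_of_pos (mul_pos hg hk2pos)]
        rw [hdiv]
        rcases min_cases (ENNReal.ofReal (‖B‖ / (Real.sqrt (β 0) * (k : ℝ))))
          (ENNReal.ofReal (‖B‖^2/(μg*(k:ℝ)^2))) with ⟨hm, _⟩ | ⟨hm, _⟩ <;> rw [hm]
        · rw [← ENNReal.ofReal_mul (by norm_num : (0:ℝ) ≤ 288)]
          exact ENNReal.ofReal_le_ofReal hbound2
        · rw [← ENNReal.ofReal_mul (by norm_num : (0:ℝ) ≤ 288)]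
          exact ENNReal.ofReal_le_ofReal hbound1
      · -- μg = 0
        have hβt : ∀ i, β i = β 0 * θ i := by
          intro i; induction i with
          | zero => rw [hθ0, mul_one]
          | succ i ih => rw [hβrec i, ih, hθrec i, ← hg]; ring
        have hq : (0:ℝ) < β 0/(2*‖B‖^2) := div_pos hβ0pos (by nlinarith [hB2pos])
        have hδpos : 0 < Real.sqrt (β 0/(2*‖B‖^2)) := Real.sqrt_pos.2 hq
        set δB := Real.sqrt (β 0/(2*‖B‖^2)) with hδdef
        have hδsq : δB^2 = β 0/(2*‖B‖^2) := Real.sq_sqrt hq.le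
        have hαδφ : ∀ i, j' ≤ i → δB * θ i ≤ α i := by
          intro i hi
          have h1 := hsplitB i (hncall i hi)
          rw [hβt i] at h1
          have h2 : δB^2 * (θ i)^2 ≤ (α i)^2 := by
            rw [hδsq, div_mul_eq_mul_div, div_le_iff₀ (by nlinarith [hB2pos] : (0:ℝ) < 2*‖B‖^2)]
            nlinarith [h1]
          have h3 : (δB * θ i)^2 ≤ (α i)^2 := by nlinarith [h2]
          exact csilv_le_of_sq (mul_nonneg hδpos.le (hθpos i).le) (hα i).le h3
        have hφt := csilv_telescope (fun j => (θ j)⁻¹) δB j' k (le_trans hj't.le htk)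
          (fun j hj _ => csilv_phi_step (θ j) (θ (j+1)) (α j) δB (hθpos j) (hθrec j)
            (hα j) hδpos.le (hαδφ j hj))
        beta_reduce at hφt
        have hφk : ((k:ℝ)/4)*δB ≤ (θ k)⁻¹ := by
          have h2 := hφge1 j'
          have h3 := hkmj j' hj't
          linarith only [hφt, h2, mul_le_mul_of_nonneg_right h3 hδpos.le]
        have hc1pos : 0 < ((k:ℝ)/4)*δB := mul_pos hk4pos hδpos
        have hθlin := csilv_inv_bound' (hθpos k) hc1pos hφk
        have hbound2 : θ k ≤ 288 * (‖B‖/(Real.sqrt (β 0)*(k:ℝ))) := by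
          have hsb : 0 < Real.sqrt (β 0) := Real.sqrt_pos.2 hβ0pos
          have hden : 0 < Real.sqrt (β 0) * (k:ℝ) := mul_pos hsb (by linarith [hk1c])
          rw [← mul_div_assoc, le_div_iff₀ hden]
          have hsq2 : (Real.sqrt 2 * ‖B‖ * δB)^2 = β 0 := by
            rw [mul_pow, mul_pow, Real.sq_sqrt (by norm_num : (0:ℝ) ≤ 2), hδsq]
            field_simp [hB2pos.ne']
          have e : Real.sqrt (β 0) = Real.sqrt 2 * ‖B‖ * δB := by
            rw [← hsq2, Real.sqrt_sq
              (mul_nonneg (mul_nonneg (Real.sqrt_nonneg 2) (norm_nonneg B)) hδpos.le)]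
          have hs2 : Real.sqrt 2 ≤ 1.5 := by
            nlinarith [Real.sq_sqrt (by norm_num : (0:ℝ) ≤ 2), Real.sqrt_nonneg 2]
          have p1 := mul_le_mul_of_nonneg_left hθlin
            (by positivity : (0:ℝ) ≤ 4*Real.sqrt 2*‖B‖)
          have p2 := congrArg (fun z => θ k * (k:ℝ) * z) e
          have p3 := mul_le_mul_of_nonneg_right hs2 (norm_nonneg B)
          have hθknn : 0 ≤ θ k * (k:ℝ) := mul_nonneg (hθpos k).le hknn
          linarith only [p1, p2, p3, norm_nonneg B]
        have hdiv : ENNReal.ofReal (‖B‖ ^ 2) / ENNReal.ofReal (μg * (k : ℝ) ^ 2) = ⊤ := by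
          rw [← hg, zero_mul, ENNReal.ofReal_zero, ENNReal.div_zero]
          exact (ENNReal.ofReal_pos.2 hB2pos).ne'
        rw [hdiv, min_eq_left le_top, ← ENNReal.ofReal_mul (by norm_num : (0:ℝ) ≤ 288)]
        exact ENNReal.ofReal_le_ofReal hbound2
    exact le_trans hmain (mul_le_mul_right le_self_add _)
end

section
/- Suppose the corrected scheme (conditions (i)–(v)) holds for all k ∈ ℕ with (x₀, v₀) ∈ X × X, the alternative semi-implicit multiplier choice λ̄_{k+1} = λ_k + (α_k/θ_k)(Av_k + Bw_{k+1} − b), parameter recursions θ₀ = 1, θ_{k+1} = θ_k/(1+α_k), γ₀ > 0, γ_{k+1} = (γ_k + α_kμ_f)/(1+α_k), β₀ > 0, β_{k+1} = (β_k + α_kμ_g)/(1+α_k), the initial setting γ₀ = μ_f whenever μ_f > 0 and β₀ = μ_g whenever μ_g > 0, and step sizes determined by (L_f θ_k + ‖A‖²) α_k² = γ_k θ_k. Let (x*, y*, λ*) be a saddle point, E₀ the initial Lyapunov value and R₀ = √(2E₀) + ‖λ₀ − λ*‖ + ‖Ax₀ + By₀ − b‖. Then x_k ∈ X, y_k ∈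 Y for all k ≥ 1 and E_k ≤ θ_k E₀; in particular ‖Ax_k + By_k − b‖ ≤ θ_k R₀ and |f(x_k) + g(y_k) − f(x*) − g(y*)| ≤ θ_k(E₀ + ‖λ*‖R₀). Moreover, if γ₀ ≤ L_f + ‖A‖², then there is an absolute constant C > 0 such that for all k ≥ 1: θ_k ≤ C · min{ ‖A‖/(√γ₀ k) + L_f/(γ₀ k²), ‖A‖²/(μ_f k²) + exp(−(k/4)√(μ_f/L_f)) }, with terms having zero denominator interpreted as +∞. -/
set_option maxHeartbeats 1600000
open Real
open scoped RealInnerProductSpace ENNReal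

section helpers
variable {E : Type*} [NormedAddCommGroup E] [InnerProductSpace ℝ E]

lemma two_inner_eq (a b c : E) :
    2 * ⟪a - b, a - c⟫ = ‖a - b‖ ^ 2 + ‖a - c‖ ^ 2 - ‖b - c‖ ^ 2 := by
  have h : ‖b - c‖ ^ 2 = ‖(a - c) - (a - b)‖ ^ 2 := by rw [show (a-c)-(a-b) = b - c by abel]
  rw [h, norm_sub_sq_real (a-c) (a-b), real_inner_comm]
  ring

lemma two_inner_eq' (a b c : E) :
    2 * ⟪a - b, b - c⟫ = ‖a - c‖ ^ 2 - ‖a - b‖ ^ 2 - ‖b - c‖ ^ 2 := by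
  have h := two_inner_eq a b c
  have h2 : ⟪a - b, b - c⟫ = ⟪a - b, a - c⟫ - ⟪a-b, a-b⟫ := by
    rw [show b - c = (a - c) - (a - b) by abel, inner_sub_right]
  rw [real_inner_self_eq_norm_sq] at h2
  linarith

lemma inner_right_comb3 (p : E) (c1 c2 c3 : ℝ) (a1 a2 a3 : E)
    (h : c1 • a1 = c2 • a2 + c3 • a3) :
    c1 * ⟪p, a1⟫ = c2 * ⟪p, a2⟫ + c3 * ⟪p, a3⟫ := by
  have hk := congrArg (fun z : E => ⟪p, z⟫) h
  simpa only [inner_add_right, real_inner_smul_right] using hk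

lemma inner_right_comb4 (p : E) (c1 c2 c3 c4 : ℝ) (a1 a2 a3 a4 : E)
    (h : c1 • a1 = c2 • a2 + c3 • a3 + c4 • a4) :
    c1 * ⟪p, a1⟫ = c2 * ⟪p, a2⟫ + c3 * ⟪p, a3⟫ + c4 * ⟪p, a4⟫ := by
  have hk := congrArg (fun z : E => ⟪p, z⟫) h
  simpa only [inner_add_right, real_inner_smul_right] using hk

lemma inner_left_comb4 (d : E) (c1 c2 c3 c4 c5 : ℝ) (a1 a2 a3 a4 a5 : E)
    (h : c1 • a1 = c2 • a2 + c3 • a3 + c4 • a4 + c5 • a5) :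
    c1 * ⟪a1, d⟫ = c2 * ⟪a2, d⟫ + c3 * ⟪a3, d⟫ + c4 * ⟪a4, d⟫ + c5 * ⟪a5, d⟫ := by
  have hk := congrArg (fun z : E => ⟪z, d⟫) h
  simpa only [inner_add_left, real_inner_smul_left] using hk

lemma inner_left_comb2 (d : E) (c1 c2 : ℝ) (a1 a2 : E)
    (h : c1 • a1 = c2 • a2) :
    c1 * ⟪a1, d⟫ = c2 * ⟪a2, d⟫ := by
  have hk := congrArg (fun z : E => ⟪z, d⟫) h
  simpa only [real_inner_smul_left] using hk

lemma smul_norm_eq {c d : ℝ} (hc : 0 ≤ c) (hd : 0 ≤ d) {a b : E}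
    (h : c • a = d • b) : c * ‖a‖ = d * ‖b‖ := by
  have := congrArg norm h
  simpa only [norm_smul, Real.norm_eq_abs, abs_of_nonneg hc, abs_of_nonneg hd] using this

lemma inner_le_half (a b : E) : ⟪a, b⟫ ≤ (‖a‖^2 + ‖b‖^2)/2 := by
  nlinarith [real_inner_le_norm a b, sq_nonneg (‖a‖ - ‖b‖)]

end helpers

section onestep
variable {E F G : Type*} [NormedAddCommGroup E] [InnerProductSpace ℝ E] [CompleteSpace E]
  [NormedAddCommGroup F] [InnerProductSpace ℝ F] [CompleteSpace F]
  [NormedAddCommGroup G] [InnerProductSpace ℝ G] [CompleteSpace G]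

lemma onestep
    (A : E →L[ℝ] G) (B : F →L[ℝ] G) (b : G)
    (f₁ f₂ : E → ℝ) (g : F → ℝ) (f₁' : E → E)
    (α θ γ β μf μg Lf : ℝ)
    (hα : 0 < α) (hθ : 0 < θ) (hβ : 0 ≤ β) (hμf : 0 ≤ μf) (hμg : 0 ≤ μg) (hLf : 0 ≤ Lf)
    (xk vk u xp vp s xs : E) (yk yp wk wp ys : F) (lk lp lbar ls : G)
    (hu : (1 + α) • u = xk + α • vk)
    (hii : (1 + α) • xp = xk + α • vp)
    (hvv : (1 + α) • yp = yk + α • wp)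
    (hiii : θ • (lp - lk) = α • (A vp + B wp - b))
    (hlb : θ • (lbar - lk) = α • (A vk + B wp - b))
    (hs_eq : (γ / α) • (vp - vk) = μf • (u - vp) - f₁' u - A.adjoint lbar - s)
    (hs_sub : f₂ xs ≥ f₂ vp + ⟪s, xs - vp⟫)
    (hup : f₁ xp - f₁ u - ⟪f₁' u, xp - u⟫ ≤ Lf/2 * ‖xp - u‖^2)
    (hlok : μf/2 * ‖xk - u‖^2 ≤ f₁ xk - f₁ u - ⟪f₁' u, xk - u⟫)
    (hlos : μf/2 * ‖xs - u‖^2 ≤ f₁ xs - f₁ u - ⟪f₁' u, xs - u⟫)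
    (hf2 : (1 + α) * f₂ xp ≤ f₂ xk + α * f₂ vp)
    (hivk : g yk + ⟪lbar, B yk⟫ ≥ g yp + ⟪lbar, B yp⟫
        + ⟪μg • (yp - wp) - (β/α) • (wp - wk), yk - yp⟫ + μg/2 * ‖yk - yp‖^2)
    (hivs : g ys + ⟪lbar, B ys⟫ ≥ g yp + ⟪lbar, B yp⟫
        + ⟪μg • (yp - wp) - (β/α) • (wp - wk), ys - yp⟫ + μg/2 * ‖ys - yp‖^2)
    (hfeas : A xs + B ys = b)
    (hstep : (Lf * θ + ‖A‖^2) * α^2 = γ * θ) :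
    (1+α) * (f₁ xp + f₂ xp + g yp + ⟪ls, A xp + B yp - b⟫)
      + (γ + α*μf)/2 * ‖vp - xs‖^2 + (β + α*μg)/2 * ‖wp - ys‖^2 + θ/2 * ‖lp - ls‖^2
    ≤ f₁ xk + f₂ xk + g yk + ⟪ls, A xk + B yk - b⟫ + α * (f₁ xs + f₂ xs + g ys)
      + γ/2 * ‖vk - xs‖^2 + β/2 * ‖wk - ys‖^2 + θ/2 * ‖lk - ls‖^2 := by
  have h1p : (0:ℝ) < 1 + α := by linarith
  -- ============ X BLOCK ============
  have hvec1 : (1+α) • (xp - u) = α • (vp - vk) := by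
    rw [smul_sub ((1:ℝ)+α) xp u, hii, hu]; module
  have hnorm1 : (1+α) * ‖xp - u‖ = α * ‖vp - vk‖ := smul_norm_eq h1p.le hα.le hvec1
  have hsq0 : ((1+α) * ‖xp - u‖)^2 = (α * ‖vp - vk‖)^2 := by rw [hnorm1]
  have hsq1 : (Lf/2) * ((1+α)^2 * ‖xp - u‖^2) = Lf*α^2/2 * ‖vp - vk‖^2 := by
    linear_combination (Lf/2) * hsq0
  have c2 : (1+α) * (Lf/2 * ‖xp - u‖^2) ≤ Lf*α^2/2 * ‖vp - vk‖^2 := by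
    have nn1 : 0 ≤ Lf * α * ‖xp - u‖^2 := by positivity
    have nn2 : 0 ≤ Lf * α^2 * ‖xp - u‖^2 := by positivity
    linarith [hsq1, nn1, nn2]
  have hup' : (1+α) * (f₁ xp - f₁ u - ⟪f₁' u, xp - u⟫) ≤ (1+α) * (Lf/2 * ‖xp - u‖^2) :=
    mul_le_mul_of_nonneg_left hup h1p.le
  have hlos' : α * (μf/2 * ‖xs - u‖^2) ≤ α * (f₁ xs - f₁ u - ⟪f₁' u, xs - u⟫) :=
    mul_le_mul_of_nonneg_left hlos hα.le
  have hvec2 : α • (vp - xs) = (1+α) • (xp - u) + (-1 : ℝ) • (xk - u) + (-α) • (xs - u) := by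
    rw [smul_sub ((1:ℝ)+α) xp u, hii]; module
  have c5 := inner_right_comb4 (f₁' u) α (1+α) (-1) (-α) (vp - xs) (xp-u) (xk-u) (xs-u) hvec2
  -- f₂ part
  have x7 : α * (f₂ vp - f₂ xs) ≤ α * ⟪s, vp - xs⟫ := by
    have h' : f₂ vp - f₂ xs ≤ ⟪s, vp - xs⟫ := by
      have := hs_sub
      rw [show xs - vp = -(vp - xs) by abel, inner_neg_right] at this
      linarith
    exact mul_le_mul_of_nonneg_left h' hα.le
  have hs_eq' : (γ/α) • (vp - vk)
      = μf • (u - vp) + (-1:ℝ) • (f₁' u) + (-1:ℝ) • (A.adjoint lbar) + (-1:ℝ) • s := by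
    rw [hs_eq]; module
  have x8 : γ * ⟪vp - vk, vp - xs⟫
      = α*μf * ⟪u - vp, vp - xs⟫ - α * ⟪f₁' u, vp - xs⟫
        - α * ⟪lbar, A (vp - xs)⟫ - α * ⟪s, vp - xs⟫ := by
    have h := inner_left_comb4 (vp - xs) (γ/α) μf (-1) (-1) (-1)
      (vp - vk) (u - vp) (f₁' u) (A.adjoint lbar) s hs_eq'
    rw [ContinuousLinearMap.adjoint_inner_left] at h
    have hζ : α * (γ/α) = γ := by field_simp
    linear_combination α * h - (⟪vp - vk, vp - xs⟫ : ℝ) * hζ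
  have x9 : γ * ⟪vp - vk, vp - xs⟫
      = γ/2 * (‖vp - vk‖^2 + ‖vp - xs‖^2 - ‖vk - xs‖^2) := by
    linear_combination (γ/2) * two_inner_eq vp vk xs
  have x10 : α*μf * ⟪u - vp, vp - xs⟫
      = α*μf/2 * (‖u - xs‖^2 - ‖u - vp‖^2 - ‖vp - xs‖^2) := by
    linear_combination (α*μf/2) * two_inner_eq' u vp xs
  have x11 : α * (μf/2 * ‖xs - u‖^2) = α*μf/2 * ‖u - xs‖^2 := by
    rw [norm_sub_rev xs u]; ring
  have nnx1 : 0 ≤ μf/2 * ‖xk - u‖^2 := by positivity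
  have nnx2 : 0 ≤ α*μf/2 * ‖u - vp‖^2 := by positivity
  have Bx : (1+α) * (f₁ xp + f₂ xp) + (γ + α*μf)/2 * ‖vp - xs‖^2
      ≤ f₁ xk + f₂ xk + α * (f₁ xs + f₂ xs) + γ/2 * ‖vk - xs‖^2
        + (Lf*α^2/2 - γ/2) * ‖vp - vk‖^2 - α * ⟪lbar, A (vp - xs)⟫ := by
    linarith [hup', c2, hlok, hlos', c5, hf2, x7, x8, x9, x10, x11, nnx1, nnx2]
  -- ============ Y BLOCK ============
  have g1 : ⟪μg • (yp - wp) - (β/α) • (wp - wk), yk - yp⟫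
      = μg * ⟪yp - wp, yk - yp⟫ - (β/α) * ⟪wp - wk, yk - yp⟫ := by
    rw [inner_sub_left, real_inner_smul_left, real_inner_smul_left]
  have g2 : α * ⟪μg • (yp - wp) - (β/α) • (wp - wk), ys - yp⟫
      = α*μg * ⟪yp - wp, ys - yp⟫ - α*(β/α) * ⟪wp - wk, ys - yp⟫ := by
    rw [inner_sub_left, real_inner_smul_left, real_inner_smul_left]; ring
  have hvecY : (-α) • (wp - ys) = (1:ℝ) • (yk - yp) + α • (ys - yp) := by
    have hd : ((1:ℝ) • (yk - yp) + α • (ys - yp)) - (-α) • (wp - ys)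
        = (yk + α • wp) - (1+α) • yp := by module
    rw [← hvv, sub_self] at hd
    exact (sub_eq_zero.mp hd).symm
  have g3a0 := inner_right_comb3 (yp - wp) (-α) 1 α (wp - ys) (yk - yp) (ys - yp) hvecY
  have g3b0 := inner_right_comb3 (wp - wk) (-α) 1 α (wp - ys) (yk - yp) (ys - yp) hvecY
  have g3a : -(α*μg) * ⟪yp - wp, wp - ys⟫
      = μg * ⟪yp - wp, yk - yp⟫ + α*μg * ⟪yp - wp, ys - yp⟫ := by
    linear_combination μg * g3a0
  have g3b : -(α*(β/α)) * ⟪wp - wk, wp - ys⟫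
      = (β/α) * ⟪wp - wk, yk - yp⟫ + α*(β/α) * ⟪wp - wk, ys - yp⟫ := by
    linear_combination (β/α) * g3b0
  have hβα : α * (β/α) = β := by field_simp
  have g4 : α*(β/α) * ⟪wp - wk, wp - ys⟫ = β * ⟪wp - wk, wp - ys⟫ := by
    rw [hβα]
  have g2' : α*(β/α) * ⟪wp - wk, ys - yp⟫ = β * ⟪wp - wk, ys - yp⟫ := by
    linear_combination (⟪wp - wk, ys - yp⟫ : ℝ) * hβα
  have g1' : α * ((β/α) * ⟪wp - wk, yk - yp⟫) = β * ⟪wp - wk, yk - yp⟫ := by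
    linear_combination (⟪wp - wk, yk - yp⟫ : ℝ) * hβα
  have g5 : β * ⟪wp - wk, wp - ys⟫
      = β/2 * (‖wp - wk‖^2 + ‖wp - ys‖^2 - ‖wk - ys‖^2) := by
    linear_combination (β/2) * two_inner_eq wp wk ys
  have g6 : α*μg * ⟪yp - wp, wp - ys⟫
      = α*μg/2 * (‖yp - ys‖^2 - ‖yp - wp‖^2 - ‖wp - ys‖^2) := by
    linear_combination (α*μg/2) * two_inner_eq' yp wp ys
  have g7 : α * (μg/2 * ‖ys - yp‖^2) = α*μg/2 * ‖yp - ys‖^2 := by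
    rw [norm_sub_rev ys yp]; ring
  have hB : (1+α) • (B yp) = B yk + α • (B wp) := by
    have h := congrArg B hvv
    simpa only [map_add, map_smul] using h
  have hvecYB : (-α) • (B wp - B ys) = (1:ℝ) • (B yk) + α • (B ys) + (-(1+α)) • (B yp) := by
    rw [show (-(1+α)) • (B yp) = -((1+α) • (B yp)) by module, hB]; module
  have g8 := inner_right_comb4 lbar (-α) 1 α (-(1+α)) (B wp - B ys) (B yk) (B ys) (B yp) hvecYB
  have br : α * ⟪lbar, B (wp - ys)⟫ = α * ⟪lbar, B wp - B ys⟫ := by rw [map_sub]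
  have d2 := mul_le_mul_of_nonneg_left hivs hα.le
  have nny1 : 0 ≤ μg/2 * ‖yk - yp‖^2 := by positivity
  have nny2 : 0 ≤ α*μg/2 * ‖yp - wp‖^2 := by positivity
  have nny3 : 0 ≤ β/2 * ‖wp - wk‖^2 := by positivity
  have By : (1+α) * g yp + (β + α*μg)/2 * ‖wp - ys‖^2
      ≤ g yk + α * g ys + β/2 * ‖wk - ys‖^2 - α * ⟪lbar, B (wp - ys)⟫ := by
    linarith [hivk, d2, g1, g2, g3a, g3b, g4, g5, g6, g7, g8, br, nny1, nny2, nny3]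
  -- ============ LAMBDA BLOCK ============
  have hA' : (1+α) • (A xp) = A xk + α • (A vp) := by
    have h := congrArg A hii
    simpa only [map_add, map_smul] using h
  have hGvec : (1+α) • (A xp + B yp - b) = (1:ℝ) • (A xk + B yk - b) + α • (A vp + B wp - b) := by
    rw [smul_sub, smul_add, hA', hB]; module
  have f1 := inner_right_comb3 ls (1+α) 1 α (A xp + B yp - b) (A xk + B yk - b)
    (A vp + B wp - b) hGvec
  have f2 : θ/2 * ‖lp - ls‖^2 - θ/2 * ‖lk - ls‖^2
      = θ * ⟪lp - lk, lp - ls⟫ - θ/2 * ‖lp - lk‖^2 := by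
    linear_combination (-(θ/2)) * two_inner_eq lp lk ls
  have f3 := inner_left_comb2 (lp - ls) θ α (lp - lk) (A vp + B wp - b) hiii
  have f4 : α * ⟪A vp + B wp - b, lp - ls⟫ + α * ⟪ls, A vp + B wp - b⟫
      - α * ⟪lbar, A vp + B wp - b⟫ = α * ⟪lp - lbar, A vp + B wp - b⟫ := by
    have e : ⟪A vp + B wp - b, lp - ls⟫ + ⟪ls, A vp + B wp - b⟫
        - ⟪lbar, A vp + B wp - b⟫ = ⟪lp - lbar, A vp + B wp - b⟫ := by
      rw [real_inner_comm (lp - ls) (A vp + B wp - b), inner_sub_left, inner_sub_left]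
      ring
    linear_combination α * e
  have hh : A vp + B wp - b = A (vp - xs) + B (wp - ys) := by
    rw [map_sub, map_sub, ← hfeas]; abel
  have f5 : α * ⟪lbar, A vp + B wp - b⟫
      = α * ⟪lbar, A (vp - xs)⟫ + α * ⟪lbar, B (wp - ys)⟫ := by
    rw [hh, inner_add_right]; ring
  -- Young step
  have hdvec : θ • (lp - lbar) = α • (A vp - A vk) := by
    have hd : θ • (lp - lbar) - (θ • (lp - lk) - θ • (lbar - lk)) = 0 := by module
    rw [hiii, hlb] at hd
    have : θ • (lp - lbar) = α • (A vp + B wp - b) - α • (A vk + B wp - b) := by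
      rwa [sub_eq_zero] at hd
    rw [this]; module
  have e1 := inner_left_comb2 (A vp + B wp - b) θ α (lp - lbar) (A vp - A vk) hdvec
  have e2 : θ * ‖lp - lk‖ = α * ‖A vp + B wp - b‖ := smul_norm_eq hθ.le hα.le hiii
  have e2sq0 : (θ * ‖lp - lk‖)^2 = (α * ‖A vp + B wp - b‖)^2 := by rw [e2]
  have e2sq : θ^2 * ‖lp - lk‖^2 = α^2 * ‖A vp + B wp - b‖^2 := by linear_combination e2sq0
  have e3 : 2 * ⟪A vp - A vk, A vp + B wp - b⟫
      ≤ ‖A vp - A vk‖^2 + ‖A vp + B wp - b‖^2 := by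
    have := inner_le_half (A vp - A vk) (A vp + B wp - b)
    linarith
  have e4 : ‖A vp - A vk‖ ≤ ‖A‖ * ‖vp - vk‖ := by
    rw [← map_sub]; exact A.le_opNorm _
  have e4sq : ‖A vp - A vk‖^2 ≤ ‖A‖^2 * ‖vp - vk‖^2 := by
    calc ‖A vp - A vk‖^2 ≤ (‖A‖ * ‖vp - vk‖)^2 := by
          exact pow_le_pow_left₀ (norm_nonneg _) e4 2
      _ = ‖A‖^2 * ‖vp - vk‖^2 := by ring
  have e3' := mul_le_mul_of_nonneg_left e3 (sq_nonneg α)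
  have e4sq' := mul_le_mul_of_nonneg_left e4sq (sq_nonneg α)
  have hsn : θ * γ * ‖vp - vk‖^2 - θ * (Lf * α^2) * ‖vp - vk‖^2
      = ‖A‖^2 * α^2 * ‖vp - vk‖^2 := by
    linear_combination (-‖vp - vk‖^2) * hstep
  have e1' : 2 * θ * (α * ⟪lp - lbar, A vp + B wp - b⟫)
      = 2 * α^2 * ⟪A vp - A vk, A vp + B wp - b⟫ := by
    linear_combination 2 * α * e1
  have goal' : 2*θ * (α * ⟪lp - lbar, A vp + B wp - b⟫)
      ≤ 2*θ * (θ/2 * ‖lp - lk‖^2 + (γ/2 - Lf*α^2/2) * ‖vp - vk‖^2) := by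
    linarith [e1', e3', e4sq', e2sq, hsn]
  have hYoung : α * ⟪lp - lbar, A vp + B wp - b⟫
      ≤ θ/2 * ‖lp - lk‖^2 + (γ/2 - Lf*α^2/2) * ‖vp - vk‖^2 := by
    have h2θ : (0:ℝ) < 2*θ := by linarith
    exact (mul_le_mul_iff_right₀ h2θ).mp goal'
  have Bl : (1+α) * ⟪ls, A xp + B yp - b⟫ + θ/2 * ‖lp - ls‖^2
      ≤ ⟪ls, A xk + B yk - b⟫ + θ/2 * ‖lk - ls‖^2
        + α * ⟪lbar, A (vp - xs)⟫ + α * ⟪lbar, B (wp - ys)⟫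
        + (γ/2 - Lf*α^2/2) * ‖vp - vk‖^2 := by
    linarith [f1, f2, f3, f4, f5, hYoung]
  -- ============ COMBINE ============
  linarith [Bx, By, Bl]

end onestep

section rates

-- basic facts about the theta recursion
lemma theta_le_one (θ α : ℕ → ℝ) (hθ0 : θ 0 = 1) (hα : ∀ k, 0 < α k)
    (hθpos : ∀ k, 0 < θ k) (hθrec : ∀ k, θ (k+1) = θ k / (1 + α k)) :
    ∀ k, θ k ≤ 1 := by
  intro k
  induction k with
  | zero => rw [hθ0]
  | succ n ih =>
    rw [hθrec n]
    exact le_trans (div_le_self (hθpos n).le (by linarith [hα n])) ih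

lemma theta_anti (θ α : ℕ → ℝ) (hα : ∀ k, 0 < α k)
    (hθpos : ∀ k, 0 < θ k) (hθrec : ∀ k, θ (k+1) = θ k / (1 + α k)) :
    ∀ i j, i ≤ j → θ j ≤ θ i := by
  intro i j hij
  induction j with
  | zero => simp_all
  | succ n ih =>
    rcases Nat.lt_or_ge i (n+1) with h | h
    · have h' : i ≤ n := Nat.lt_succ_iff.mp h
      have : θ (n+1) ≤ θ n := by
        rw [hθrec n]
        exact div_le_self (hθpos n).le (by linarith [hα n])
      exact le_trans this (ih h')
    · have : i = n + 1 := le_antisymm hij h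
      simp [this]


lemma rate1 (θ α γ : ℕ → ℝ) (a Lf γ0 : ℝ) (ha : 0 ≤ a) (hLf : 0 < Lf) (hγ0 : 0 < γ0)
    (hθ0 : θ 0 = 1) (hα : ∀ k, 0 < α k) (hθpos : ∀ k, 0 < θ k)
    (hθrec : ∀ k, θ (k+1) = θ k / (1 + α k))
    (hγlb : ∀ k, γ0 * θ k ≤ γ k)
    (hγub : ∀ k, γ k ≤ Lf + a^2)
    (hstep : ∀ k, (Lf * θ k + a^2) * α k^2 = γ k * θ k) :
    ∀ k : ℕ, 1 ≤ k → θ k ≤ 64 * (a / (Real.sqrt γ0 * k) + Lf / (γ0 * k^2)) := by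
  have hθ1 := theta_le_one θ α hθ0 hα hθpos hθrec
  set ψ : ℕ → ℝ := fun k => Real.sqrt (1/θ k) with hψdef
  have hψpos : ∀ k, 0 < ψ k := by
    intro k; have := hθpos k
    exact Real.sqrt_pos.mpr (by positivity)
  have hψsq : ∀ k, ψ k^2 = 1/θ k := by
    intro k; have := hθpos k
    exact Real.sq_sqrt (by positivity)
  have hθψ : ∀ k, θ k * ψ k^2 = 1 := by
    intro k; have := hθpos k; rw [hψsq k]; field_simp
  have hψrec : ∀ k, ψ (k+1) = ψ k * Real.sqrt (1 + α k) := by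
    intro k
    have hθk := hθpos k
    have hαk := hα k
    have h1 : (1:ℝ)/θ (k+1) = (1/θ k) * (1 + α k) := by
      rw [hθrec k]; field_simp
    show Real.sqrt (1/θ (k+1)) = Real.sqrt (1/θ k) * Real.sqrt (1 + α k)
    rw [h1, Real.sqrt_mul (by positivity)]
  have hαle1 : ∀ k, α k ≤ 1 := by
    intro k
    have hθk := hθpos k
    have hαk := hα k
    have h1 : (Lf * θ k + a^2) * α k^2 ≤ (Lf * θ k + a^2) * 1 := by
      rw [hstep k]
      nlinarith [hγub k, hθ1 k, sq_nonneg a]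
    have h2 : α k^2 ≤ 1 := by
      have hpos : 0 < Lf * θ k + a^2 := by positivity
      nlinarith [h1]
    nlinarith [h2, hαk]
  have hψmono : ∀ k, ψ k * (1 + α k/4) ≤ ψ (k+1) := by
    intro k
    rw [hψrec k]
    have hαk := hα k
    have h1 : (1 + α k/4) ≤ Real.sqrt (1 + α k) := by
      have h2 : ((1:ℝ) + α k/4)^2 ≤ 1 + α k := by nlinarith [hαle1 k, hαk]
      calc (1:ℝ) + α k/4 = Real.sqrt ((1 + α k/4)^2) := by
            rw [Real.sqrt_sq (by linarith)]
        _ ≤ Real.sqrt (1 + α k) := Real.sqrt_le_sqrt h2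
    exact mul_le_mul_of_nonneg_left h1 (hψpos k).le
  have key : ∀ k, Real.sqrt γ0 / 4 ≤ (ψ (k+1) - ψ k) * (Real.sqrt Lf + a * ψ k) := by
    intro k
    have hαk := hα k
    have hθk := hθpos k
    have hψk := hψpos k
    have E1 : (α k * ψ k)^2 * (Lf*θ k + a^2) = γ k := by
      have h2 : (α k * ψ k)^2 * (Lf*θ k + a^2) * θ k = γ k * θ k := by
        have h3 : (α k * ψ k)^2 * (Lf*θ k + a^2) * θ k
            = ((Lf * θ k + a^2) * α k^2) * (θ k * ψ k^2) := by ring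
        rw [h3, hθψ k, hstep k]; ring
      exact mul_right_cancel₀ hθk.ne' h2
    -- (α ψ)(√Lf + aψ) ≥ √γ0
    have hs_nonneg : 0 ≤ Real.sqrt Lf + a * ψ k := by positivity
    have ht_nonneg : 0 ≤ α k * ψ k := by positivity
    have E2 : Lf + a^2 * ψ k^2 ≤ (Real.sqrt Lf + a * ψ k)^2 := by
      nlinarith [Real.sq_sqrt hLf.le, mul_nonneg (mul_nonneg (Real.sqrt_nonneg Lf) ha) hψk.le]
    have E3 : γ0 ≤ (α k * ψ k)^2 * (Lf + a^2 * ψ k^2) := by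
      have h4 : (α k * ψ k)^2 * (Lf + a^2 * ψ k^2) = γ k * ψ k^2 := by
        have h5 : Lf + a^2 * ψ k^2 = (Lf * θ k + a^2) * ψ k^2 := by
          have := hθψ k; nlinarith [this]
        rw [h5, ← E1]; ring
      rw [h4]
      have h6 : γ0 * (θ k * ψ k^2) ≤ γ k * ψ k^2 := by
        rw [show γ0 * (θ k * ψ k^2) = (γ0 * θ k) * ψ k^2 by ring]
        exact mul_le_mul_of_nonneg_right (hγlb k) (sq_nonneg _)
      rw [hθψ k] at h6; linarith
    have E4 : γ0 ≤ ((α k * ψ k) * (Real.sqrt Lf + a * ψ k))^2 := by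
      calc γ0 ≤ (α k * ψ k)^2 * (Lf + a^2 * ψ k^2) := E3
        _ ≤ (α k * ψ k)^2 * (Real.sqrt Lf + a * ψ k)^2 :=
            mul_le_mul_of_nonneg_left E2 (sq_nonneg _)
        _ = ((α k * ψ k) * (Real.sqrt Lf + a * ψ k))^2 := by ring
    have E5 : Real.sqrt γ0 ≤ (α k * ψ k) * (Real.sqrt Lf + a * ψ k) := by
      calc Real.sqrt γ0 ≤ Real.sqrt (((α k * ψ k) * (Real.sqrt Lf + a * ψ k))^2) :=
            Real.sqrt_le_sqrt E4
        _ = (α k * ψ k) * (Real.sqrt Lf + a * ψ k) :=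
            Real.sqrt_sq (mul_nonneg ht_nonneg hs_nonneg)
    have E6 : α k * ψ k / 4 ≤ ψ (k+1) - ψ k := by
      have := hψmono k; nlinarith [hψpos k]
    calc Real.sqrt γ0 / 4 ≤ (α k * ψ k / 4) * (Real.sqrt Lf + a * ψ k) := by
          nlinarith [E5]
      _ ≤ (ψ (k+1) - ψ k) * (Real.sqrt Lf + a * ψ k) :=
          mul_le_mul_of_nonneg_right E6 hs_nonneg
  -- telescoping functional
  have tele : ∀ k : ℕ, (k:ℝ) * Real.sqrt γ0 / 4
      ≤ Real.sqrt Lf * ψ k + a * ψ k^2 / 2 := by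
    intro k
    induction k with
    | zero => simp; positivity
    | succ n ih =>
      have hk := key n
      have hmono : ψ n ≤ ψ (n+1) := by
        have := hψmono n; nlinarith [hψpos n, hα n]
      have hstep2 : Real.sqrt Lf * ψ n + a * ψ n^2/2 + Real.sqrt γ0 / 4
          ≤ Real.sqrt Lf * ψ (n+1) + a * ψ (n+1)^2/2 := by
        nlinarith [mul_nonneg ha (sq_nonneg (ψ (n+1) - ψ n))]
      push_cast
      linarith
  -- conclude
  intro k hk
  have hψk := hψpos k
  have hθk := hθpos k
  have hkpos : (0:ℝ) < (k:ℝ) := by exact_mod_cast hk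
  have hsum := tele k
  have hterm1 : 0 ≤ a / (Real.sqrt γ0 * k) := by positivity
  have hterm2 : 0 ≤ Lf / (γ0 * k^2) := by positivity
  rcases le_or_gt ((k:ℝ) * Real.sqrt γ0 / 8) (Real.sqrt Lf * ψ k) with h1 | h1
  · -- Lf-dominant case : θ k ≤ 64 Lf/(γ0 k²)
    have h2 : ((k:ℝ) * Real.sqrt γ0)^2 ≤ (8 * (Real.sqrt Lf * ψ k))^2 := by
      have h0 : 0 ≤ (k:ℝ) * Real.sqrt γ0 := by positivity
      nlinarith [h1]
    have h3 : (k:ℝ)^2 * γ0 ≤ 64 * Lf * ψ k^2 := by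
      have e1 : ((k:ℝ) * Real.sqrt γ0)^2 = (k:ℝ)^2 * γ0 := by
        rw [mul_pow, Real.sq_sqrt hγ0.le]
      have e2 : (8 * (Real.sqrt Lf * ψ k))^2 = 64 * Lf * ψ k^2 := by
        rw [mul_pow, mul_pow, Real.sq_sqrt hLf.le]; ring
      rw [e1, e2] at h2; exact h2
    have h4 : θ k * ((k:ℝ)^2 * γ0) ≤ 64 * Lf := by
      calc θ k * ((k:ℝ)^2 * γ0) ≤ θ k * (64 * Lf * ψ k^2) :=
            mul_le_mul_of_nonneg_left h3 hθk.le
        _ = 64 * Lf * (θ k * ψ k^2) := by ring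
        _ = 64 * Lf := by rw [hθψ k]; ring
    have h5 : θ k ≤ 64 * (Lf / (γ0 * k^2)) := by
      rw [show (64:ℝ) * (Lf / (γ0 * k^2)) = 64*Lf/(γ0 * k^2) by ring,
        le_div_iff₀ (by positivity)]
      nlinarith [h4]
    linarith
  · -- a-dominant case
    have h2 : (k:ℝ) * Real.sqrt γ0 / 8 ≤ a * ψ k^2 / 2 := by linarith
    have h4 : θ k * ((k:ℝ) * Real.sqrt γ0) ≤ 4 * a := by
      calc θ k * ((k:ℝ) * Real.sqrt γ0) ≤ θ k * (4 * (a * ψ k^2)) := by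
            apply mul_le_mul_of_nonneg_left _ hθk.le
            linarith
        _ = 4 * a * (θ k * ψ k^2) := by ring
        _ = 4 * a := by rw [hθψ k]; ring
    have h5 : θ k ≤ 64 * (a / (Real.sqrt γ0 * k)) := by
      have hsγ : 0 < Real.sqrt γ0 := Real.sqrt_pos.mpr hγ0
      rw [show (64:ℝ) * (a / (Real.sqrt γ0 * k)) = 64*a/(Real.sqrt γ0 * k) by ring,
        le_div_iff₀ (mul_pos hsγ hkpos)]
      nlinarith [h4]
    linarith

lemma rate2 (θ α : ℕ → ℝ) (a Lf μf : ℝ) (ha : 0 ≤ a) (hLf : 0 < Lf) (hμf : 0 < μf)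
    (hμfLf : μf ≤ Lf)
    (hθ0 : θ 0 = 1) (hα : ∀ k, 0 < α k) (hθpos : ∀ k, 0 < θ k)
    (hθrec : ∀ k, θ (k+1) = θ k / (1 + α k))
    (hstep : ∀ k, (Lf * θ k + a^2) * α k^2 = μf * θ k) :
    ∀ k : ℕ, 1 ≤ k → θ k ≤ 1024 * a^2 / (μf * k^2) ∨
      θ k ≤ Real.exp (-((k:ℝ)/4) * Real.sqrt (μf/Lf)) := by
  have hθ1 := theta_le_one θ α hθ0 hα hθpos hθrec
  set s : ℝ := Real.sqrt (μf/Lf) with hsdef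
  have hs : 0 < s := Real.sqrt_pos.mpr (by positivity)
  have hssq : s^2 = μf/Lf := Real.sq_sqrt (by positivity)
  have hs1 : s ≤ 1 := by
    rw [show (1:ℝ) = Real.sqrt 1 by rw [Real.sqrt_one]]
    apply Real.sqrt_le_sqrt
    rw [div_le_one hLf]; exact hμfLf
  set ψ : ℕ → ℝ := fun k => Real.sqrt (1/θ k) with hψdef
  have hψpos : ∀ k, 0 < ψ k := by
    intro k; have := hθpos k
    exact Real.sqrt_pos.mpr (by positivity)
  have hψsq : ∀ k, ψ k^2 = 1/θ k := by
    intro k; have := hθpos k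
    exact Real.sq_sqrt (by positivity)
  have hθψ : ∀ k, θ k * ψ k^2 = 1 := by
    intro k; have := hθpos k; rw [hψsq k]; field_simp
  have hψrec : ∀ k, ψ (k+1) = ψ k * Real.sqrt (1 + α k) := by
    intro k
    have hθk := hθpos k
    have hαk := hα k
    have h1 : (1:ℝ)/θ (k+1) = (1/θ k) * (1 + α k) := by
      rw [hθrec k]; field_simp
    show Real.sqrt (1/θ (k+1)) = Real.sqrt (1/θ k) * Real.sqrt (1 + α k)
    rw [h1, Real.sqrt_mul (by positivity)]
  have hαle1 : ∀ k, α k ≤ 1 := by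
    intro k
    have hθk := hθpos k
    have hαk := hα k
    have h1 : (Lf * θ k + a^2) * α k^2 ≤ (Lf * θ k + a^2) * 1 := by
      rw [hstep k]
      nlinarith [hθ1 k, sq_nonneg a, mul_pos hLf hθk]
    have h2 : α k^2 ≤ 1 := by
      have hpos : 0 < Lf * θ k + a^2 := by positivity
      nlinarith [h1]
    nlinarith [h2, hαk]
  have hψmono : ∀ k, ψ k * (1 + α k/4) ≤ ψ (k+1) := by
    intro k
    rw [hψrec k]
    have hαk := hα k
    have h1 : (1 + α k/4) ≤ Real.sqrt (1 + α k) := by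
      have h2 : ((1:ℝ) + α k/4)^2 ≤ 1 + α k := by nlinarith [hαle1 k, hαk]
      calc (1:ℝ) + α k/4 = Real.sqrt ((1 + α k/4)^2) := by
            rw [Real.sqrt_sq (by linarith)]
        _ ≤ Real.sqrt (1 + α k) := Real.sqrt_le_sqrt h2
    exact mul_le_mul_of_nonneg_left h1 (hψpos k).le
  -- phase 1 step
  have hph1 : ∀ j, a^2 ≤ Lf * θ j → Real.exp (s/3) ≤ 1 + α j := by
    intro j hcond
    have hθj := hθpos j
    have hαj := hα j
    have hα2 : s^2/2 ≤ α j^2 := by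
      have h1 : (Lf * θ j + a^2) * α j^2 = μf * θ j := hstep j
      have h2 : Lf * θ j + a^2 ≤ 2 * (Lf * θ j) := by linarith
      have h3 : μf * θ j ≤ 2 * (Lf * θ j) * α j^2 := by nlinarith [sq_nonneg (α j)]
      have h4 : μf / Lf / 2 ≤ α j^2 := by
        have h3' : μf * θ j ≤ (2*Lf*α j^2) * θ j := by nlinarith [h3]
        have h5 : μf ≤ 2*Lf*α j^2 := le_of_mul_le_mul_right h3' hθj
        rw [div_div, div_le_iff₀ (by positivity : (0:ℝ) < Lf*2)]
        nlinarith [h5]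
      rw [hssq]; linarith
    have hαlb : 2*s/3 ≤ α j := by
      nlinarith [hα2, hs, hαj]
    have h1 : 1 - s/3 ≤ Real.exp (-(s/3)) := by
      have := Real.add_one_le_exp (-(s/3)); linarith
    have h2 : Real.exp (s/3) * (1 - s/3) ≤ 1 := by
      have h3 := mul_le_mul_of_nonneg_left h1 (Real.exp_pos (s/3)).le
      rwa [← Real.exp_add, show s/3 + -(s/3) = 0 by ring, Real.exp_zero] at h3
    have h3 : Real.exp (s/3) ≤ 1 + 2*s/3 := by
      nlinarith [h2, hs, hs1, Real.exp_pos (s/3)]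
    linarith
  -- phase 1 prefix decay
  have hpre : ∀ K : ℕ, (∀ j, j < K → a^2 ≤ Lf * θ j) →
      θ K ≤ Real.exp (-(K:ℝ)*s/3) := by
    intro K
    induction K with
    | zero => intro _; simp [hθ0]
    | succ n ih =>
      intro hall
      have h1 := ih (fun j hj => hall j (Nat.lt_succ_of_lt hj))
      have h2 := hph1 n (hall n (Nat.lt_succ_self n))
      rw [hθrec n]
      have h3 : θ n / (1 + α n) ≤ Real.exp (-(n:ℝ)*s/3) / Real.exp (s/3) :=
        div_le_div₀ (Real.exp_pos _).le h1 (Real.exp_pos _) h2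
      refine le_trans h3 ?_
      rw [← Real.exp_sub]
      apply le_of_eq
      congr 1
      push_cast
      ring
  -- phase 2 step
  have hph2 : ∀ j, Lf * θ j ≤ a^2 → 0 < a → ψ j + Real.sqrt μf/(8*a) ≤ ψ (j+1) := by
    intro j hcond hapos
    have hθj := hθpos j
    have hαj := hα j
    have hψj := hψpos j
    have E1 : (α j * ψ j)^2 * (Lf*θ j + a^2) = μf := by
      have h2 : (α j * ψ j)^2 * (Lf*θ j + a^2) * θ j = μf * θ j := by
        have h3 : (α j * ψ j)^2 * (Lf*θ j + a^2) * θ j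
            = ((Lf * θ j + a^2) * α j^2) * (θ j * ψ j^2) := by ring
        rw [h3, hθψ j, hstep j]; ring
      exact mul_right_cancel₀ hθj.ne' h2
    have h1 : μf ≤ (α j * ψ j)^2 * (2*a^2) := by
      nlinarith [E1, mul_nonneg (sq_nonneg (α j * ψ j)) (sub_nonneg.mpr hcond)]
    have h2 : Real.sqrt μf ≤ 2*a*(α j * ψ j) := by
      have h3 : μf ≤ (2*a*(α j * ψ j))^2 := by nlinarith [h1]
      calc Real.sqrt μf ≤ Real.sqrt ((2*a*(α j * ψ j))^2) := Real.sqrt_le_sqrt h3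
        _ = 2*a*(α j * ψ j) := Real.sqrt_sq (by positivity)
    have h4 : Real.sqrt μf/(8*a) ≤ α j * ψ j / 4 := by
      rw [div_le_iff₀ (by positivity : (0:ℝ) < 8*a)]
      linarith
    have h5 : α j * ψ j / 4 ≤ ψ (j+1) - ψ j := by
      have := hψmono j; nlinarith [hψj]
    linarith
  -- main case analysis
  intro k hk
  have hkpos : (0:ℝ) < (k:ℝ) := by exact_mod_cast hk
  by_cases hall : ∀ j, j < k → a^2 ≤ Lf * θ j
  · right
    refine le_trans (hpre k hall) (Real.exp_le_exp.mpr ?_)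
    have h0 : 0 ≤ (k:ℝ) * s := by positivity
    nlinarith [h0]
  · push_neg at hall
    obtain ⟨j0, hj0k, hj0⟩ := hall
    have hex : ∃ j, Lf * θ j < a^2 := ⟨j0, hj0⟩
    have hKspec : Lf * θ (Nat.find hex) < a^2 := Nat.find_spec hex
    set K := Nat.find hex with hKdef
    have hKmin : ∀ j, j < K → a^2 ≤ Lf * θ j := by
      intro j hj
      exact le_of_not_gt (Nat.find_min hex hj)
    have hKk : K < k := lt_of_le_of_lt (Nat.find_min' hex hj0) hj0k
    have hapos : 0 < a := by nlinarith [mul_pos hLf (hθpos K), hKspec]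
    have hQ : ∀ j, K ≤ j → Lf * θ j ≤ a^2 := by
      intro j hj
      have h := theta_anti θ α hα hθpos hθrec K j hj
      nlinarith [hKspec]
    rcases le_or_gt (3*k) (4*K) with hsplit | hsplit
    · right
      have hθK : θ K ≤ Real.exp (-(K:ℝ)*s/3) := hpre K hKmin
      have hθkK := theta_anti θ α hα hθpos hθrec K k hKk.le
      refine le_trans (le_trans hθkK hθK) (Real.exp_le_exp.mpr ?_)
      have hc : (3*(k:ℝ)) ≤ 4*(K:ℝ) := by exact_mod_cast hsplit
      nlinarith [hs.le, hc]
    · left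
      have tele2 : ∀ m : ℕ, ψ K + m * (Real.sqrt μf/(8*a)) ≤ ψ (K + m) := by
        intro m; induction m with
        | zero => simp
        | succ n ih =>
          have hst := hph2 (K+n) (hQ (K+n) (Nat.le_add_right K n)) hapos
          have : ψ K + (n:ℝ) * (Real.sqrt μf/(8*a)) + Real.sqrt μf/(8*a) ≤ ψ (K+n+1) := by
            linarith
          calc ψ K + ((n:ℕ)+1 : ℕ) * (Real.sqrt μf/(8*a))
              = ψ K + (n:ℝ) * (Real.sqrt μf/(8*a)) + Real.sqrt μf/(8*a) := by
                push_cast; ring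
            _ ≤ ψ (K+n+1) := this
            _ = ψ (K + (n+1)) := by rw [← Nat.add_assoc]
      have hm := tele2 (k - K)
      rw [Nat.add_sub_cancel' hKk.le] at hm
      have hcast : ((k - K : ℕ):ℝ) = (k:ℝ) - K := by
        rw [Nat.cast_sub hKk.le]
      rw [hcast] at hm
      have hkK : (k:ℝ)/4 ≤ (k:ℝ) - K := by
        have hc : (4*(K:ℝ)) < 3*(k:ℝ) := by exact_mod_cast hsplit
        linarith
      have hψlb : (k:ℝ) * Real.sqrt μf / (32*a) ≤ ψ k := by
        have h1 : 0 ≤ Real.sqrt μf/(8*a) := by positivity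
        have h2 : ((k:ℝ)/4) * (Real.sqrt μf/(8*a)) ≤ ((k:ℝ) - K) * (Real.sqrt μf/(8*a)) :=
          mul_le_mul_of_nonneg_right hkK h1
        have h3 : ((k:ℝ)/4) * (Real.sqrt μf/(8*a)) = (k:ℝ) * Real.sqrt μf / (32*a) := by
          ring
        linarith [hψpos K, hm, h2]
      -- θ k ≤ 1024 a² / (μf k²)
      have hsq : (k:ℝ)^2 * μf ≤ 1024 * a^2 * ψ k^2 := by
        have h0 : 0 ≤ (k:ℝ) * Real.sqrt μf / (32*a) := by positivity
        have h1 : ((k:ℝ) * Real.sqrt μf / (32*a))^2 ≤ ψ k^2 :=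
          pow_le_pow_left₀ h0 hψlb 2
        have h2 : ((k:ℝ) * Real.sqrt μf / (32*a))^2 = (k:ℝ)^2 * μf / (1024*a^2) := by
          rw [div_pow, mul_pow, Real.sq_sqrt hμf.le]
          congr 1
          ring
        rw [h2] at h1
        rw [div_le_iff₀ (by positivity : (0:ℝ) < 1024*a^2)] at h1
        nlinarith [h1]
      have h4 : θ k * ((k:ℝ)^2 * μf) ≤ 1024 * a^2 := by
        calc θ k * ((k:ℝ)^2 * μf) ≤ θ k * (1024 * a^2 * ψ k^2) :=
              mul_le_mul_of_nonneg_left hsq (hθpos k).le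
          _ = 1024 * a^2 * (θ k * ψ k^2) := by ring
          _ = 1024 * a^2 := by rw [hθψ k]; ring
      rw [le_div_iff₀ (by positivity : (0:ℝ) < μf * k^2)]
      nlinarith [h4]

end rates

section mainhelp
variable {E : Type*} [NormedAddCommGroup E] [InnerProductSpace ℝ E]

lemma convex_mid (S : Set E) (hS : Convex ℝ S) (p q z : E) (c : ℝ) (hc : 0 < c)
    (hp : p ∈ S) (hq : q ∈ S) (hz : (1+c) • z = p + c • q) : z ∈ S := by
  have h1c : (0:ℝ) < 1 + c := by linarith
  have key : (1+c) • ((1/(1+c)) • p + (c/(1+c)) • q) = p + c • q := by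
    rw [smul_add, smul_smul, smul_smul, show (1+c)*(1/(1+c)) = 1 by field_simp,
      show (1+c)*(c/(1+c)) = c by field_simp, one_smul]
  have hzz : (1/(1+c)) • p + (c/(1+c)) • q = z :=
    smul_right_injective E h1c.ne' (key.trans hz.symm)
  have hmem := hS hp hq (by positivity : (0:ℝ) ≤ 1/(1+c)) (by positivity : (0:ℝ) ≤ c/(1+c))
    (by field_simp)
  rwa [hzz] at hmem

lemma convex_comb_ineq (f : E → ℝ) (hf : ConvexOn ℝ Set.univ f) (p q z : E) (c : ℝ)
    (hc : 0 < c) (hz : (1+c) • z = p + c • q) : (1+c) * f z ≤ f p + c * f q := by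
  have h1c : (0:ℝ) < 1 + c := by linarith
  have key : (1+c) • ((1/(1+c)) • p + (c/(1+c)) • q) = p + c • q := by
    rw [smul_add, smul_smul, smul_smul, show (1+c)*(1/(1+c)) = 1 by field_simp,
      show (1+c)*(c/(1+c)) = c by field_simp, one_smul]
  have hzz : (1/(1+c)) • p + (c/(1+c)) • q = z :=
    smul_right_injective E h1c.ne' (key.trans hz.symm)
  have h := hf.2 (Set.mem_univ p) (Set.mem_univ q)
    (by positivity : (0:ℝ) ≤ 1/(1+c)) (by positivity : (0:ℝ) ≤ c/(1+c)) (by field_simp)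
  rw [hzz] at h
  simp only [smul_eq_mul] at h
  have h2 := mul_le_mul_of_nonneg_left h h1c.le
  have heq : (1+c) * (1/(1+c) * f p + c/(1+c) * f q) = f p + c * f q := by
    field_simp
  rw [heq] at h2
  exact h2

end mainhelp

/-- Theorem 4.2: convergence of the corrected scheme with the alternative
semi-implicit multiplier choice `λ̄ₖ₊₁ = λₖ + (αₖ/θₖ)(A vₖ + B wₖ₊₁ − b)` and
step sizes `(L_f θₖ + ‖A‖²) αₖ² = γₖ θₖ`, with the nonergodic mixed-type rate
(zero denominators are interpreted as `+∞` via `ℝ≥0∞` division). -/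
theorem corrected_semi_implicit_lw_convergence :
    ∃ C : ℝ, 0 < C ∧
    ∀ (m n r : ℕ)
      (X : Set (EuclideanSpace ℝ (Fin m))) (Y : Set (EuclideanSpace ℝ (Fin n)))
      (hXconv : Convex ℝ X) (hXclosed : IsClosed X)
      (hYconv : Convex ℝ Y) (hYclosed : IsClosed Y)
      (A : EuclideanSpace ℝ (Fin m) →L[ℝ] EuclideanSpace ℝ (Fin r))
      (B : EuclideanSpace ℝ (Fin n) →L[ℝ] EuclideanSpace ℝ (Fin r))
      (b : EuclideanSpace ℝ (Fin r))
      (f₁ f₂ : EuclideanSpace ℝ (Fin m) → ℝ) (g : EuclideanSpace ℝ (Fin n) → ℝ)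
      (hf₁conv : ConvexOn ℝ Set.univ f₁) (hf₂conv : ConvexOn ℝ Set.univ f₂)
      (hgconv : ConvexOn ℝ Set.univ g)
      (μf μg Lf : ℝ) (hμf : 0 ≤ μf) (hμg : 0 ≤ μg) (hLf : 0 < Lf) (hμfLf : μf ≤ Lf)
      (f₁' : EuclideanSpace ℝ (Fin m) → EuclideanSpace ℝ (Fin m))
      (hf₁' : ∀ z, HasGradientAt f₁ (f₁' z) z)
      (hf₁bounds : ∀ x₁ ∈ X, ∀ x₂ ∈ X,
        μf / 2 * ‖x₁ - x₂‖ ^ 2 ≤ f₁ x₁ - f₁ x₂ - ⟪f₁' x₂, x₁ - x₂⟫ ∧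
        f₁ x₁ - f₁ x₂ - ⟪f₁' x₂, x₁ - x₂⟫ ≤ Lf / 2 * ‖x₁ - x₂‖ ^ 2)
      (α θ γ β : ℕ → ℝ) (hα : ∀ k, 0 < α k)
      (hθ0 : θ 0 = 1) (hγ0pos : 0 < γ 0) (hβ0pos : 0 < β 0)
      (hθrec : ∀ k, θ (k + 1) = θ k / (1 + α k))
      (hγrec : ∀ k, γ (k + 1) = (γ k + α k * μf) / (1 + α k))
      (hβrec : ∀ k, β (k + 1) = (β k + α k * μg) / (1 + α k))
      (hγinit : 0 < μf → γ 0 = μf) (hβinit : 0 < μg → β 0 = μg)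
      (x v u : ℕ → EuclideanSpace ℝ (Fin m)) (y w : ℕ → EuclideanSpace ℝ (Fin n))
      (l lbar : ℕ → EuclideanSpace ℝ (Fin r))
      (hx0 : x 0 ∈ X) (hv0 : v 0 ∈ X) (hy0 : y 0 ∈ Y)
      (hu : ∀ k, u k = (1 + α k)⁻¹ • (x k + α k • v k))
      (hi : ∀ k, v (k + 1) ∈ X ∧ ∃ s : EuclideanSpace ℝ (Fin m),
        (γ k / α k) • (v (k + 1) - v k)
            = μf • (u k - v (k + 1)) - f₁' (u k) - A.adjoint (lbar k) - s ∧
        ∀ z ∈ X, f₂ z ≥ f₂ (v (k + 1)) + ⟪s, z - v (k + 1)⟫)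
      (hii : ∀ k, x (k + 1) - x k = α k • (v (k + 1) - x (k + 1)))
      (hiii : ∀ k, θ k • (l (k + 1) - l k) = α k • (A (v (k + 1)) + B (w (k + 1)) - b))
      (hiv : ∀ k, y (k + 1) ∈ Y ∧ ∀ z ∈ Y,
        g z + ⟪lbar k, B z⟫ ≥
          g (y (k + 1)) + ⟪lbar k, B (y (k + 1))⟫
            + ⟪μg • (y (k + 1) - w (k + 1)) - (β k / α k) • (w (k + 1) - w k),
                z - y (k + 1)⟫
            + μg / 2 * ‖z - y (k + 1)‖ ^ 2)
      (hv : ∀ k, y (k + 1) - y k = α k • (w (k + 1) - y (k + 1)))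
      (hlbar : ∀ k, lbar k = l k + (α k / θ k) • (A (v k) + B (w (k + 1)) - b))
      (hstep : ∀ k, (Lf * θ k + ‖A‖ ^ 2) * α k ^ 2 = γ k * θ k)
      (xs : EuclideanSpace ℝ (Fin m)) (ys : EuclideanSpace ℝ (Fin n))
      (ls : EuclideanSpace ℝ (Fin r))
      (hxs : xs ∈ X) (hys : ys ∈ Y) (hfeas : A xs + B ys = b)
      (hsaddle : ∀ x' ∈ X, ∀ y' ∈ Y,
        f₁ x' + f₂ x' + g y' + ⟪ls, A x' + B y' - b⟫ ≥ f₁ xs + f₂ xs + g ys)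
      (E : ℕ → ℝ)
      (hE : ∀ k, E k = f₁ (x k) + f₂ (x k) + g (y k) + ⟪ls, A (x k) + B (y k) - b⟫
        - f₁ xs - f₂ xs - g ys
        + γ k / 2 * ‖v k - xs‖ ^ 2 + β k / 2 * ‖w k - ys‖ ^ 2 + θ k / 2 * ‖l k - ls‖ ^ 2)
      (R0 : ℝ)
      (hR0 : R0 = Real.sqrt (2 * E 0) + ‖l 0 - ls‖ + ‖A (x 0) + B (y 0) - b‖),
      (∀ k : ℕ, 1 ≤ k → x k ∈ X ∧ y k ∈ Y) ∧
      (∀ k : ℕ,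
        E k ≤ θ k * E 0 ∧
        ‖A (x k) + B (y k) - b‖ ≤ θ k * R0 ∧
        |f₁ (x k) + f₂ (x k) + g (y k) - (f₁ xs + f₂ xs + g ys)|
          ≤ θ k * (E 0 + ‖ls‖ * R0)) ∧
      (γ 0 ≤ Lf + ‖A‖ ^ 2 →
        ∀ k : ℕ, 1 ≤ k →
          ENNReal.ofReal (θ k) ≤ ENNReal.ofReal C * (min (ENNReal.ofReal (‖A‖ / (Real.sqrt (γ 0) * (k : ℝ)) + Lf / (γ 0 * (k : ℝ) ^ 2)))
                 (ENNReal.ofReal (‖A‖ ^ 2) / ENNReal.ofReal (μf * (k : ℝ) ^ 2)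
                   + ENNReal.ofReal (Real.exp (-((k : ℝ) / 4) * Real.sqrt (μf / Lf)))))) := by
  use 2048
  refine ⟨by norm_num, ?_⟩
  intro m n r X Y hXconv hXclosed hYconv hYclosed A B b f₁ f₂ g hf₁conv hf₂conv hgconv
    μf μg Lf hμf hμg hLf hμfLf f₁' hf₁' hf₁bounds α θ γ β hα hθ0 hγ0pos hβ0pos hθrec hγrec hβrec
    hγinit hβinit x v u y w l lbar hx0 hv0 hy0 hu hi hii hiii hiv hv hlbar hstep xs ys ls hxs hys
    hfeas hsaddle E hE R0 hR0
  have h1p : ∀ k, (0:ℝ) < 1 + α k := fun k => by linarith [hα k]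
  have hθpos : ∀ k, 0 < θ k := by
    intro k; induction k with
    | zero => rw [hθ0]; norm_num
    | succ n ih => rw [hθrec n]; exact div_pos ih (h1p n)
  have hγpos : ∀ k, 0 < γ k := by
    intro k; induction k with
    | zero => exact hγ0pos
    | succ n ih =>
      rw [hγrec n]
      exact div_pos (by nlinarith [mul_nonneg (hα n).le hμf]) (h1p n)
  have hβpos : ∀ k, 0 < β k := by
    intro k; induction k with
    | zero => exact hβ0pos
    | succ n ih =>
      rw [hβrec n]
      exact div_pos (by nlinarith [mul_nonneg (hα n).le hμg]) (h1p n)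
  have hu' : ∀ k, (1 + α k) • u k = x k + α k • v k := by
    intro k
    rw [hu k, smul_smul, mul_inv_cancel₀ (h1p k).ne', one_smul]
  have hii' : ∀ k, (1 + α k) • x (k+1) = x k + α k • v (k+1) := by
    intro k
    have hd : (1 + α k) • x (k+1) - (x k + α k • v (k+1))
        = (x (k+1) - x k) - α k • (v (k+1) - x (k+1)) := by module
    rw [hii k, sub_self] at hd
    exact sub_eq_zero.mp hd
  have hv' : ∀ k, (1 + α k) • y (k+1) = y k + α k • w (k+1) := by
    intro k
    have hd : (1 + α k) • y (k+1) - (y k + α k • w (k+1))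
        = (y (k+1) - y k) - α k • (w (k+1) - y (k+1)) := by module
    rw [hv k, sub_self] at hd
    exact sub_eq_zero.mp hd
  have hlbar' : ∀ k, θ k • (lbar k - l k) = α k • (A (v k) + B (w (k+1)) - b) := by
    intro k
    have hne := (hθpos k).ne'
    rw [hlbar k, add_sub_cancel_left, smul_smul,
      show θ k * (α k/θ k) = α k by field_simp]
  have hmem : ∀ k, (x k ∈ X ∧ v k ∈ X) ∧ y k ∈ Y := by
    intro k; induction k with
    | zero => exact ⟨⟨hx0, hv0⟩, hy0⟩
    | succ n ih =>
      have hvmem := (hi n).1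
      exact ⟨⟨convex_mid X hXconv (x n) (v (n+1)) (x (n+1)) (α n) (hα n) ih.1.1 hvmem (hii' n),
        hvmem⟩, (hiv n).1⟩
  have humem : ∀ k, u k ∈ X := fun k =>
    convex_mid X hXconv (x k) (v k) (u k) (α k) (hα k) (hmem k).1.1 (hmem k).1.2 (hu' k)
  have hdec : ∀ k, (1 + α k) * E (k+1) ≤ E k := by
    intro k
    obtain ⟨hvmem, s, hs_eq, hs_sub⟩ := hi k
    have hf2c := convex_comb_ineq f₂ hf₂conv (x k) (v (k+1)) (x (k+1)) (α k) (hα k) (hii' k)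
    have os := onestep A B b f₁ f₂ g f₁' (α k) (θ k) (γ k) (β k) μf μg Lf
      (hα k) (hθpos k) (hβpos k).le hμf hμg hLf.le
      (x k) (v k) (u k) (x (k+1)) (v (k+1)) s xs
      (y k) (y (k+1)) (w k) (w (k+1)) ys
      (l k) (l (k+1)) (lbar k) ls
      (hu' k) (hii' k) (hv' k) (hiii k) (hlbar' k) hs_eq (hs_sub xs hxs)
      ((hf₁bounds (x (k+1)) (hmem (k+1)).1.1 (u k) (humem k)).2)
      ((hf₁bounds (x k) (hmem k).1.1 (u k) (humem k)).1)
      ((hf₁bounds xs hxs (u k) (humem k)).1)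
      hf2c
      ((hiv k).2 (y k) (hmem k).2)
      ((hiv k).2 ys hys)
      hfeas (hstep k)
    have hne := (h1p k).ne'
    have eγ : (1 + α k) * γ (k+1) = γ k + α k * μf := by
      rw [hγrec k]; field_simp
    have eβ : (1 + α k) * β (k+1) = β k + α k * μg := by
      rw [hβrec k]; field_simp
    have eθ : (1 + α k) * θ (k+1) = θ k := by
      rw [hθrec k]; field_simp
    have eγX : (1 + α k) * (γ (k+1)/2 * ‖v (k+1) - xs‖^2)
        = (γ k + α k * μf)/2 * ‖v (k+1) - xs‖^2 := by
      linear_combination (‖v (k+1) - xs‖^2/2) * eγ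
    have eβX : (1 + α k) * (β (k+1)/2 * ‖w (k+1) - ys‖^2)
        = (β k + α k * μg)/2 * ‖w (k+1) - ys‖^2 := by
      linear_combination (‖w (k+1) - ys‖^2/2) * eβ
    have eθX : (1 + α k) * (θ (k+1)/2 * ‖l (k+1) - ls‖^2)
        = θ k/2 * ‖l (k+1) - ls‖^2 := by
      linear_combination (‖l (k+1) - ls‖^2/2) * eθ
    rw [hE (k+1), hE k]
    linarith [os, eγX, eβX, eθX]
  have hEθ : ∀ k, E k ≤ θ k * E 0 := by
    intro k; induction k with
    | zero => rw [hθ0]; linarith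
    | succ n ih =>
      have h1 := hdec n
      have eθ : (1 + α n) * θ (n+1) = θ n := by
        have hne := (h1p n).ne'
        rw [hθrec n]; field_simp
      have h2 : (1 + α n) * E (n+1) ≤ (1 + α n) * (θ (n+1) * E 0) := by
        calc (1 + α n) * E (n+1) ≤ E n := h1
          _ ≤ θ n * E 0 := ih
          _ = (1 + α n) * (θ (n+1) * E 0) := by rw [← eθ]; ring
      exact le_of_mul_le_mul_left h2 (h1p n)
  have hgap : ∀ k, 0 ≤ f₁ (x k) + f₂ (x k) + g (y k) + ⟪ls, A (x k) + B (y k) - b⟫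
      - f₁ xs - f₂ xs - g ys := by
    intro k
    have := hsaddle (x k) (hmem k).1.1 (y k) (hmem k).2
    linarith
  have hquad : ∀ k, θ k/2 * ‖l k - ls‖^2 ≤ E k := by
    intro k
    rw [hE k]
    have h1 := hgap k
    have h2 : 0 ≤ γ k/2 * ‖v k - xs‖^2 :=
      mul_nonneg (by linarith [hγpos k]) (sq_nonneg _)
    have h3 : 0 ≤ β k/2 * ‖w k - ys‖^2 :=
      mul_nonneg (by linarith [hβpos k]) (sq_nonneg _)
    linarith
  have hE0 : 0 ≤ E 0 := by
    have h := hquad 0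
    have h2 : 0 ≤ θ 0/2 * ‖l 0 - ls‖^2 := by rw [hθ0]; positivity
    linarith
  have hlball : ∀ k, ‖l k - ls‖ ≤ Real.sqrt (2 * E 0) := by
    intro k
    have h1 : θ k/2 * ‖l k - ls‖^2 ≤ θ k * E 0 := le_trans (hquad k) (hEθ k)
    have h2 : ‖l k - ls‖^2 ≤ 2 * E 0 := by
      have h3 : θ k * ‖l k - ls‖^2 ≤ θ k * (2 * E 0) := by linarith
      exact le_of_mul_le_mul_left h3 (hθpos k)
    calc ‖l k - ls‖ = Real.sqrt (‖l k - ls‖^2) := (Real.sqrt_sq (norm_nonneg _)).symm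
      _ ≤ Real.sqrt (2 * E 0) := Real.sqrt_le_sqrt h2
  have hres : ∀ k, A (x k) + B (y k) - b = θ k • ((A (x 0) + B (y 0) - b) + (l k - l 0)) := by
    intro k; induction k with
    | zero => rw [hθ0, one_smul]; simp
    | succ n ih =>
      have hA' : (1 + α n) • (A (x (n+1))) = A (x n) + α n • (A (v (n+1))) := by
        have h := congrArg A (hii' n); simpa only [map_add, map_smul] using h
      have hB' : (1 + α n) • (B (y (n+1))) = B (y n) + α n • (B (w (n+1))) := by
        have h := congrArg B (hv' n); simpa only [map_add, map_smul] using h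
      have hGv : (1 + α n) • (A (x (n+1)) + B (y (n+1)) - b)
          = (A (x n) + B (y n) - b) + α n • (A (v (n+1)) + B (w (n+1)) - b) := by
        rw [smul_sub, smul_add, hA', hB']; module
      have eθ : (1 + α n) * θ (n+1) = θ n := by
        have hne := (h1p n).ne'
        rw [hθrec n]; field_simp
      have h1 : (1 + α n) • (A (x (n+1)) + B (y (n+1)) - b)
          = θ n • ((A (x 0) + B (y 0) - b) + (l (n+1) - l 0)) := by
        rw [hGv, ← hiii n, ih]; module
      have h2 : (1 + α n) • (θ (n+1) • ((A (x 0) + B (y 0) - b) + (l (n+1) - l 0)))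
          = θ n • ((A (x 0) + B (y 0) - b) + (l (n+1) - l 0)) := by
        rw [smul_smul, eθ]
      exact smul_right_injective _ (h1p n).ne' (h1.trans h2.symm)
  have hresbd : ∀ k, ‖A (x k) + B (y k) - b‖ ≤ θ k * R0 := by
    intro k
    rw [hres k, norm_smul, Real.norm_eq_abs, abs_of_pos (hθpos k)]
    apply mul_le_mul_of_nonneg_left _ (hθpos k).le
    have h1 : (A (x 0) + B (y 0) - b) + (l k - l 0)
        = (A (x 0) + B (y 0) - b) + ((l k - ls) + (ls - l 0)) := by abel
    rw [h1, hR0]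
    calc ‖(A (x 0) + B (y 0) - b) + ((l k - ls) + (ls - l 0))‖
        ≤ ‖A (x 0) + B (y 0) - b‖ + ‖(l k - ls) + (ls - l 0)‖ := norm_add_le _ _
      _ ≤ ‖A (x 0) + B (y 0) - b‖ + (‖l k - ls‖ + ‖ls - l 0‖) := by
          linarith [norm_add_le (l k - ls) (ls - l 0)]
      _ ≤ Real.sqrt (2 * E 0) + ‖l 0 - ls‖ + ‖A (x 0) + B (y 0) - b‖ := by
          rw [norm_sub_rev ls (l 0)]
          linarith [hlball k]
  have hgapbd : ∀ k, |f₁ (x k) + f₂ (x k) + g (y k) - (f₁ xs + f₂ xs + g ys)|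
      ≤ θ k * (E 0 + ‖ls‖ * R0) := by
    intro k
    have h1 : f₁ (x k) + f₂ (x k) + g (y k) + ⟪ls, A (x k) + B (y k) - b⟫
        - f₁ xs - f₂ xs - g ys ≤ E k := by
      rw [hE k]
      have h2 : 0 ≤ γ k/2 * ‖v k - xs‖^2 :=
        mul_nonneg (by linarith [hγpos k]) (sq_nonneg _)
      have h3 : 0 ≤ β k/2 * ‖w k - ys‖^2 :=
        mul_nonneg (by linarith [hβpos k]) (sq_nonneg _)
      have h4 : 0 ≤ θ k/2 * ‖l k - ls‖^2 :=
        mul_nonneg (by linarith [hθpos k]) (sq_nonneg _)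
      linarith
    have h5 : |⟪ls, A (x k) + B (y k) - b⟫| ≤ ‖ls‖ * (θ k * R0) := by
      calc |⟪ls, A (x k) + B (y k) - b⟫| ≤ ‖ls‖ * ‖A (x k) + B (y k) - b‖ :=
            abs_real_inner_le_norm _ _
        _ ≤ ‖ls‖ * (θ k * R0) := mul_le_mul_of_nonneg_left (hresbd k) (norm_nonneg ls)
    have h6 := hEθ k
    have h7 := hgap k
    have h8 : 0 ≤ θ k * E 0 := mul_nonneg (hθpos k).le hE0
    have hP := abs_le.mp h5
    rw [abs_le]
    constructor
    · linarith [hP.1, hP.2]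
    · linarith [hP.1, hP.2]
  refine ⟨fun k _ => ⟨(hmem k).1.1, (hmem k).2⟩, fun k => ⟨hEθ k, hresbd k, hgapbd k⟩, ?_⟩
  intro hγA k hk
  have hθ1 := theta_le_one θ α hθ0 hα hθpos hθrec
  have hγub : ∀ j, γ j ≤ Lf + ‖A‖^2 := by
    intro j; induction j with
    | zero => exact hγA
    | succ i ih =>
      rw [hγrec i, div_le_iff₀ (h1p i)]
      have h1 : α i * μf ≤ α i * (Lf + ‖A‖^2) := by
        apply mul_le_mul_of_nonneg_left _ (hα i).le
        nlinarith [sq_nonneg ‖A‖]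
      nlinarith [h1, ih]
  have hγlb : ∀ j, γ 0 * θ j ≤ γ j := by
    intro j; induction j with
    | zero => rw [hθ0]; linarith
    | succ i ih =>
      rw [hγrec i, hθrec i,
        show γ 0 * (θ i / (1 + α i)) = (γ 0 * θ i)/(1 + α i) by ring]
      exact (div_le_div_iff_of_pos_right (h1p i)).mpr (by nlinarith [mul_nonneg (hα i).le hμf])
  have b1 := rate1 θ α γ ‖A‖ Lf (γ 0) (norm_nonneg A) hLf hγ0pos hθ0 hα hθpos hθrec
    hγlb hγub hstep k hk
  have hkpos : (0:ℝ) < (k:ℝ) := by exact_mod_cast hk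
  have hC1 : θ k ≤ 2048 * (‖A‖ / (Real.sqrt (γ 0) * (k:ℝ)) + Lf / (γ 0 * (k:ℝ)^2)) := by
    have hS : 0 ≤ ‖A‖ / (Real.sqrt (γ 0) * (k:ℝ)) + Lf / (γ 0 * (k:ℝ)^2) := by positivity
    nlinarith [b1, hS]
  have hle1 : ENNReal.ofReal (θ k) ≤ ENNReal.ofReal 2048
      * ENNReal.ofReal (‖A‖ / (Real.sqrt (γ 0) * (k:ℝ)) + Lf / (γ 0 * (k:ℝ)^2)) := by
    rw [← ENNReal.ofReal_mul (by norm_num : (0:ℝ) ≤ 2048)]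
    exact ENNReal.ofReal_le_ofReal hC1
  have hle2 : ENNReal.ofReal (θ k) ≤ ENNReal.ofReal 2048
      * (ENNReal.ofReal (‖A‖^2) / ENNReal.ofReal (μf * (k:ℝ)^2)
        + ENNReal.ofReal (Real.exp (-((k:ℝ)/4) * Real.sqrt (μf/Lf)))) := by
    have h2048 : (1:ℝ≥0∞) ≤ ENNReal.ofReal 2048 := by
      rw [show (1:ℝ≥0∞) = ENNReal.ofReal 1 by simp]
      exact ENNReal.ofReal_le_ofReal (by norm_num)
    rcases eq_or_lt_of_le hμf with hμ0 | hμpos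
    · have hsz : Real.sqrt (μf/Lf) = 0 := by rw [← hμ0]; simp
      have hexp1 : Real.exp (-((k:ℝ)/4) * Real.sqrt (μf/Lf)) = 1 := by
        rw [hsz]; simp
      have hT2ge : (1:ℝ≥0∞) ≤ ENNReal.ofReal (‖A‖^2) / ENNReal.ofReal (μf * (k:ℝ)^2)
          + ENNReal.ofReal (Real.exp (-((k:ℝ)/4) * Real.sqrt (μf/Lf))) := by
        rw [hexp1, ENNReal.ofReal_one]
        exact le_add_self
      calc ENNReal.ofReal (θ k) ≤ ENNReal.ofReal 1 := ENNReal.ofReal_le_ofReal (hθ1 k)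
        _ = 1 := ENNReal.ofReal_one
        _ = 1 * 1 := (one_mul 1).symm
        _ ≤ _ := mul_le_mul' h2048 hT2ge
    · have hγ0μ := hγinit hμpos
      have hγconst : ∀ j, γ j = μf := by
        intro j; induction j with
        | zero => exact hγ0μ
        | succ i ih =>
          have hne := (h1p i).ne'
          rw [hγrec i, ih]
          field_simp
      have hstep2 : ∀ j, (Lf * θ j + ‖A‖^2) * α j^2 = μf * θ j := by
        intro j; rw [← hγconst j]; exact hstep j
      have b2 := rate2 θ α ‖A‖ Lf μf (norm_nonneg A) hLf hμpos hμfLf hθ0 hα hθpos hθrec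
        hstep2 k hk
      have hμk : (0:ℝ) < μf * (k:ℝ)^2 := by positivity
      rcases b2 with hb | hb
      · have h0 : 0 ≤ ‖A‖^2 / (μf * (k:ℝ)^2) := by positivity
        have h1 : θ k ≤ 2048 * (‖A‖^2 / (μf * (k:ℝ)^2)) := by
          calc θ k ≤ 1024 * ‖A‖^2 / (μf * (k:ℝ)^2) := hb
            _ ≤ 2048 * (‖A‖^2 / (μf * (k:ℝ)^2)) := by
                rw [show (1024:ℝ) * ‖A‖^2 / (μf * (k:ℝ)^2)
                  = 1024 * (‖A‖^2/(μf * (k:ℝ)^2)) by ring]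
                linarith [h0]
        calc ENNReal.ofReal (θ k)
            ≤ ENNReal.ofReal (2048 * (‖A‖^2 / (μf * (k:ℝ)^2))) :=
              ENNReal.ofReal_le_ofReal h1
          _ = ENNReal.ofReal 2048 * ENNReal.ofReal (‖A‖^2 / (μf * (k:ℝ)^2)) :=
              ENNReal.ofReal_mul (by norm_num)
          _ = ENNReal.ofReal 2048
              * (ENNReal.ofReal (‖A‖^2) / ENNReal.ofReal (μf * (k:ℝ)^2)) := by
              rw [ENNReal.ofReal_div_of_pos hμk]
          _ ≤ _ := mul_le_mul_right le_self_add _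
      · calc ENNReal.ofReal (θ k)
            ≤ ENNReal.ofReal (Real.exp (-((k:ℝ)/4) * Real.sqrt (μf/Lf))) :=
              ENNReal.ofReal_le_ofReal hb
          _ ≤ ENNReal.ofReal (‖A‖^2) / ENNReal.ofReal (μf * (k:ℝ)^2)
              + ENNReal.ofReal (Real.exp (-((k:ℝ)/4) * Real.sqrt (μf/Lf))) := le_add_self
          _ = 1 * _ := (one_mul _).symm
          _ ≤ _ := mul_le_mul_left h2048 _
  rcases min_cases (ENNReal.ofReal (‖A‖ / (Real.sqrt (γ 0) * (k:ℝ)) + Lf / (γ 0 * (k:ℝ)^2)))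
      (ENNReal.ofReal (‖A‖^2) / ENNReal.ofReal (μf * (k:ℝ)^2)
        + ENNReal.ofReal (Real.exp (-((k:ℝ)/4) * Real.sqrt (μf/Lf)))) with
    ⟨hmin, _⟩ | ⟨hmin, _⟩ <;> rw [hmin]
  · exact hle1
  · exact hle2
end

section
/- Let P > 0 and Q, R ≥ 0, let σ : [0,∞) → [0,∞) be integrable, and let y : [0,∞) → ℝ be a positive Lipschitz function with y(0) = 1 whose derivative satisfies, for almost every t > 0, y'(t) ≤ −σ(t) y(t)² / √(P y(t)² + Q y(t) + R²). Set Σ(t) = ∫₀^t σ(s) ds. Then for every t > 0 with Σ(t) > 0: y(t) ≤ exp(−Σ(t)/(2√P)) + 36Q/Σ(t)² + 6R/Σ(t). -/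
/-! The potential `G v = -√P log v + 2 √Q / √v + R / v` has `G' v = -(√P v + √Q √v + R) / v²`,
and `√(P v² + Q v + R²) ≤ √P v + √Q √v + R`, so the differential inequality makes `G ∘ y` grow at
least at rate `σ`. On `[0, t]` the function `y` stays away from `0`, so `G ∘ y` is Lipschitz there
and integrating gives `Σ(t) ≤ G (y t) - G 1 ≤ G (y t)`. If `y t` exceeded the bound, it would exceed
each of its three terms, and then the three terms of `G (y t)` would be smaller than `Σ(t)/2`,
`Σ(t)/3` and `Σ(t)/6`. -/

open Real MeasureTheory Set

theorem LocallyLipschitzOn.exists_lipschitzOnWith_comp {α β γ : Type*} [PseudoMetricSpace α]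
    [PseudoMetricSpace β] [PseudoMetricSpace γ] {g : β → γ} {f : α → β} {U : Set β} {s : Set α}
    {K : NNReal} (hg : LocallyLipschitzOn U g) (hs : IsCompact s) (hf : LipschitzOnWith K f s)
    (hfs : MapsTo f s U) : ∃ L, LipschitzOnWith L (g ∘ f) s := by
  obtain ⟨L, hL⟩ := (hg.mono hfs.image_subset).exists_lipschitzOnWith_of_compact
    (hs.image_of_continuousOn hf.continuousOn)
  exact ⟨L * K, hL.comp hf (mapsTo_image f s)⟩

theorem AbsolutelyContinuousOnInterval.integral_le_sub_of_ae_le_deriv {f φ : ℝ → ℝ} {a b : ℝ}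
    (hf : AbsolutelyContinuousOnInterval f a b) (hab : a ≤ b) (hφ : IntervalIntegrable φ volume a b)
    (h : ∀ᵐ x ∂volume.restrict (Ioo a b), φ x ≤ deriv f x) :
    ∫ x in a..b, φ x ≤ f b - f a := by
  rw [← hf.integral_deriv_eq_sub]
  refine intervalIntegral.integral_mono_ae_restrict hab hφ hf.intervalIntegrable_deriv ?_
  rwa [← Measure.restrict_congr_set Ioo_ae_eq_Icc]

noncomputable def decayPotential (P Q R v : ℝ) : ℝ := -√P * log v + 2 * √Q / √v + R / v

lemma hasDerivAt_decayPotential (P Q R : ℝ) {v : ℝ} (hv : 0 < v) :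
    HasDerivAt (decayPotential P Q R) (-(√P * v + √Q * √v + R) / v ^ 2) v := by
  have hsv : 0 < √v := sqrt_pos.2 hv
  have hG : decayPotential P Q R = fun w ↦ -√P * log w + 2 * √Q * (√w)⁻¹ + R * w⁻¹ := by
    funext w; simp only [decayPotential, div_eq_mul_inv]
  rw [hG]
  refine ((((hasDerivAt_log hv.ne').const_mul (-√P)).add
    (((hasDerivAt_sqrt hv.ne').inv hsv.ne').const_mul (2 * √Q))).add
    ((hasDerivAt_inv hv.ne').const_mul R)).congr_deriv ?_
  field_simp
  linear_combination √Q * (√v ^ 2 + v) * sq_sqrt hv.le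

lemma contDiffOn_decayPotential (P Q R : ℝ) : ContDiffOn ℝ 1 (decayPotential P Q R) (Ioi 0) := by
  intro v hv
  have hv0 : v ≠ 0 := hv.ne'
  have hsv : √v ≠ 0 := (sqrt_pos.2 hv).ne'
  unfold decayPotential
  fun_prop (disch := assumption)

lemma decayPotential_one_nonneg {P Q R : ℝ} (hR : 0 ≤ R) :
    0 ≤ decayPotential P Q R 1 := by
  simp only [decayPotential, log_one, sqrt_one, mul_zero, zero_add, div_one]
  positivity

lemma sqrt_quadratic_le {P Q R v : ℝ} (hP : 0 ≤ P) (hQ : 0 ≤ Q) (hR : 0 ≤ R) (hv : 0 ≤ v) :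
    √(P * v ^ 2 + Q * v + R ^ 2) ≤ √P * v + √Q * √v + R := by
  rw [sqrt_le_iff]
  refine ⟨by positivity, ?_⟩
  nlinarith [sq_sqrt hP, sq_sqrt hQ, sq_sqrt hv, mul_nonneg (mul_nonneg (sqrt_nonneg P) hv)
    (mul_nonneg (sqrt_nonneg Q) (sqrt_nonneg v)), mul_nonneg (mul_nonneg (sqrt_nonneg P) hv) hR,
    mul_nonneg (mul_nonneg (sqrt_nonneg Q) (sqrt_nonneg v)) hR]

lemma le_deriv_decayPotential_comp {P Q R σ d s : ℝ} {y : ℝ → ℝ} (hP : 0 < P) (hQ : 0 ≤ Q)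
    (hR : 0 ≤ R) (hσ : 0 ≤ σ) (hy : HasDerivAt y d s) (hys : 0 < y s)
    (hd : d ≤ -(σ * y s ^ 2) / √(P * y s ^ 2 + Q * y s + R ^ 2)) :
    σ ≤ deriv (decayPotential P Q R ∘ y) s := by
  rw [((hasDerivAt_decayPotential P Q R hys).comp s hy).deriv]
  set v := y s
  set E := √P * v + √Q * √v + R
  have hS : 0 < √(P * v ^ 2 + Q * v + R ^ 2) := sqrt_pos.2 (by positivity)
  calc σ ≤ σ * (E / √(P * v ^ 2 + Q * v + R ^ 2)) :=
        le_mul_of_one_le_right hσ ((one_le_div hS).2 (sqrt_quadratic_le hP.le hQ hR hys.le))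
    _ = -E / v ^ 2 * (-(σ * v ^ 2) / √(P * v ^ 2 + Q * v + R ^ 2)) := by field_simp
    _ ≤ -E / v ^ 2 * d := mul_le_mul_of_nonpos_left hd (div_nonpos_of_nonpos_of_nonneg
        (neg_nonpos.2 (by positivity)) (by positivity))

lemma le_of_le_decayPotential {P Q R w S : ℝ} (hP : 0 < P) (hQ : 0 ≤ Q) (hR : 0 ≤ R)
    (hw : 0 < w) (hS : 0 < S) (h : S ≤ decayPotential P Q R w) :
    w ≤ exp (-S / (2 * √P)) + 36 * Q / S ^ 2 + 6 * R / S := by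
  by_contra! hlt
  have hsw : 0 < √w := sqrt_pos.2 hw
  have hexp : 0 < exp (-S / (2 * √P)) := exp_pos _
  have hQS : 0 ≤ 36 * Q / S ^ 2 := by positivity
  have hRS : 0 ≤ 6 * R / S := by positivity
  have hlog : -√P * log w < S / 2 := by
    have : -S / (2 * √P) < log w := (lt_log_iff_exp_lt hw).2 (by linarith)
    rw [div_lt_iff₀ (by positivity)] at this
    linarith
  have hQw : 2 * √Q / √w ≤ S / 3 := by
    have h36 : 36 * Q ≤ w * S ^ 2 := by
      have : 36 * Q / S ^ 2 < w := by linarith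
      rw [div_lt_iff₀ (by positivity)] at this
      linarith
    have : 6 * √Q ≤ √w * S := by
      rw [← sq_le_sq₀ (by positivity) (by positivity)]
      nlinarith [sq_sqrt hQ, sq_sqrt hw.le]
    rw [div_le_iff₀ hsw]
    linarith
  have hRw : R / w ≤ S / 6 := by
    have : 6 * R / S < w := by linarith
    rw [div_lt_iff₀ hS] at this
    rw [div_le_iff₀ hw]
    linarith
  unfold decayPotential at h
  linarith

/-- Lemma B.2: decay estimate for a positive Lipschitz function satisfying the
differential inequality `y' ≤ −σ y² / √(P y² + Q y + R²)` almost everywhere. -/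
theorem differential_inequality_decay
    (P Q R : ℝ) (hP : 0 < P) (hQ : 0 ≤ Q) (hR : 0 ≤ R)
    (σ : ℝ → ℝ) (hσnn : ∀ t, 0 ≤ σ t)
    (hσint : IntegrableOn σ (Set.Ici 0))
    (K : NNReal) (y : ℝ → ℝ)
    (hylip : LipschitzOnWith K y (Set.Ici 0))
    (hypos : ∀ t ∈ Set.Ici (0 : ℝ), 0 < y t)
    (hy0 : y 0 = 1)
    (hode : ∀ᵐ t ∂(volume.restrict (Set.Ioi (0 : ℝ))),
      ∀ d : ℝ, HasDerivAt y d t →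
        d ≤ -(σ t * y t ^ 2) / Real.sqrt (P * y t ^ 2 + Q * y t + R ^ 2))
    (Sig : ℝ → ℝ) (hSig : ∀ t, Sig t = ∫ s in (0:ℝ)..t, σ s) :
    ∀ t : ℝ, 0 < t → 0 < Sig t →
      y t ≤ Real.exp (-Sig t / (2 * Real.sqrt P)) + 36 * Q / Sig t ^ 2 + 6 * R / Sig t := by
  intro t ht hSigt
  have hsub : uIcc 0 t ⊆ Ici 0 := by rw [uIcc_of_le ht.le]; exact Icc_subset_Ici_self
  have hylip_t : LipschitzOnWith K y (uIcc 0 t) := hylip.mono hsub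
  obtain ⟨L, hGy⟩ := ((contDiffOn_decayPotential P Q R).locallyLipschitzOn
    (convex_Ioi 0)).exists_lipschitzOnWith_comp isCompact_uIcc hylip_t fun s hs ↦ hypos s (hsub hs)
  have hderiv : ∀ᵐ s ∂volume.restrict (Ioo 0 t), σ s ≤ deriv (decayPotential P Q R ∘ y) s := by
    filter_upwards [ae_restrict_of_ae_restrict_of_subset Ioo_subset_Ioi_self hode,
      ae_restrict_of_ae hylip_t.absolutelyContinuousOnInterval.ae_differentiableAt,
      ae_restrict_mem measurableSet_Ioo] with s hode_s hdiff hs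
    have hy_s := (hdiff (mem_uIcc_of_le hs.1.le hs.2.le)).hasDerivAt
    exact le_deriv_decayPotential_comp hP hQ hR (hσnn s) hy_s (hypos s hs.1.le) (hode_s _ hy_s)
  have hint := hGy.absolutelyContinuousOnInterval.integral_le_sub_of_ae_le_deriv ht.le
    ((intervalIntegrable_iff_integrableOn_Ioc_of_le ht.le).2
      (hσint.mono_set (Ioc_subset_Ioi_self.trans Ioi_subset_Ici_self))) hderiv
  refine le_of_le_decayPotential hP hQ hR (hypos t ht.le) hSigt ?_
  have hG1 := decayPotential_one_nonneg (P := P) (Q := Q) hR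
  simp only [Function.comp_apply, hy0] at hint
  linarith [hSig t]
end

section
/- Let (θ_k)_{k≥0} be a sequence of positive reals with θ₀ = 1 satisfying θ_{k+1} − θ_k ≤ −σ θ_k^ν θ_{k+1} for all k ∈ ℕ, where σ, ν > 0. If θ_{k+1}/θ_k ≥ τ > 0 for all k ∈ ℕ, then θ_k ≤ (1 + σ τ ν k)^{−1/ν} for every k ∈ ℕ. -/
open Real

/-- Bernoulli for negative exponents: for `t > 0` and `ν > 0`,
`t ^ (-ν) ≥ 1 - ν * (t - 1)`. -/
lemma bernoulli_neg_rpow {t ν : ℝ} (ht : 0 < t) (hν : 0 < ν) :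
    1 - ν * (t - 1) ≤ t ^ (-ν) := by
  rcases le_or_gt ν 1 with hν1 | hν1
  · -- 0 < ν ≤ 1 : use t^ν ≤ 1 + ν(t-1) and 1/(1+x) ≥ 1-x
    have hs : (-1 : ℝ) ≤ t - 1 := by linarith
    have hB : t ^ ν ≤ 1 + ν * (t - 1) := by
      have := rpow_one_add_le_one_add_mul_self hs hν.le hν1
      simpa using this
    have htν : 0 < t ^ ν := Real.rpow_pos_of_pos ht ν
    have hpos : 0 < 1 + ν * (t - 1) := lt_of_lt_of_le htν hB
    have h1 : 1 - ν * (t - 1) ≤ (1 + ν * (t - 1))⁻¹ := by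
      rw [inv_eq_one_div, le_div_iff₀ hpos]
      nlinarith [sq_nonneg (ν * (t - 1))]
    calc 1 - ν * (t - 1) ≤ (1 + ν * (t - 1))⁻¹ := h1
      _ ≤ (t ^ ν)⁻¹ := inv_anti₀ htν hB
      _ = t ^ (-ν) := by rw [← Real.rpow_neg ht.le]
  · -- ν > 1 : use (1/t)^ν ≥ 1 + ν((1-t)/t) ≥ 1 + ν(1-t)
    have hs : (-1 : ℝ) ≤ (1 - t) / t := by
      rw [neg_le, ← neg_div, div_le_one ht]
      linarith
    have hB : 1 + ν * ((1 - t) / t) ≤ (1 + (1 - t) / t) ^ ν :=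
      one_add_mul_self_le_rpow_one_add hs hν1.le
    have hbase : 1 + (1 - t) / t = t⁻¹ := by field_simp; ring
    have hstep : 1 - t ≤ (1 - t) / t := by
      rw [le_div_iff₀ ht]
      nlinarith [sq_nonneg (1 - t)]
    calc 1 - ν * (t - 1) = 1 + ν * (1 - t) := by ring
      _ ≤ 1 + ν * ((1 - t) / t) := by nlinarith
      _ ≤ (1 + (1 - t) / t) ^ ν := hB
      _ = t ^ (-ν) := by
          rw [hbase, Real.inv_rpow ht.le, ← Real.rpow_neg ht.le]

/-- Lemma C.1: decay estimate for positive sequences satisfying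
`θₖ₊₁ − θₖ ≤ −σ θₖ^ν θₖ₊₁` with bounded ratio `θₖ₊₁/θₖ ≥ τ`. -/
theorem difference_inequality_decay_basic
    (σ ν τ : ℝ) (hσ : 0 < σ) (hν : 0 < ν) (hτ : 0 < τ)
    (θ : ℕ → ℝ) (hpos : ∀ k, 0 < θ k) (hθ0 : θ 0 = 1)
    (hrec : ∀ k, θ (k + 1) - θ k ≤ -σ * θ k ^ ν * θ (k + 1))
    (hratio : ∀ k, θ (k + 1) / θ k ≥ τ) :
    ∀ k : ℕ, θ k ≤ (1 + σ * τ * ν * (k : ℝ)) ^ (-(1 : ℝ) / ν) := by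
  -- Main claim: θ k ^ (-ν) ≥ 1 + σ τ ν k
  have main : ∀ k : ℕ, 1 + σ * τ * ν * (k : ℝ) ≤ θ k ^ (-ν) := by
    intro k
    induction k with
    | zero => simp [hθ0]
    | succ k ih =>
        set t : ℝ := θ (k + 1) / θ k with ht_def
        have hθk := hpos k
        have hθk1 := hpos (k + 1)
        have ht : 0 < t := div_pos hθk1 hθk
        have hBer : 1 - ν * (t - 1) ≤ t ^ (-ν) := bernoulli_neg_rpow ht hν
        have hθkν : 0 < θ k ^ ν := Real.rpow_pos_of_pos hθk ν
        have hθknν : 0 < θ k ^ (-ν) := Real.rpow_pos_of_pos hθk (-ν)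
        have hθk1nν : 0 < θ (k + 1) ^ (-ν) := Real.rpow_pos_of_pos hθk1 (-ν)
        -- θ(k+1)^(-ν) = θ k^(-ν) * t^(-ν)
        have hsplit : θ (k + 1) ^ (-ν) = θ k ^ (-ν) * t ^ (-ν) := by
          rw [ht_def, Real.div_rpow hθk1.le hθk.le]
          field_simp
        have hrec' : θ (k + 1) - θ k ≤ -σ * θ k ^ ν * θ (k + 1) := hrec k
        have ht1 : t - 1 ≤ -σ * θ k ^ ν * t := by
          rw [ht_def, div_sub_one hθk.ne', div_le_iff₀ hθk]
          have heq : -σ * θ k ^ ν * (θ (k + 1) / θ k) * θ k = -σ * θ k ^ ν * θ (k + 1) := by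
            field_simp
          rw [heq]
          exact hrec'
        have hτt : τ ≤ t := hratio k
        have hmulν : θ k ^ (-ν) * θ k ^ ν = 1 := by
          rw [← Real.rpow_add hθk]; simp
        have step : θ k ^ (-ν) + σ * τ * ν ≤ θ k ^ (-ν) * (1 - ν * (t - 1)) := by
          have h1 : σ * ν * θ k ^ ν * t ≤ -(ν * (t - 1)) := by nlinarith
          have h2 : θ k ^ (-ν) * (σ * ν * θ k ^ ν * t) ≤ θ k ^ (-ν) * (-(ν * (t - 1))) :=
            mul_le_mul_of_nonneg_left h1 hθknν.le
          have h3 : θ k ^ (-ν) * (σ * ν * θ k ^ ν * t) = σ * ν * t := by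
            calc θ k ^ (-ν) * (σ * ν * θ k ^ ν * t)
                = (θ k ^ (-ν) * θ k ^ ν) * (σ * ν * t) := by ring
              _ = σ * ν * t := by rw [hmulν]; ring
          nlinarith [mul_le_mul_of_nonneg_left hτt (mul_pos hσ hν).le]
        calc 1 + σ * τ * ν * ((k + 1 : ℕ) : ℝ)
            = (1 + σ * τ * ν * (k : ℝ)) + σ * τ * ν := by push_cast; ring
          _ ≤ θ k ^ (-ν) + σ * τ * ν := by linarith
          _ ≤ θ k ^ (-ν) * (1 - ν * (t - 1)) := step
          _ ≤ θ k ^ (-ν) * t ^ (-ν) := mul_le_mul_of_nonneg_left hBer hθknν.le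
          _ = θ (k + 1) ^ (-ν) := hsplit.symm
  intro k
  have hθk := hpos k
  have h1 : 0 < 1 + σ * τ * ν * (k : ℝ) := by positivity
  have hexp : (-(1:ℝ)/ν) ≤ 0 := by
    apply div_nonpos_of_nonpos_of_nonneg <;> linarith
  have h3 : (θ k ^ (-ν)) ^ (-(1:ℝ)/ν) ≤ (1 + σ * τ * ν * (k : ℝ)) ^ (-(1:ℝ)/ν) :=
    Real.rpow_le_rpow_of_nonpos h1 (main k) hexp
  calc θ k = (θ k ^ (-ν)) ^ (-(1:ℝ)/ν) := by
        rw [← Real.rpow_mul hθk.le, show (-ν) * (-(1:ℝ)/ν) = 1 by field_simp, Real.rpow_one]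
    _ ≤ _ := h3
end

section
/- Let (θ_k)_{k≥0} be a sequence of positive reals with θ₀ = 1 satisfying θ_{k+1} − θ_k ≤ −σ θ_k^ν θ_{k+1} / √(Q θ_k + R²) for all k ∈ ℕ, where σ, Q > 0, R ≥ 0 and ν ≥ 1/2, and suppose θ_{k+1}/θ_k ≥ τ > 0 for all k. Then there exists a constant C_ν > 0 depending only on ν such that for all k ≥ 1: if ν > 1/2 then θ_k ≤ C_ν [ (√Q/(σ τ k))^{2/(2ν−1)} + (R/(σ τ k))^{1/ν} ], and if ν = 1/2 then θ_k ≤ C_ν [ exp(−σ τ k/(2√Q)) + (R/(σ τ k))² ]. -/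
open Real

/-!
With `c = στ`, the ratio bound turns the recursion into
`θₖ - θₖ₊₁ ≥ c θₖ^(ν+1) / √(Qθₖ + R²)`. At each step one of two regimes holds: if
`4R² ≤ 5Qθₖ` the square root is at most `(3/2)√Q √θₖ`, so θ drops by at least
`(2c/(3√Q)) θₖ^(ν+1/2)`; otherwise it is at most `2R`, so θ drops by at least `(c/(2R)) θₖ^(ν+1)`.
By convexity of `t ↦ t^(-α)` for `α ≥ 0` (and of `-log t`), a step in the first regime raises the
potential `θ^(-(ν-1/2))` (resp. `-log θ` when `ν = 1/2`) and a step in the second one raises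
`θ^(-ν)` by a fixed amount, so after `k` steps one of the two potentials has gained a fixed
fraction of `k`; inverting it gives the bound. The threshold `5/4` makes the first-regime constant
exactly `3/2`, so that the `3k/4` share of the steps allotted to `-log θ` yields exactly the rate
`στ/(2√Q)` in the exponential.
-/

namespace Real

theorem one_add_mul_one_sub_inv_le_rpow {t α : ℝ} (ht : 1 ≤ t) (hα : 0 ≤ α) :
    1 + α * (1 - t⁻¹) ≤ t ^ α := by
  have ht0 : 0 < t := one_pos.trans_le ht
  have hbern : 1 + (α + 1) * (t - 1) ≤ t ^ (α + 1) := by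
    simpa using one_add_mul_self_le_rpow_one_add (s := t - 1) (by linarith) (p := α + 1)
      (by linarith)
  refine le_of_mul_le_mul_right ?_ ht0
  calc (1 + α * (1 - t⁻¹)) * t = 1 + (α + 1) * (t - 1) := by field_simp; ring
    _ ≤ t ^ α * t := by rwa [← rpow_add_one ht0.ne']

theorem mul_le_rpow_neg_sub_rpow_neg {α c x y : ℝ} (hα : 0 ≤ α) (hy : 0 < y) (hyx : y ≤ x)
    (h : c * x ^ (α + 1) ≤ x - y) : α * c ≤ y ^ (-α) - x ^ (-α) := by
  have hx : 0 < x := hy.trans_le hyx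
  have htangent := one_add_mul_one_sub_inv_le_rpow ((one_le_div hy).2 hyx) hα
  have hy_eq : y ^ (-α) = (x / y) ^ α * x ^ (-α) := by
    rw [div_rpow hx.le hy.le, rpow_neg hx.le, rpow_neg hy.le]; field_simp
  have hc : c ≤ (x - y) / x ^ (α + 1) := by
    rwa [le_div_iff₀ (rpow_pos_of_pos hx _)]
  calc α * c ≤ α * ((x - y) / x ^ (α + 1)) := mul_le_mul_of_nonneg_left hc hα
    _ = α * (1 - (x / y)⁻¹) * x ^ (-α) := by
      rw [rpow_add_one hx.ne', rpow_neg hx.le]; field_simp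
    _ ≤ y ^ (-α) - x ^ (-α) := by
      rw [hy_eq, ← sub_one_mul]
      exact mul_le_mul_of_nonneg_right (by linarith) (rpow_nonneg hx.le _)

theorem le_log_sub_log_of_mul_le_sub {c x y : ℝ} (hx : 0 < x) (hy : 0 < y) (h : c * x ≤ x - y) :
    c ≤ log x - log y := by
  have hlog : log y - log x ≤ y / x - 1 := by
    rw [← log_div hy.ne' hx.ne']; exact log_le_sub_one_of_pos (div_pos hy hx)
  have hratio : y / x - 1 ≤ -c := by
    rw [div_sub_one hx.ne', div_le_iff₀ hx]; linarith
  linarith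

theorem le_div_rpow_one_div_of_le_mul_rpow_neg {β s M x : ℝ} (hβ : 0 < β) (hs : 0 < s)
    (hx : 0 < x) (h : s ≤ M * x ^ (-β)) : x ≤ (M / s) ^ (1 / β) := by
  have hxβ : x ^ β ≤ M / s := by
    rw [rpow_neg hx.le, ← div_eq_mul_inv, le_div_iff₀ (rpow_pos_of_pos hx β)] at h
    rwa [le_div_iff₀ hs, mul_comm]
  rwa [one_div, le_rpow_inv_iff_of_pos hx.le ((rpow_pos_of_pos hx β).le.trans hxβ) hβ]

end Real

theorem Antitone.monotone_mul_rpow_neg {ι : Type*} [Preorder ι] {f : ι → ℝ} {β M : ℝ}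
    (hf : Antitone f) (hpos : ∀ i, 0 < f i) (hβ : 0 ≤ β) (hM : 0 ≤ M) :
    Monotone fun i => M * f i ^ (-β) := fun _ j hij =>
  mul_le_mul_of_nonneg_left (rpow_le_rpow_of_nonpos (hpos j) (hf hij) (neg_nonpos.2 hβ)) hM

theorem natCast_le_sub_add_sub_of_forall_or {f g : ℕ → ℝ} (hf : Monotone f) (hg : Monotone g)
    (h : ∀ j, f j + 1 ≤ f (j + 1) ∨ g j + 1 ≤ g (j + 1)) (k : ℕ) :
    (k : ℝ) ≤ f k - f 0 + (g k - g 0) := by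
  have hmono : Monotone fun j : ℕ => f j + g j - j := by
    refine monotone_nat_of_le_succ fun j => ?_
    have := hf j.le_succ
    have := hg j.le_succ
    push_cast
    rcases h j with hj | hj <;> linarith
  have := hmono k.zero_le
  simp only [CharP.cast_eq_zero, sub_zero] at this
  linarith

theorem mul_rpow_add_half_le_div_sqrt {ν c Q R x : ℝ} (hc : 0 ≤ c) (hQ : 0 < Q) (hx : 0 < x)
    (h : 4 * R ^ 2 ≤ 5 * (Q * x)) :
    2 * c / (3 * √Q) * x ^ (ν + 1 / 2) ≤ c * x ^ (ν + 1) / √(Q * x + R ^ 2) := by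
  have hsqrt : √(Q * x + R ^ 2) ≤ 3 / 2 * √Q * √x := by
    rw [mul_assoc, ← sqrt_mul hQ.le, sqrt_le_left (by positivity)]
    nlinarith [sq_sqrt (mul_pos hQ hx).le]
  have hpow : x ^ (ν + 1) = x ^ (ν + 1 / 2) * √x := by
    rw [sqrt_eq_rpow, ← rpow_add hx, add_assoc]; norm_num
  calc 2 * c / (3 * √Q) * x ^ (ν + 1 / 2) = c * x ^ (ν + 1) / (3 / 2 * √Q * √x) := by
        rw [hpow]; field_simp
    _ ≤ c * x ^ (ν + 1) / √(Q * x + R ^ 2) := by gcongr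

theorem mul_rpow_add_one_le_div_sqrt {ν c Q R x : ℝ} (hc : 0 ≤ c) (hQ : 0 ≤ Q) (hx : 0 < x)
    (hR : 0 ≤ R) (h : 5 * (Q * x) < 4 * R ^ 2) :
    c / (2 * R) * x ^ (ν + 1) ≤ c * x ^ (ν + 1) / √(Q * x + R ^ 2) := by
  have hR0 : 0 < R := by nlinarith [mul_nonneg hQ hx.le]
  have hsqrt : √(Q * x + R ^ 2) ≤ 2 * R := by
    rw [sqrt_le_left (by positivity)]
    nlinarith [mul_nonneg hQ hx.le]
  rw [div_mul_eq_mul_div]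
  gcongr

section DampedSequence

variable {ν c Q R : ℝ} {θ : ℕ → ℝ}

theorem mul_rpow_add_one_div_sqrt_le_sub_succ {σ τ : ℝ} (hσ : 0 ≤ σ) (hθ : ∀ k, 0 < θ k)
    (hrec : ∀ k, θ (k + 1) - θ k ≤ -(σ * θ k ^ ν * θ (k + 1)) / √(Q * θ k + R ^ 2))
    (hratio : ∀ k, θ (k + 1) / θ k ≥ τ) (j : ℕ) :
    σ * τ * θ j ^ (ν + 1) / √(Q * θ j + R ^ 2) ≤ θ j - θ (j + 1) := by
  have hτ : τ * θ j ≤ θ (j + 1) := (le_div_iff₀ (hθ j)).1 (hratio j)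
  have hpow : 0 ≤ σ * θ j ^ ν := mul_nonneg hσ (rpow_pos_of_pos (hθ j) ν).le
  calc σ * τ * θ j ^ (ν + 1) / √(Q * θ j + R ^ 2)
        = σ * θ j ^ ν * (τ * θ j) / √(Q * θ j + R ^ 2) := by
          rw [rpow_add_one (hθ j).ne']; ring
    _ ≤ σ * θ j ^ ν * θ (j + 1) / √(Q * θ j + R ^ 2) := by gcongr
    _ ≤ θ j - θ (j + 1) := by
      linarith [neg_div (√(Q * θ j + R ^ 2)) (σ * θ j ^ ν * θ (j + 1)), hrec j]

theorem antitone_of_mul_rpow_add_one_div_sqrt_le_sub_succ (hc : 0 ≤ c) (hθ : ∀ k, 0 < θ k)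
    (hstep : ∀ j, c * θ j ^ (ν + 1) / √(Q * θ j + R ^ 2) ≤ θ j - θ (j + 1)) : Antitone θ :=
  antitone_nat_of_succ_le fun j => by
    have := hstep j
    have : 0 ≤ c * θ j ^ (ν + 1) / √(Q * θ j + R ^ 2) := by
      have := rpow_pos_of_pos (hθ j) (ν + 1); positivity
    linarith

theorem natCast_le_rpow_potential (hν : 1 / 2 < ν) (hc : 0 < c) (hQ : 0 < Q) (hR : 0 ≤ R)
    (hθ : ∀ k, 0 < θ k)
    (hstep : ∀ j, c * θ j ^ (ν + 1) / √(Q * θ j + R ^ 2) ≤ θ j - θ (j + 1)) (k : ℕ) :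
    (k : ℝ) ≤ 3 * √Q / (2 * (ν - 1 / 2) * c) * θ k ^ (-(ν - 1 / 2))
      + 2 * R / (ν * c) * θ k ^ (-ν) := by
  set α := ν - 1 / 2
  have hα : 0 < α := sub_pos.2 hν
  have hν0 : 0 < ν := by linarith
  have hanti := antitone_of_mul_rpow_add_one_div_sqrt_le_sub_succ hc.le hθ hstep
  set A := 3 * √Q / (2 * α * c)
  set B := 2 * R / (ν * c)
  have hA : 0 ≤ A := by positivity
  have hB : 0 ≤ B := by positivity
  have hcount := natCast_le_sub_add_sub_of_forall_or (hanti.monotone_mul_rpow_neg hθ hα.le hA)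
    (hanti.monotone_mul_rpow_neg hθ hν0.le hB) ?_ k
  · have := rpow_pos_of_pos (hθ 0) (-α)
    have := rpow_pos_of_pos (hθ 0) (-ν)
    nlinarith
  intro j
  rcases le_or_gt (4 * R ^ 2) (5 * (Q * θ j)) with hreg | hreg
  · left
    have hdec := (mul_rpow_add_half_le_div_sqrt hc.le hQ (hθ j) hreg).trans (hstep j)
    rw [show ν + 1 / 2 = α + 1 by ring] at hdec
    have hinc := mul_le_rpow_neg_sub_rpow_neg hα.le (hθ (j + 1)) (hanti j.le_succ) hdec
    calc A * θ j ^ (-α) + 1 = A * (θ j ^ (-α) + α * (2 * c / (3 * √Q))) := by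
          rw [mul_add, show A * (α * (2 * c / (3 * √Q))) = 1 by simp only [A]; field_simp]
      _ ≤ A * θ (j + 1) ^ (-α) := by gcongr; linarith
  · right
    have hR0 : 0 < R := by nlinarith [mul_pos hQ (hθ j)]
    have hdec := (mul_rpow_add_one_le_div_sqrt hc.le hQ.le (hθ j) hR hreg).trans (hstep j)
    have hinc := mul_le_rpow_neg_sub_rpow_neg hν0.le (hθ (j + 1)) (hanti j.le_succ) hdec
    calc B * θ j ^ (-ν) + 1 = B * (θ j ^ (-ν) + ν * (c / (2 * R))) := by
          rw [mul_add, show B * (ν * (c / (2 * R))) = 1 by simp only [B]; field_simp]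
      _ ≤ B * θ (j + 1) ^ (-ν) := by gcongr; linarith

theorem natCast_le_log_potential (hc : 0 < c) (hQ : 0 < Q) (hR : 0 ≤ R) (hθ : ∀ k, 0 < θ k)
    (hθ0 : θ 0 = 1)
    (hstep : ∀ j, c * θ j ^ ((1 : ℝ) / 2 + 1) / √(Q * θ j + R ^ 2) ≤ θ j - θ (j + 1)) (k : ℕ) :
    (k : ℝ) ≤ 3 * √Q / (2 * c) * -log (θ k) + 4 * R / c * θ k ^ (-(1 / 2 : ℝ)) := by
  have hanti := antitone_of_mul_rpow_add_one_div_sqrt_le_sub_succ hc.le hθ hstep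
  set A := 3 * √Q / (2 * c)
  set B := 4 * R / c
  have hA : 0 ≤ A := by positivity
  have hB : 0 ≤ B := by positivity
  have hlog : Monotone fun j => A * -log (θ j) := fun i j hij =>
    mul_le_mul_of_nonneg_left (neg_le_neg (log_le_log (hθ j) (hanti hij))) hA
  have hcount := natCast_le_sub_add_sub_of_forall_or hlog
    (hanti.monotone_mul_rpow_neg hθ (β := 1 / 2) (by norm_num) hB) ?_ k
  · have := rpow_pos_of_pos (hθ 0) (-(1 / 2 : ℝ))
    simp only [hθ0, log_one, neg_zero, mul_zero] at hcount
    nlinarith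
  intro j
  rcases le_or_gt (4 * R ^ 2) (5 * (Q * θ j)) with hreg | hreg
  · left
    have hdec := (mul_rpow_add_half_le_div_sqrt hc.le hQ (hθ j) hreg).trans (hstep j)
    rw [show (1 : ℝ) / 2 + 1 / 2 = 1 by norm_num, rpow_one] at hdec
    have hinc := le_log_sub_log_of_mul_le_sub (hθ j) (hθ (j + 1)) hdec
    calc A * -log (θ j) + 1 = A * (-log (θ j) + 2 * c / (3 * √Q)) := by
          rw [mul_add, show A * (2 * c / (3 * √Q)) = 1 by simp only [A]; field_simp]
      _ ≤ A * -log (θ (j + 1)) := by gcongr; linarith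
  · right
    have hR0 : 0 < R := by nlinarith [mul_pos hQ (hθ j)]
    have hdec := (mul_rpow_add_one_le_div_sqrt hc.le hQ.le (hθ j) hR hreg).trans (hstep j)
    have hinc := mul_le_rpow_neg_sub_rpow_neg (by norm_num) (hθ (j + 1)) (hanti j.le_succ) hdec
    calc B * θ j ^ (-(1 / 2 : ℝ)) + 1 = B * (θ j ^ (-(1 / 2 : ℝ)) + 1 / 2 * (c / (2 * R))) := by
          rw [mul_add, show B * (1 / 2 * (c / (2 * R))) = 1 by simp only [B]; field_simp; ring]
      _ ≤ B * θ (j + 1) ^ (-(1 / 2 : ℝ)) := by gcongr; linarith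

theorem decay_bound_of_half_lt (hν : 1 / 2 < ν) (hc : 0 < c) (hQ : 0 < Q) (hR : 0 ≤ R)
    (hθ : ∀ k, 0 < θ k)
    (hstep : ∀ j, c * θ j ^ (ν + 1) / √(Q * θ j + R ^ 2) ≤ θ j - θ (j + 1)) {k : ℕ} (hk : 1 ≤ k) :
    θ k ≤ ((3 / (ν - 1 / 2)) ^ (1 / (ν - 1 / 2)) + (4 / ν) ^ (1 / ν)) *
      ((√Q / (c * k)) ^ ((2 : ℝ) / (2 * ν - 1)) + (R / (c * k)) ^ ((1 : ℝ) / ν)) := by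
  have hα : 0 < ν - 1 / 2 := sub_pos.2 hν
  have hν0 : 0 < ν := by linarith
  have hk0 : (0 : ℝ) < k := by exact_mod_cast hk
  have hexp : (2 : ℝ) / (2 * ν - 1) = 1 / (ν - 1 / 2) := by
    field_simp
  have hpot := natCast_le_rpow_potential hν hc hQ hR hθ hstep k
  have hC₁ : 0 ≤ (3 / (ν - 1 / 2)) ^ (1 / (ν - 1 / 2)) := rpow_nonneg (by positivity) _
  have hC₂ : 0 ≤ (4 / ν) ^ (1 / ν) := rpow_nonneg (by positivity) _
  have hT₁ : 0 ≤ (√Q / (c * k)) ^ ((2 : ℝ) / (2 * ν - 1)) := by positivity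
  have hT₂ : 0 ≤ (R / (c * k)) ^ ((1 : ℝ) / ν) := by positivity
  suffices θ k ≤ (3 / (ν - 1 / 2)) ^ (1 / (ν - 1 / 2)) * (√Q / (c * k)) ^ ((2 : ℝ) / (2 * ν - 1)) ∨
      θ k ≤ (4 / ν) ^ (1 / ν) * (R / (c * k)) ^ ((1 : ℝ) / ν) by
    rcases this with h | h <;> nlinarith [mul_nonneg hC₁ hT₂, mul_nonneg hC₂ hT₁]
  rcases le_or_gt ((k : ℝ) / 2) (3 * √Q / (2 * (ν - 1 / 2) * c) * θ k ^ (-(ν - 1 / 2))) with h | h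
  · left
    have := le_div_rpow_one_div_of_le_mul_rpow_neg hα (by positivity) (hθ k) h
    rw [show 3 * √Q / (2 * (ν - 1 / 2) * c) / (k / 2) = 3 / (ν - 1 / 2) * (√Q / (c * k)) by
      field_simp, mul_rpow (by positivity) (by positivity)] at this
    rwa [hexp]
  · right
    have := le_div_rpow_one_div_of_le_mul_rpow_neg hν0 (by positivity) (hθ k)
      (by linarith : (k : ℝ) / 2 ≤ 2 * R / (ν * c) * θ k ^ (-ν))
    rwa [show 2 * R / (ν * c) / (k / 2) = 4 / ν * (R / (c * k)) by field_simp; ring,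
      mul_rpow (by positivity) (by positivity)] at this

theorem decay_bound_of_eq_half (hc : 0 < c) (hQ : 0 < Q) (hR : 0 ≤ R) (hθ : ∀ k, 0 < θ k)
    (hθ0 : θ 0 = 1)
    (hstep : ∀ j, c * θ j ^ ((1 : ℝ) / 2 + 1) / √(Q * θ j + R ^ 2) ≤ θ j - θ (j + 1))
    {k : ℕ} (hk : 1 ≤ k) :
    θ k ≤ 256 * (exp (-(c * k) / (2 * √Q)) + (R / (c * k)) ^ 2) := by
  have hk0 : (0 : ℝ) < k := by exact_mod_cast hk
  have hpot := natCast_le_log_potential hc hQ hR hθ hθ0 hstep k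
  suffices θ k ≤ exp (-(c * k) / (2 * √Q)) ∨ θ k ≤ 256 * (R / (c * k)) ^ 2 by
    rcases this with h | h <;> nlinarith [exp_pos (-(c * k) / (2 * √Q)), sq_nonneg (R / (c * k))]
  rcases le_or_gt (3 * (k : ℝ) / 4) (3 * √Q / (2 * c) * -log (θ k)) with h | h
  · left
    have hlog : c * k / (2 * √Q) ≤ -log (θ k) := by
      rw [div_mul_eq_mul_div, le_div_iff₀ (by positivity)] at h
      rw [div_le_iff₀ (by positivity)]
      linarith
    rw [← log_le_iff_le_exp (hθ k), neg_div]
    linarith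
  · right
    have := le_div_rpow_one_div_of_le_mul_rpow_neg (β := 1 / 2) (s := k / 4) (M := 4 * R / c)
      (by norm_num) (by positivity) (hθ k) (by linarith)
    rw [show 4 * R / c / (k / 4) = 16 * (R / (c * k)) by field_simp; ring,
      show (1 : ℝ) / (1 / 2) = (2 : ℕ) by norm_num, rpow_natCast, mul_pow] at this
    linarith

end DampedSequence

/-- Lemma C.2: sharp decay estimate for positive sequences satisfying
`θₖ₊₁ − θₖ ≤ −σ θₖ^ν θₖ₊₁ / √(Q θₖ + R²)` with bounded ratio `θₖ₊₁/θₖ ≥ τ`,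
where the constant `C_ν` depends only on `ν ≥ 1/2`. -/
theorem difference_inequality_decay_sqrt :
    ∀ ν : ℝ, (1 : ℝ) / 2 ≤ ν →
    ∃ C : ℝ, 0 < C ∧
      ∀ (σ Q R τ : ℝ) (θ : ℕ → ℝ),
        0 < σ → 0 < Q → 0 ≤ R → 0 < τ →
        (∀ k, 0 < θ k) → θ 0 = 1 →
        (∀ k, θ (k + 1) - θ k ≤
          -(σ * θ k ^ ν * θ (k + 1)) / Real.sqrt (Q * θ k + R ^ 2)) →
        (∀ k, θ (k + 1) / θ k ≥ τ) →
        ∀ k : ℕ, 1 ≤ k →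
          ((1 : ℝ) / 2 < ν →
            θ k ≤ C * ((Real.sqrt Q / (σ * τ * (k : ℝ))) ^ ((2 : ℝ) / (2 * ν - 1))
              + (R / (σ * τ * (k : ℝ))) ^ ((1 : ℝ) / ν))) ∧
          (ν = 1 / 2 →
            θ k ≤ C * (Real.exp (-(σ * τ * (k : ℝ)) / (2 * Real.sqrt Q))
              + (R / (σ * τ * (k : ℝ))) ^ (2 : ℕ))) := by
  intro ν hν
  rcases hν.eq_or_lt with rfl | hν
  · refine ⟨256, by norm_num, fun σ Q R τ θ hσ hQ hR hτ hθ hθ0 hrec hratio k hk =>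
      ⟨fun h => absurd h (lt_irrefl _), fun _ => ?_⟩⟩
    exact decay_bound_of_eq_half (mul_pos hσ hτ) hQ hR hθ hθ0
      (mul_rpow_add_one_div_sqrt_le_sub_succ hσ.le hθ hrec hratio) hk
  · have hC : 0 < (3 / (ν - 1 / 2)) ^ (1 / (ν - 1 / 2)) + (4 / ν) ^ (1 / ν) :=
      add_pos (rpow_pos_of_pos (div_pos three_pos (sub_pos.2 hν)) _)
        (rpow_pos_of_pos (div_pos four_pos (by linarith)) _)
    refine ⟨_, hC, fun σ Q R τ θ hσ hQ hR hτ hθ _ hrec hratio k hk =>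
      ⟨fun _ => ?_, fun h => (hν.ne' h).elim⟩⟩
    exact decay_bound_of_half_lt hν (mul_pos hσ hτ) hQ hR hθ
      (mul_rpow_add_one_div_sqrt_le_sub_succ hσ.le hθ hrec hratio) hk
end

section
/- Let (θ_k)_{k≥0} be a sequence of positive reals with θ₀ = 1 satisfying θ_{k+1} − θ_k ≤ −σ θ_k θ_{k+1} / √(P θ_k² + Q θ_k + R²) for all k ∈ ℕ, where σ, P > 0 and Q, R ≥ 0, and suppose θ_{k+1}/θ_k ≥ τ > 0 for all k. Then for every k ≥ 1: θ_k ≤ exp(−σ τ k/(2√P)) + 36Q/(σ τ k)² + 6R/(σ τ k). -/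
open Real

private lemma my_sqrt_add_le (x y : ℝ) (hx : 0 ≤ x) (hy : 0 ≤ y) :
    Real.sqrt (x + y) ≤ Real.sqrt x + Real.sqrt y := by
  have h : x + y ≤ (Real.sqrt x + Real.sqrt y) ^ 2 := by
    nlinarith [Real.sq_sqrt hx, Real.sq_sqrt hy, Real.sqrt_nonneg x, Real.sqrt_nonneg y,
      mul_nonneg (Real.sqrt_nonneg x) (Real.sqrt_nonneg y)]
  calc Real.sqrt (x + y) ≤ Real.sqrt ((Real.sqrt x + Real.sqrt y) ^ 2) := Real.sqrt_le_sqrt h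
    _ = _ := Real.sqrt_sq (by positivity)

/-- One step of the Lyapunov argument: if `1/t' - 1/t ≥ σ/(√P t + √(Qt) + R)`,
`τ t ≤ t' ≤ t`, `τ ≤ 1`, then the potential
`√P log(1/·) + 2√Q √(1/·) + R/·` increases by at least `σ τ`. -/
private lemma my_step (σ P Q R τ : ℝ) (hσ : 0 < σ) (hP : 0 < P) (hQ : 0 ≤ Q) (hR : 0 ≤ R)
    (hτ : 0 < τ) (hτ1 : τ ≤ 1) (t t' : ℝ) (ht : 0 < t) (ht' : 0 < t')
    (hle : t' ≤ t) (hrt : τ * t ≤ t')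
    (hrec' : σ / (Real.sqrt P * t + Real.sqrt (Q * t) + R) ≤ 1 / t' - 1 / t) :
    Real.sqrt P * Real.log (1 / t) + 2 * Real.sqrt Q * Real.sqrt (1 / t) + R * (1 / t)
      + σ * τ ≤
    Real.sqrt P * Real.log (1 / t') + 2 * Real.sqrt Q * Real.sqrt (1 / t') + R * (1 / t') := by
  have hsP : 0 < Real.sqrt P := Real.sqrt_pos.2 hP
  set D : ℝ := 1 / t' - 1 / t with hDdef
  have hDnn : 0 ≤ D := by
    have h1 : 1 / t ≤ 1 / t' := one_div_le_one_div_of_le ht' hle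
    rw [hDdef]; linarith
  set W : ℝ := Real.sqrt P * t + Real.sqrt (Q * t) + R with hWdef
  have hWpos : 0 < W := by
    have h1 : 0 ≤ Real.sqrt (Q * t) := Real.sqrt_nonneg _
    have h2 : 0 < Real.sqrt P * t := mul_pos hsP ht
    rw [hWdef]; linarith
  clear_value D W
  -- √τ ≥ τ
  have hτsqrt : τ ≤ Real.sqrt τ := by
    have h1 : τ ^ 2 ≤ τ := by nlinarith
    calc τ = Real.sqrt (τ ^ 2) := (Real.sqrt_sq hτ.le).symm
      _ ≤ Real.sqrt τ := Real.sqrt_le_sqrt h1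
  have hQt : Real.sqrt Q * Real.sqrt t = Real.sqrt (Q * t) := (Real.sqrt_mul hQ t).symm
  -- log part
  have hA : t' * D ≤ Real.log (1 / t') - Real.log (1 / t) := by
    have hlog : Real.log (t' / t) ≤ t' / t - 1 :=
      Real.log_le_sub_one_of_pos (div_pos ht' ht)
    have e1 : Real.log (1 / t') - Real.log (1 / t) = -Real.log (t' / t) := by
      rw [one_div, one_div, Real.log_inv, Real.log_inv, Real.log_div ht'.ne' ht.ne']
      ring
    have e2 : t' * D = 1 - t' / t := by
      rw [hDdef]; field_simp
    rw [e1, e2]; linarith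
  have hA2 : τ * t * D ≤ Real.log (1 / t') - Real.log (1 / t) := by
    have := mul_le_mul_of_nonneg_right hrt hDnn
    linarith
  -- sqrt part
  have hB : Real.sqrt τ * Real.sqrt t * D ≤
      2 * (Real.sqrt (1 / t') - Real.sqrt (1 / t)) := by
    have hu : Real.sqrt (1 / t') ^ 2 = 1 / t' := Real.sq_sqrt (le_of_lt (one_div_pos.mpr ht'))
    have hv : Real.sqrt (1 / t) ^ 2 = 1 / t := Real.sq_sqrt (le_of_lt (one_div_pos.mpr ht))
    have huv : Real.sqrt (1 / t) ≤ Real.sqrt (1 / t') :=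
      Real.sqrt_le_sqrt (one_div_le_one_div_of_le ht' hle)
    have hkey : Real.sqrt τ * Real.sqrt t * Real.sqrt (1 / t') ≤ 1 := by
      rw [← Real.sqrt_mul hτ.le, ← Real.sqrt_mul (mul_nonneg hτ.le ht.le)]
      have h3 : τ * t * (1 / t') ≤ 1 := by
        rw [mul_one_div, div_le_one ht']; exact hrt
      calc Real.sqrt (τ * t * (1 / t')) ≤ Real.sqrt 1 := Real.sqrt_le_sqrt h3
        _ = 1 := Real.sqrt_one
    have h1 : D = (Real.sqrt (1 / t') - Real.sqrt (1 / t)) *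
        (Real.sqrt (1 / t') + Real.sqrt (1 / t)) := by
      rw [hDdef]; linear_combination hv - hu
    have ha : 0 ≤ Real.sqrt τ * Real.sqrt t :=
      mul_nonneg (Real.sqrt_nonneg τ) (Real.sqrt_nonneg t)
    have h2 : Real.sqrt τ * Real.sqrt t * (Real.sqrt (1 / t') + Real.sqrt (1 / t)) ≤ 2 := by
      have h5 := mul_le_mul_of_nonneg_left huv ha
      linarith
    calc Real.sqrt τ * Real.sqrt t * D
        = (Real.sqrt τ * Real.sqrt t * (Real.sqrt (1 / t') + Real.sqrt (1 / t))) *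
          (Real.sqrt (1 / t') - Real.sqrt (1 / t)) := by rw [h1]; ring
      _ ≤ 2 * (Real.sqrt (1 / t') - Real.sqrt (1 / t)) :=
          mul_le_mul_of_nonneg_right h2 (sub_nonneg.2 huv)
  -- combine
  have c1 : Real.sqrt P * (τ * t * D) ≤
      Real.sqrt P * (Real.log (1 / t') - Real.log (1 / t)) :=
    mul_le_mul_of_nonneg_left hA2 hsP.le
  have c2 : Real.sqrt Q * (Real.sqrt τ * Real.sqrt t * D) ≤
      Real.sqrt Q * (2 * (Real.sqrt (1 / t') - Real.sqrt (1 / t))) :=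
    mul_le_mul_of_nonneg_left hB (Real.sqrt_nonneg Q)
  have c3 : τ * Real.sqrt (Q * t) * D ≤ Real.sqrt Q * (Real.sqrt τ * Real.sqrt t * D) := by
    rw [← hQt]
    have h4 := mul_le_mul_of_nonneg_right hτsqrt
      (mul_nonneg (mul_nonneg (Real.sqrt_nonneg Q) (Real.sqrt_nonneg t)) hDnn)
    linarith
  have c4 : τ * R * D ≤ R * D := by
    have h6 := mul_le_mul_of_nonneg_right hτ1 (mul_nonneg hR hDnn)
    nlinarith [h6]
  have c5 : σ * τ ≤ τ * (D * W) := by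
    have h5 : σ ≤ D * W := by
      have := (div_le_iff₀ hWpos).mp hrec'
      linarith
    have h7 := mul_le_mul_of_nonneg_left h5 hτ.le
    linarith
  have c6 : τ * (D * W) = Real.sqrt P * (τ * t * D) + τ * Real.sqrt (Q * t) * D
      + τ * R * D := by rw [hWdef]; ring
  have hRD : R * D = R * (1 / t') - R * (1 / t) := by rw [hDdef]; ring
  linarith [c1, c2, c3, c4, c5, c6.le, c6.ge]

/-- Lemma C.3: decay estimate for positive sequences satisfying
`θₖ₊₁ − θₖ ≤ −σ θₖ θₖ₊₁ / √(P θₖ² + Q θₖ + R²)` with bounded ratio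
`θₖ₊₁/θₖ ≥ τ`. -/
theorem difference_inequality_decay_quadratic
    (σ P Q R τ : ℝ) (hσ : 0 < σ) (hP : 0 < P) (hQ : 0 ≤ Q) (hR : 0 ≤ R) (hτ : 0 < τ)
    (θ : ℕ → ℝ) (hpos : ∀ k, 0 < θ k) (hθ0 : θ 0 = 1)
    (hrec : ∀ k, θ (k + 1) - θ k ≤
      -(σ * θ k * θ (k + 1)) / Real.sqrt (P * θ k ^ 2 + Q * θ k + R ^ 2))
    (hratio : ∀ k, θ (k + 1) / θ k ≥ τ) :
    ∀ k : ℕ, 1 ≤ k →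
      θ k ≤ Real.exp (-(σ * τ * (k : ℝ)) / (2 * Real.sqrt P))
        + 36 * Q / (σ * τ * (k : ℝ)) ^ 2 + 6 * R / (σ * τ * (k : ℝ)) := by
  have hsP : 0 < Real.sqrt P := Real.sqrt_pos.2 hP
  -- θ is decreasing
  have hθdec : ∀ j, θ (j + 1) ≤ θ j := by
    intro j
    have h := hrec j
    have harg : (0:ℝ) < P * θ j ^ 2 + Q * θ j + R ^ 2 := by
      have h1 := mul_pos hP (pow_pos (hpos j) 2)
      have h2 := mul_nonneg hQ (hpos j).le
      have h3 := sq_nonneg R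
      linarith
    have hs : 0 < Real.sqrt (P * θ j ^ 2 + Q * θ j + R ^ 2) := Real.sqrt_pos.2 harg
    have hnum : 0 < σ * θ j * θ (j + 1) := mul_pos (mul_pos hσ (hpos j)) (hpos (j + 1))
    have hq := div_pos hnum hs
    rw [neg_div] at h
    linarith
  -- τ ≤ 1
  have hτ1 : τ ≤ 1 := by
    have h0 := hratio 0
    rw [hθ0, div_one] at h0
    have h1 := hθdec 0
    rw [hθ0] at h1
    linarith
  -- per-step inequality on 1/θ
  have hD : ∀ j, σ / (Real.sqrt P * θ j + Real.sqrt (Q * θ j) + R)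
      ≤ 1 / θ (j + 1) - 1 / θ j := by
    intro j
    have harg : (0:ℝ) < P * θ j ^ 2 + Q * θ j + R ^ 2 := by
      have h1 := mul_pos hP (pow_pos (hpos j) 2)
      have h2 := mul_nonneg hQ (hpos j).le
      have h3 := sq_nonneg R
      linarith
    have hs : 0 < Real.sqrt (P * θ j ^ 2 + Q * θ j + R ^ 2) := Real.sqrt_pos.2 harg
    have hWpos : 0 < Real.sqrt P * θ j + Real.sqrt (Q * θ j) + R := by
      have h1 : 0 ≤ Real.sqrt (Q * θ j) := Real.sqrt_nonneg _
      have h2 : 0 < Real.sqrt P * θ j := mul_pos hsP (hpos j)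
      linarith
    have hsub : Real.sqrt (P * θ j ^ 2 + Q * θ j + R ^ 2)
        ≤ Real.sqrt P * θ j + Real.sqrt (Q * θ j) + R := by
      have hnn1 : (0:ℝ) ≤ P * θ j ^ 2 + Q * θ j := by
        have ha := mul_pos hP (pow_pos (hpos j) 2)
        have hb := mul_nonneg hQ (hpos j).le
        linarith
      have h1 : Real.sqrt (P * θ j ^ 2 + Q * θ j + R ^ 2)
          ≤ Real.sqrt (P * θ j ^ 2 + Q * θ j) + Real.sqrt (R ^ 2) :=
        my_sqrt_add_le (P * θ j ^ 2 + Q * θ j) (R ^ 2) hnn1 (sq_nonneg R)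
      have h2 : Real.sqrt (P * θ j ^ 2 + Q * θ j)
          ≤ Real.sqrt (P * θ j ^ 2) + Real.sqrt (Q * θ j) :=
        my_sqrt_add_le (P * θ j ^ 2) (Q * θ j)
          (le_of_lt (mul_pos hP (pow_pos (hpos j) 2))) (mul_nonneg hQ (hpos j).le)
      have h3 : Real.sqrt (P * θ j ^ 2) = Real.sqrt P * θ j := by
        rw [Real.sqrt_mul hP.le, Real.sqrt_sq (hpos j).le]
      have h4 : Real.sqrt (R ^ 2) = R := Real.sqrt_sq hR
      rw [h3] at h2; rw [h4] at h1
      linarith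
    have hprod : 0 < θ j * θ (j + 1) := mul_pos (hpos j) (hpos (j + 1))
    have h := hrec j
    have key : σ / Real.sqrt (P * θ j ^ 2 + Q * θ j + R ^ 2)
        ≤ (θ j - θ (j + 1)) / (θ j * θ (j + 1)) := by
      rw [div_le_div_iff₀ hs hprod]
      have h' : σ * θ j * θ (j + 1) / Real.sqrt (P * θ j ^ 2 + Q * θ j + R ^ 2)
          ≤ θ j - θ (j + 1) := by
        rw [neg_div] at h; linarith
      calc σ * (θ j * θ (j + 1)) = σ * θ j * θ (j + 1) := by ring
        _ ≤ (θ j - θ (j + 1)) * Real.sqrt (P * θ j ^ 2 + Q * θ j + R ^ 2) :=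
          (div_le_iff₀ hs).mp h'
    have heq : (θ j - θ (j + 1)) / (θ j * θ (j + 1)) = 1 / θ (j + 1) - 1 / θ j := by
      rw [div_sub_div _ _ (hpos (j + 1)).ne' (hpos j).ne']
      ring
    have hmono : σ / (Real.sqrt P * θ j + Real.sqrt (Q * θ j) + R)
        ≤ σ / Real.sqrt (P * θ j ^ 2 + Q * θ j + R ^ 2) :=
      div_le_div_of_nonneg_left hσ.le hs hsub
    rw [heq] at key
    linarith
  -- accumulated potential
  have hacc : ∀ k : ℕ, σ * τ * (k : ℝ) + (2 * Real.sqrt Q + R) ≤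
      Real.sqrt P * Real.log (1 / θ k) + 2 * Real.sqrt Q * Real.sqrt (1 / θ k)
        + R * (1 / θ k) := by
    intro k
    induction k with
    | zero => simp [hθ0]
    | succ n ih =>
      have hrt : τ * θ n ≤ θ (n + 1) := (le_div_iff₀ (hpos n)).mp (hratio n)
      have hstep := my_step σ P Q R τ hσ hP hQ hR hτ hτ1 (θ n) (θ (n + 1))
        (hpos n) (hpos (n + 1)) (hθdec n) hrt (hD n)
      push_cast
      linarith
  -- conclusion
  intro k hk
  have hk1 : (1:ℝ) ≤ (k : ℝ) := by exact_mod_cast hk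
  set X : ℝ := σ * τ * (k : ℝ) with hXdef
  have hX : 0 < X := by
    rw [hXdef]
    exact mul_pos (mul_pos hσ hτ) (by linarith)
  have hsum := hacc k
  have hQR : 0 ≤ 2 * Real.sqrt Q + R := by
    have := Real.sqrt_nonneg Q; linarith
  have hsum' : X ≤ Real.sqrt P * Real.log (1 / θ k)
      + 2 * Real.sqrt Q * Real.sqrt (1 / θ k) + R * (1 / θ k) := by
    rw [hXdef]; linarith
  have hexp : 0 < Real.exp (-(σ * τ * (k : ℝ)) / (2 * Real.sqrt P)) := Real.exp_pos _
  have hQX : 0 ≤ 36 * Q / X ^ 2 := div_nonneg (by linarith) (sq_nonneg X)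
  have hRX : 0 ≤ 6 * R / X := div_nonneg (by linarith) hX.le
  by_cases h1 : X / 2 ≤ Real.sqrt P * Real.log (1 / θ k)
  · -- exponential regime
    have hL : X / (2 * Real.sqrt P) ≤ Real.log (1 / θ k) := by
      rw [div_le_iff₀ (by linarith : (0:ℝ) < 2 * Real.sqrt P)]
      linarith [h1]
    rw [one_div, Real.log_inv] at hL
    have hlogk : Real.log (θ k) ≤ -(X / (2 * Real.sqrt P)) := by linarith
    have hcase : θ k ≤ Real.exp (-(σ * τ * (k : ℝ)) / (2 * Real.sqrt P)) := by
      have := Real.exp_le_exp.mpr hlogk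
      rw [Real.exp_log (hpos k)] at this
      rw [neg_div, ← hXdef]
      exact this
    linarith
  · by_cases h2 : X / 3 ≤ 2 * Real.sqrt Q * Real.sqrt (1 / θ k)
    · -- Q regime
      have hQS : (2 * Real.sqrt Q * Real.sqrt (1 / θ k)) ^ 2 = 4 * Q * (1 / θ k) := by
        rw [mul_pow, mul_pow, Real.sq_sqrt hQ,
          Real.sq_sqrt (le_of_lt (one_div_pos.mpr (hpos k)))]
        ring
      have h2sq : X ^ 2 / 9 ≤ 4 * Q * (1 / θ k) := by
        rw [← hQS]
        calc X ^ 2 / 9 = (X / 3) ^ 2 := by ring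
          _ ≤ _ := pow_le_pow_left₀ (by linarith) h2 2
      have h2' : X ^ 2 / 9 * θ k ≤ 4 * Q := by
        have hmm := mul_le_mul_of_nonneg_right h2sq (hpos k).le
        calc X ^ 2 / 9 * θ k ≤ (4 * Q * (1 / θ k)) * θ k := hmm
          _ = 4 * Q := by
            rw [mul_assoc, one_div, inv_mul_cancel₀ (hpos k).ne', mul_one]
      have hcase : θ k ≤ 36 * Q / X ^ 2 := by
        rw [le_div_iff₀ (pow_pos hX 2)]
        linarith [h2']
      linarith
    · -- R regime
      have h3 : X / 6 ≤ R * (1 / θ k) := by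
        push_neg at h1 h2
        linarith
      have h3' : X / 6 * θ k ≤ R := by
        have hmm := mul_le_mul_of_nonneg_right h3 (hpos k).le
        calc X / 6 * θ k ≤ (R * (1 / θ k)) * θ k := hmm
          _ = R := by
            rw [mul_assoc, one_div, inv_mul_cancel₀ (hpos k).ne', mul_one]
      have hcase : θ k ≤ 6 * R / X := by
        rw [le_div_iff₀ hX]
        linarith [h3']
      linarith
end
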